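/- arXiv:2506.15897 — 7 statements merged into one kernel-verified Lean document; each statement's English description precedes it below -/
import Mathlib

section
/- The function x ↦ M_x is nondecreasing and concave on [0,1]; consequently the exact ξ-ρ-region R = {(x,y) ∈ ℝ² : x ∈ [0,1], |y| ≤ M_x} is a convex subset of ℝ². -/
open MeasureTheory Real Set

noncomputable section

/-- A bivariate copula: grounded, uniform marginals, and 2-increasing on `[0,1]²`,
with values in `[0,1]`. -/
def IsCopula (C : ℝ → ℝ → ℝ) : Prop :=
  (∀ u ∈ Icc (0:ℝ) 1, ∀ v ∈ Icc (0:ℝ) 1, C u v ∈ Icc (0:ℝ) 1) ∧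
  (∀ u ∈ Icc (0:ℝ) 1, C u 0 = 0) ∧
  (∀ v ∈ Icc (0:ℝ) 1, C 0 v = 0) ∧
  (∀ u ∈ Icc (0:ℝ) 1, C u 1 = u) ∧
  (∀ v ∈ Icc (0:ℝ) 1, C 1 v = v) ∧
  (∀ u u' v v' : ℝ, u ∈ Icc (0:ℝ) 1 → u' ∈ Icc (0:ℝ) 1 → v ∈ Icc (0:ℝ) 1 →
    v' ∈ Icc (0:ℝ) 1 → u ≤ u' → v ≤ v' →
    0 ≤ C u' v' - C u' v - C u v' + C u v)

/-- Spearman's rho of a copula. -/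
def rho (C : ℝ → ℝ → ℝ) : ℝ :=
  12 * (∫ u in (0:ℝ)..1, ∫ v in (0:ℝ)..1, C u v) - 3

/-- Chatterjee's xi of a copula, with the first partial derivative expressed via `deriv`
(which exists Lebesgue-a.e. in the first variable). -/
def xi (C : ℝ → ℝ → ℝ) : ℝ :=
  6 * (∫ v in (0:ℝ)..1, ∫ t in (0:ℝ)..1, (deriv (fun s => C s v) t) ^ 2) - 2

/-- The parameter `b_x`. -/
def bFun (x : ℝ) : ℝ :=
  if x ≤ 3/10 then
    Real.sqrt (6*x) / (2 * Real.cos ((1/3) * Real.arccos (-(3 * Real.sqrt (6*x)) / 5)))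
  else (5 + Real.sqrt (5*(6*x - 1))) / (10*(1-x))

/-- The boundary function `M_x` of the `ξ`-`ρ`-region. -/
def Mfun (x : ℝ) : ℝ :=
  if x = 0 then 0
  else if x = 1 then 1
  else if x ≤ 3/10 then bFun x - 3 * (bFun x)^2 / 10
  else 1 - 1/(2*(bFun x)^2) + 1/(5*(bFun x)^3)

namespace MfunAux

def X1 (t : ℝ) : ℝ := t^2/2 - t^3/5
def F1 (t : ℝ) : ℝ := t - 3*t^2/10
def X2 (t : ℝ) : ℝ := 1 - 1/t + 3/(10*t^2)
def F2 (t : ℝ) : ℝ := 1 - 1/(2*t^2) + 1/(5*t^3)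

lemma id1 (a b : ℝ) : b*(F1 b - F1 a) - (X1 b - X1 a) = (b-a)^2*(5 - b - 2*a)/10 := by
  simp only [F1, X1]; ring

lemma id2 (a b : ℝ) (ha : a ≠ 0) (hb : b ≠ 0) :
    b*(F2 b - F2 a) - (X2 b - X2 a) = (b-a)^2*b*(5*a*b - 2*b - a)/(10*a^3*b^3) := by
  simp only [F2, X2]; field_simp; ring

lemma X1_one : X1 1 = 3/10 := by norm_num [X1]
lemma F1_one : F1 1 = 7/10 := by norm_num [F1]
lemma X2_one : X2 1 = 3/10 := by norm_num [X2]
lemma F2_one : F2 1 = 7/10 := by norm_num [F2]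

lemma Mfun_zero : Mfun 0 = 0 := by simp [Mfun]
lemma Mfun_one : Mfun 1 = 1 := by norm_num [Mfun]

lemma L1br1 {a b : ℝ} (ha0 : 0 ≤ a) (ha1 : a ≤ 1) (hb1 : b ≤ 1) :
    X1 b - X1 a ≤ b * (F1 b - F1 a) := by
  have h := id1 a b
  have h2 : 0 ≤ (b-a)^2*(5 - b - 2*a)/10 :=
    div_nonneg (mul_nonneg (sq_nonneg _) (by linarith)) (by norm_num)
  linarith

lemma R1br1 {b c : ℝ} (hb1 : b ≤ 1) (hc1 : c ≤ 1) :
    b * (F1 c - F1 b) ≤ X1 c - X1 b := by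
  have h := id1 c b
  have h2 : 0 ≤ (b-c)^2*(5 - b - 2*c)/10 :=
    div_nonneg (mul_nonneg (sq_nonneg _) (by linarith)) (by norm_num)
  linarith

lemma L1br2 {a b : ℝ} (ha : 1 ≤ a) (hb : 1 ≤ b) :
    X2 b - X2 a ≤ b * (F2 b - F2 a) := by
  have h := id2 a b (by linarith) (by linarith)
  have hfac : 0 ≤ 5*a*b - 2*b - a := by nlinarith
  have h2 : 0 ≤ (b-a)^2*b*(5*a*b - 2*b - a)/(10*a^3*b^3) :=
    div_nonneg (mul_nonneg (mul_nonneg (sq_nonneg _) (by linarith)) hfac) (by positivity)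
  linarith

lemma R1br2 {b c : ℝ} (hb : 1 ≤ b) (hc : 1 ≤ c) :
    b * (F2 c - F2 b) ≤ X2 c - X2 b := by
  have h := id2 c b (by linarith) (by linarith)
  have hfac : 0 ≤ 5*c*b - 2*b - c := by nlinarith
  have h2 : 0 ≤ (b-c)^2*b*(5*c*b - 2*b - c)/(10*c^3*b^3) :=
    div_nonneg (mul_nonneg (mul_nonneg (sq_nonneg _) (by linarith)) hfac) (by positivity)
  linarith

lemma X1_le (a : ℝ) (ha0 : 0 ≤ a) (ha1 : a ≤ 1) : X1 a ≤ 3/10 := by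
  simp only [X1]
  nlinarith [mul_nonneg (sub_nonneg.2 ha1) (mul_nonneg ha0 ha0)]

lemma F2_ge {c : ℝ} (hc : 1 ≤ c) : 7/10 ≤ F2 c := by
  have h := L1br2 le_rfl hc
  rw [X2_one, F2_one] at h
  have hX : 3/10 ≤ X2 c := by
    have hc0 : (0:ℝ) < c := by linarith
    have he : X2 c - 3/10 = (c-1)*(7*c-3)/(10*c^2) := by
      simp only [X2]; field_simp; ring
    nlinarith [div_nonneg (mul_nonneg (show (0:ℝ) ≤ c-1 by linarith)
      (show (0:ℝ) ≤ 7*c-3 by linarith)) (show (0:ℝ) ≤ 10*c^2 by positivity)]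
  nlinarith

lemma crossL {a b : ℝ} (ha0 : 0 ≤ a) (ha1 : a ≤ 1) (hb : 1 ≤ b) :
    X2 b - X1 a ≤ b * (F2 b - F1 a) := by
  have h1 : X2 b - X2 1 ≤ b * (F2 b - F2 1) := L1br2 le_rfl hb
  rw [X2_one, F2_one] at h1
  have h2 : X1 1 - X1 a ≤ 1 * (F1 1 - F1 a) := L1br1 ha0 ha1 le_rfl
  rw [X1_one, F1_one, one_mul] at h2
  have h3 : 0 ≤ 7/10 - F1 a := by
    have := X1_le a ha0 ha1
    linarith
  have h4 : 7/10 - F1 a ≤ b * (7/10 - F1 a) := le_mul_of_one_le_left h3 hb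
  have h5 : b * (F2 b - 7/10) + b * (7/10 - F1 a) = b * (F2 b - F1 a) := by ring
  linarith

lemma crossR {b c : ℝ} (hb1 : b ≤ 1) (hc : 1 ≤ c) :
    b * (F2 c - F1 b) ≤ X2 c - X1 b := by
  have h1 : 1 * (F2 c - F2 1) ≤ X2 c - X2 1 := R1br2 le_rfl hc
  rw [X2_one, F2_one, one_mul] at h1
  have h2 : b * (F1 1 - F1 b) ≤ X1 1 - X1 b := R1br1 hb1 le_rfl
  rw [X1_one, F1_one] at h2
  have h3 : 0 ≤ F2 c - 7/10 := by have := F2_ge hc; linarith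
  have h4 : b * (F2 c - 7/10) ≤ F2 c - 7/10 := by nlinarith
  have h5 : b * (F2 c - 7/10) + b * (7/10 - F1 b) = b * (F2 c - F1 b) := by ring
  linarith

lemma id3 {b : ℝ} (hb : 1 ≤ b) : b * (1 - F2 b) ≤ 1 - X2 b := by
  have hb0 : (0:ℝ) < b := by linarith
  have h : (1 - X2 b) - b*(1 - F2 b) = (5*b-1)/(10*b^2) := by
    simp only [F2, X2]; field_simp; ring
  have h2 : 0 ≤ (5*b-1)/(10*b^2) := div_nonneg (by linarith) (by positivity)
  linarith

lemma R1one_br1 {b : ℝ} (hb0 : 0 ≤ b) (hb1 : b ≤ 1) : b * (1 - F1 b) ≤ 1 - X1 b := by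
  have h2 : b * (F1 1 - F1 b) ≤ X1 1 - X1 b := R1br1 hb1 le_rfl
  rw [X1_one, F1_one] at h2
  have h5 : b * (1 - F1 b) = b * (7/10 - F1 b) + b * (3/10) := by ring
  nlinarith


lemma param1 {x : ℝ} (hx0 : 0 ≤ x) (hx3 : x ≤ 3/10) :
    ∃ a, 0 ≤ a ∧ a ≤ 1 ∧ x = X1 a ∧ Mfun x = F1 a := by
  rcases eq_or_lt_of_le hx0 with h0 | h0
  · refine ⟨0, le_refl 0, by norm_num, by simp [X1, ← h0], ?_⟩
    rw [← h0]; simp [Mfun, F1]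
  · have hx1 : x ≠ 1 := by intro h; rw [h] at hx3; norm_num at hx3
    set s := Real.sqrt (6*x) with hs
    have hs2 : s^2 = 6*x := Real.sq_sqrt (by linarith)
    have hspos : 0 < s := Real.sqrt_pos.2 (by linarith)
    have hsle : s^2 ≤ 9/5 := by rw [hs2]; linarith
    have hs53 : s ≤ 5/3 := by nlinarith
    have ht1 : -1 ≤ -(3*s)/5 := by linarith
    have ht2 : -(3*s)/5 ≤ 1 := by linarith
    set θ := (1/3) * Real.arccos (-(3*s)/5) with hθ
    have hθ0 : 0 ≤ θ := by
      rw [hθ]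
      have := Real.arccos_nonneg (-(3*s)/5)
      linarith
    have hθle : θ ≤ π/3 := by
      rw [hθ]
      have := Real.arccos_le_pi (-(3*s)/5)
      linarith
    set c := Real.cos θ with hc
    have hc12 : 1/2 ≤ c := by
      have h := Real.cos_le_cos_of_nonneg_of_le_pi hθ0
        (by linarith [Real.pi_pos] : π/3 ≤ π) hθle
      rw [Real.cos_pi_div_three] at h
      exact h
    have hcpos : 0 < c := by linarith
    have htriple : 4*c^3 - 3*c = -(3*s)/5 := by
      have h3 : Real.cos (3*θ) = 4*(Real.cos θ)^3 - 3*(Real.cos θ) := Real.cos_three_mul θ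
      have he : 3*θ = Real.arccos (-(3*s)/5) := by rw [hθ]; ring
      rw [he, Real.cos_arccos ht1 ht2] at h3
      rw [← hc] at h3
      linarith
    set b := s/(2*c) with hb
    have hbfun : bFun x = b := by
      rw [hb, hc, hθ, hs]
      simp only [bFun, if_pos hx3]
    have hbpos : 0 < b := div_pos hspos (by linarith)
    have hsb : s = 2*b*c := by rw [hb]; field_simp
    have hfac : c * (4*c^2 - 3 + 6*b/5) = 0 := by
      rw [hsb] at htriple; linear_combination htriple
    have hcsq : c^2 = 3/4 - 3*b/10 := by
      rcases mul_eq_zero.mp hfac with h | h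
      · exact absurd h (ne_of_gt hcpos)
      · linarith
    have hs2b : (2*b*c)^2 = 6*x := by rw [← hsb]; exact hs2
    have hxb : x = X1 b := by
      simp only [X1]
      linear_combination (-1/6) * hs2b + (2*b^2/3) * hcsq
    have hble : b ≤ 5/3 := by nlinarith
    have hb1 : b ≤ 1 := by
      by_contra hgt
      push_neg at hgt
      have hinner : (0:ℝ) < 3+3*b-2*b^2 := by
        nlinarith [mul_nonneg (show (0:ℝ) ≤ 5/3 - b by linarith) (show (0:ℝ) ≤ b by linarith)]
      have hposprod : 0 < (b-1)*(3+3*b-2*b^2) :=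
        mul_pos (by linarith) hinner
      have hexp : x - 3/10 = (b-1)*(3+3*b-2*b^2)/10 := by
        rw [hxb]; simp only [X1]; ring
      linarith
    refine ⟨b, hbpos.le, hb1, hxb, ?_⟩
    simp only [Mfun, if_neg (ne_of_gt h0), if_neg hx1, if_pos hx3, hbfun, F1]

lemma param2 {x : ℝ} (hx3 : 3/10 < x) (hx1 : x < 1) :
    ∃ b, 1 ≤ b ∧ x = X2 b ∧ Mfun x = F2 b := by
  have hnle : ¬ x ≤ 3/10 := not_le.2 hx3
  set r := Real.sqrt (5*(6*x - 1)) with hr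
  have hr2 : r^2 = 30*x - 5 := by
    rw [hr, Real.sq_sqrt (by linarith)]; ring
  have hr0 : 0 ≤ r := Real.sqrt_nonneg _
  have hrge2 : 2 ≤ r := by nlinarith
  have hrlt5 : r < 5 := by nlinarith
  have h5r : 0 < 5 - r := by linarith
  set b := bFun x with hbdef
  have hbeq : b = (5+r)/(10*(1-x)) := by
    rw [hbdef, hr]; simp only [bFun, if_neg hnle]
  have h1x : 0 < 1 - x := by linarith
  have hkey : b*(5-r) = 3 := by
    rw [hbeq, div_mul_eq_mul_div, div_eq_iff (by positivity : (10*(1-x)) ≠ 0)]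
    linear_combination -hr2
  have hbdiv : b = 3/(5-r) := by
    rw [eq_div_iff (ne_of_gt h5r)]; exact hkey
  have hbpos : 0 < b := by rw [hbdiv]; positivity
  have hb1 : 1 ≤ b := by
    rw [hbdiv, le_div_iff₀ h5r]; linarith
  have hbne : b ≠ 0 := ne_of_gt hbpos
  have hrb : r*b = 5*b - 3 := by linear_combination -hkey
  have hq : (5*b-3)^2 = (30*x-5)*b^2 := by
    linear_combination (-(5*b-3)-r*b)*hrb + b^2*hr2
  have hxeq : x = X2 b := by
    simp only [X2]
    field_simp
    linear_combination (-1/3)*hq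
  refine ⟨b, hb1, hxeq, ?_⟩
  have hne0 : x ≠ 0 := by intro h; rw [h] at hx3; norm_num at hx3
  simp only [Mfun, if_neg hne0, if_neg (ne_of_lt hx1), if_neg hnle, F2, ← hbdef]


lemma slope_bound {y : ℝ} (hy0 : 0 < y) (hy1 : y < 1) :
    ∃ b, 0 < b ∧
      (∀ x, 0 ≤ x → x < y → y - x ≤ b * (Mfun y - Mfun x)) ∧
      (∀ z, y < z → z ≤ 1 → b * (Mfun z - Mfun y) ≤ z - y) := by
  by_cases hy3 : y ≤ 3/10
  · obtain ⟨b, hb0, hb1, hyX, hyM⟩ := param1 hy0.le hy3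
    have hbpos : 0 < b := by
      rcases hb0.lt_or_eq with h | h
      · exact h
      · exfalso; rw [← h] at hyX; simp [X1] at hyX; linarith
    refine ⟨b, hbpos, ?_, ?_⟩
    · intro x hx0 hxy
      obtain ⟨a, ha0, ha1, hxX, hxM⟩ := param1 hx0 (by linarith)
      have := L1br1 ha0 ha1 hb1
      rw [← hyX, ← hxX, ← hyM, ← hxM] at this
      exact this
    · intro z hyz hz1
      rcases hz1.lt_or_eq with h1 | h1
      · by_cases hz3 : z ≤ 3/10
        · obtain ⟨c, hc0, hc1, hzX, hzM⟩ := param1 (by linarith) hz3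
          have := R1br1 hb1 hc1
          rw [← hyX, ← hzX, ← hyM, ← hzM] at this
          exact this
        · obtain ⟨c, hc1, hzX, hzM⟩ := param2 (lt_of_not_ge hz3) h1
          have := crossR hb1 hc1
          rw [← hyX, ← hzX, ← hyM, ← hzM] at this
          exact this
      · have := R1one_br1 hb0 hb1
        rw [← hyX, ← hyM] at this
        rw [h1, Mfun_one]
        exact this
  · push_neg at hy3
    obtain ⟨b, hb1, hyX, hyM⟩ := param2 hy3 hy1
    refine ⟨b, by linarith, ?_, ?_⟩
    · intro x hx0 hxy
      by_cases hx3 : x ≤ 3/10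
      · obtain ⟨a, ha0, ha1, hxX, hxM⟩ := param1 hx0 hx3
        have := crossL ha0 ha1 hb1
        rw [← hyX, ← hxX, ← hyM, ← hxM] at this
        exact this
      · obtain ⟨a, ha1, hxX, hxM⟩ := param2 (lt_of_not_ge hx3) (by linarith)
        have := L1br2 ha1 hb1
        rw [← hyX, ← hxX, ← hyM, ← hxM] at this
        exact this
    · intro z hyz hz1
      rcases hz1.lt_or_eq with h1 | h1
      · obtain ⟨c, hc1, hzX, hzM⟩ := param2 (by linarith) h1
        have := R1br2 hb1 hc1
        rw [← hyX, ← hzX, ← hyM, ← hzM] at this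
        exact this
      · have := id3 hb1
        rw [← hyX, ← hyM] at this
        rw [h1, Mfun_one]
        exact this

lemma Mfun_le_one {x : ℝ} (hx0 : 0 ≤ x) (hx1 : x ≤ 1) : Mfun x ≤ 1 := by
  rcases hx1.lt_or_eq with h1 | h1
  · by_cases hx3 : x ≤ 3/10
    · obtain ⟨a, ha0, ha1, _, hxM⟩ := param1 hx0 hx3
      rw [hxM]; simp only [F1]; nlinarith
    · obtain ⟨b, hb1, _, hxM⟩ := param2 (lt_of_not_ge hx3) h1
      rw [hxM]; simp only [F2]
      have hb0 : (0:ℝ) < b := by linarith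
      have h : 1/(5*b^3) ≤ 1/(2*b^2) := by
        rw [div_le_div_iff₀ (by positivity) (by positivity)]
        nlinarith
      linarith
  · rw [h1, Mfun_one]

lemma Mfun_mono : MonotoneOn Mfun (Icc (0:ℝ) 1) := by
  intro x hx y hy hxy
  rcases hxy.lt_or_eq with h | h
  · rcases hy.2.lt_or_eq with h1 | h1
    · have hy0 : 0 < y := lt_of_le_of_lt hx.1 h
      obtain ⟨b, hbpos, hL, _⟩ := slope_bound hy0 h1
      have hlx := hL x hx.1 h
      by_contra h'
      push_neg at h'
      have := mul_neg_of_pos_of_neg hbpos (by linarith : Mfun y - Mfun x < 0)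
      linarith
    · rw [h1, Mfun_one]; exact Mfun_le_one hx.1 hx.2
  · rw [h]

lemma Mfun_concave : ConcaveOn ℝ (Icc (0:ℝ) 1) Mfun := by
  apply concaveOn_of_slope_anti_adjacent (convex_Icc 0 1)
  intro x y z hx hz hxy hyz
  have hy0 : 0 < y := lt_of_le_of_lt hx.1 hxy
  have hy1 : y < 1 := lt_of_lt_of_le hyz hz.2
  obtain ⟨b, hbpos, hL, hR⟩ := slope_bound hy0 hy1
  have h1 := hL x hx.1 hxy
  have h2 := hR z hyz hz.2
  have hxy' : 0 < y - x := by linarith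
  have hyz' : 0 < z - y := by linarith
  rw [div_le_div_iff₀ hyz' hxy']
  have hMyx : 0 < Mfun y - Mfun x := by
    by_contra h'
    push_neg at h'
    nlinarith [mul_nonpos_of_nonneg_of_nonpos hbpos.le h']
  rcases le_or_gt (Mfun z - Mfun y) 0 with hc | hc
  · nlinarith
  · nlinarith [mul_le_mul_of_nonneg_right h2 hMyx.le,
      mul_le_mul_of_nonneg_right h1 hc.le]

end MfunAux

/-- `x ↦ M_x` is nondecreasing and concave on `[0,1]`; consequently the exact
`ξ`-`ρ`-region `R = {(x,y) : x ∈ [0,1], |y| ≤ M_x}` is convex. -/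
theorem Mfun_monotone_concave_region_convex :
    MonotoneOn Mfun (Icc (0:ℝ) 1) ∧ ConcaveOn ℝ (Icc (0:ℝ) 1) Mfun ∧
    Convex ℝ {p : ℝ × ℝ | p.1 ∈ Icc (0:ℝ) 1 ∧ |p.2| ≤ Mfun p.1} := by
  refine ⟨MfunAux.Mfun_mono, MfunAux.Mfun_concave, ?_⟩
  intro p hp q hq s t hs ht hst
  simp only [Set.mem_setOf_eq, Prod.fst_add, Prod.snd_add, Prod.smul_fst, Prod.smul_snd,
    smul_eq_mul] at *
  constructor
  · exact (convex_Icc (0:ℝ) 1) hp.1 hq.1 hs ht hst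
  · calc |s*p.2 + t*q.2| ≤ |s*p.2| + |t*q.2| := abs_add_le _ _
      _ = s*|p.2| + t*|q.2| := by rw [abs_mul, abs_mul, abs_of_nonneg hs, abs_of_nonneg ht]
      _ ≤ s*(Mfun p.1) + t*(Mfun q.1) :=
        add_le_add (mul_le_mul_of_nonneg_left hp.2 hs) (mul_le_mul_of_nonneg_left hq.2 ht)
      _ ≤ Mfun (s*p.1 + t*q.1) := by
        have := MfunAux.Mfun_concave.2 hp.1 hq.1 hs ht hst
        simpa using this

end
end

section
/- A function C : [0,1]² → [0,1] is a bivariate copula if and only if there exists a family (h_v)_{v ∈ [0,1]} of measurable functions h_v : [0,1] → [0,1] such that (i) C(u,v) = ∫₀^u h_v(t) dt for all (u,v) ∈ [0,1]²; (ii) ∫₀¹ h_v(t) dt = v for all v ∈ [0,1]; and (iii) h_v(t) ≤ h_{v'}(t) for all t ∈ [0,1] whenever v ≤ v'. -/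
open MeasureTheory Real Set Topology

noncomputable section

namespace CopulaKernelAux

open Filter

/-- Clamp a real number to `[0,1]`. -/
def cl (x : ℝ) : ℝ := max 0 (min x 1)

lemma cl_mem (x : ℝ) : cl x ∈ Icc (0:ℝ) 1 :=
  ⟨le_max_left _ _, max_le zero_le_one (min_le_right _ _)⟩

lemma cl_mono : Monotone cl := fun _ _ h =>
  max_le_max le_rfl (min_le_min h le_rfl)

lemma cl_eq {x : ℝ} (hx : x ∈ Icc (0:ℝ) 1) : cl x = x := by
  simp [cl, min_eq_left hx.2, max_eq_right hx.1]

lemma cl_lip {x y : ℝ} (h : x ≤ y) : cl y - cl x ≤ y - x := by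
  unfold cl
  simp only [max_def, min_def]
  split_ifs <;> linarith

end CopulaKernelAux

open CopulaKernelAux Filter

/-- Forward direction: every copula admits a kernel representation. -/
theorem exists_kernel_of_isCopula (C : ℝ → ℝ → ℝ) (hC : IsCopula C) :
    ∃ h : ℝ → ℝ → ℝ,
      (∀ v ∈ Icc (0:ℝ) 1, Measurable (h v)) ∧
      (∀ v ∈ Icc (0:ℝ) 1, ∀ t ∈ Icc (0:ℝ) 1, h v t ∈ Icc (0:ℝ) 1) ∧
      (∀ u ∈ Icc (0:ℝ) 1, ∀ v ∈ Icc (0:ℝ) 1, C u v = ∫ t in (0:ℝ)..u, h v t) ∧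
      (∀ v ∈ Icc (0:ℝ) 1, (∫ t in (0:ℝ)..1, h v t) = v) ∧
      (∀ t ∈ Icc (0:ℝ) 1, ∀ v ∈ Icc (0:ℝ) 1, ∀ v' ∈ Icc (0:ℝ) 1, v ≤ v' →
        h v t ≤ h v' t) := by
  obtain ⟨hr, hg1, hg2, hm1, hm2, h2⟩ := hC
  -- monotonicity in the first variable
  have key_mono : ∀ v ∈ Icc (0:ℝ) 1, ∀ x y : ℝ, x ≤ y → C (cl x) v ≤ C (cl y) v := by
    intro v hv x y hxy
    have h0 := h2 (cl x) (cl y) 0 v (cl_mem x) (cl_mem y) ⟨le_rfl, zero_le_one⟩ hv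
      (cl_mono hxy) hv.1
    have e1 := hg1 (cl x) (cl_mem x)
    have e2 := hg1 (cl y) (cl_mem y)
    linarith
  -- Lipschitz property in the first variable
  have key_lip : ∀ v ∈ Icc (0:ℝ) 1, ∀ x y : ℝ, x ≤ y →
      C (cl y) v - C (cl x) v ≤ cl y - cl x := by
    intro v hv x y hxy
    have h0 := h2 (cl x) (cl y) v 1 (cl_mem x) (cl_mem y) hv ⟨zero_le_one, le_rfl⟩
      (cl_mono hxy) hv.2
    have e1 := hm1 (cl x) (cl_mem x)
    have e2 := hm1 (cl y) (cl_mem y)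
    linarith
  have lip : ∀ v ∈ Icc (0:ℝ) 1, LipschitzWith 1 (fun x => C (cl x) v) := by
    intro v hv
    apply LipschitzWith.of_dist_le_mul
    intro x y
    rw [Real.dist_eq, Real.dist_eq, NNReal.coe_one, one_mul]
    rcases le_total x y with hxy | hxy
    · have h1 := key_mono v hv x y hxy
      have h3 := key_lip v hv x y hxy
      have h4 := cl_lip hxy
      rw [abs_le]
      constructor
      · rw [abs_of_nonpos (by linarith)]
        linarith
      · rw [abs_of_nonpos (by linarith)]
        linarith
    · have h1 := key_mono v hv y x hxy
      have h3 := key_lip v hv y x hxy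
      have h4 := cl_lip hxy
      rw [abs_le]
      constructor
      · rw [abs_of_nonneg (by linarith)]
        linarith
      · rw [abs_of_nonneg (by linarith)]
        linarith
  -- the difference quotients
  set q : ℝ → ℝ → ℕ → ℝ :=
    fun v t n => ((n : ℝ) + 1) * (C (cl (t + 1 / ((n : ℝ) + 1))) v - C (cl t) v) with hq
  have hnpos : ∀ n : ℕ, (0:ℝ) < (n : ℝ) + 1 := fun n => by positivity
  have hq0 : ∀ v ∈ Icc (0:ℝ) 1, ∀ t : ℝ, ∀ n : ℕ, 0 ≤ q v t n := by
    intro v hv t n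
    apply mul_nonneg (hnpos n).le
    have := key_mono v hv t (t + 1 / ((n : ℝ) + 1)) (le_add_of_nonneg_right (by positivity))
    linarith
  have hq1 : ∀ v ∈ Icc (0:ℝ) 1, ∀ t : ℝ, ∀ n : ℕ, q v t n ≤ 1 := by
    intro v hv t n
    have hd : t ≤ t + 1 / ((n : ℝ) + 1) := le_add_of_nonneg_right (by positivity)
    have h3 := key_lip v hv t (t + 1 / ((n : ℝ) + 1)) hd
    have h4 := cl_lip hd
    have : q v t n ≤ ((n : ℝ) + 1) * (1 / ((n : ℝ) + 1)) := by
      apply mul_le_mul_of_nonneg_left _ (hnpos n).le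
      linarith
    rwa [mul_one_div_cancel (hnpos n).ne'] at this
  set h : ℝ → ℝ → ℝ := fun v t => limsup (fun n => q v t n) atTop with hh
  have hcob : ∀ v ∈ Icc (0:ℝ) 1, ∀ t : ℝ, IsCoboundedUnder (· ≤ ·) atTop (q v t) :=
    fun v hv t => isCoboundedUnder_le_of_le atTop (fun n => hq0 v hv t n)
  have hbdd : ∀ v ∈ Icc (0:ℝ) 1, ∀ t : ℝ, IsBoundedUnder (· ≤ ·) atTop (q v t) :=
    fun v hv t => isBoundedUnder_of ⟨1, fun n => hq1 v hv t n⟩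
  have hmem : ∀ v ∈ Icc (0:ℝ) 1, ∀ t : ℝ, h v t ∈ Icc (0:ℝ) 1 := by
    intro v hv t
    constructor
    · have : limsup (fun _ : ℕ => (0:ℝ)) atTop ≤ limsup (fun n => q v t n) atTop :=
        limsup_le_limsup (Eventually.of_forall (fun n => hq0 v hv t n))
          (isCoboundedUnder_le_of_le atTop (fun _ => le_rfl)) (hbdd v hv t)
      rwa [limsup_const] at this
    · have : limsup (fun n => q v t n) atTop ≤ limsup (fun _ : ℕ => (1:ℝ)) atTop :=
        limsup_le_limsup (Eventually.of_forall (fun n => hq1 v hv t n))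
          (hcob v hv t) isBoundedUnder_const
      rwa [limsup_const] at this
  -- the key integral representation
  have key : ∀ u ∈ Icc (0:ℝ) 1, ∀ v ∈ Icc (0:ℝ) 1, C u v = ∫ t in (0:ℝ)..u, h v t := by
    intro u hu v hv
    set Fv : StieltjesFunction ℝ :=
      { toFun := fun x => C (cl x) v
        mono' := fun x y hxy => key_mono v hv x y hxy
        right_continuous' := fun x => (lip v hv).continuous.continuousWithinAt } with hFv
    have hFvcoe : ∀ x, Fv x = C (cl x) v := fun x => rfl
    set Gv : StieltjesFunction ℝ :=
      { toFun := fun x => x - C (cl x) v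
        mono' := by
          intro x y hxy
          have h3 := key_lip v hv x y hxy
          have h4 := cl_lip hxy
          simp only
          linarith
        right_continuous' := fun x =>
          (continuous_id.sub (lip v hv).continuous).continuousWithinAt } with hGv
    have vol_eq : Fv.measure + Gv.measure = volume := by
      refine Measure.ext_of_Ioc' _ _ (fun a b hab => ?_) (fun a b hab => ?_)
      · simp [Fv.measure_Ioc, Gv.measure_Ioc]
      · rw [Measure.add_apply, Fv.measure_Ioc, Gv.measure_Ioc, Real.volume_Ioc]
        have h1 : 0 ≤ C (cl b) v - C (cl a) v := by
          have := key_mono v hv a b hab.le; linarith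
        have h3 := key_lip v hv a b hab.le
        have h4 := cl_lip hab.le
        rw [hFvcoe, hFvcoe]
        show ENNReal.ofReal (C (cl b) v - C (cl a) v) +
          ENNReal.ofReal ((b - C (cl b) v) - (a - C (cl a) v)) = ENNReal.ofReal (b - a)
        rw [← ENNReal.ofReal_add h1 (by linarith)]
        ring_nf
    have hle : Fv.measure ≤ volume := by
      rw [← vol_eq]; exact Measure.le_add_right le_rfl
    have hac : Fv.measure ≪ volume := Measure.absolutelyContinuous_of_le hle
    have hae : ∀ᵐ t : ℝ, h v t = (Measure.rnDeriv Fv.measure volume t).toReal := by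
      filter_upwards [Fv.ae_hasDerivAt] with t ht
      have hslope := hasDerivAt_iff_tendsto_slope.1 ht
      have hseq : Tendsto (fun n : ℕ => t + 1 / ((n : ℝ) + 1)) atTop (𝓝[≠] t) := by
        apply tendsto_nhdsWithin_of_tendsto_nhds_of_eventually_within
        · have h0 : Tendsto (fun n : ℕ => 1 / ((n : ℝ) + 1)) atTop (𝓝 0) :=
            tendsto_one_div_add_atTop_nhds_zero_nat
          have := tendsto_const_nhds.add h0 (f := fun n : ℕ => t)
          simpa using this
        · refine Eventually.of_forall (fun n => ?_)
          simp only [mem_compl_iff, mem_singleton_iff]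
          intro hcon
          have hpos : 0 < 1 / ((n : ℝ) + 1) := by positivity
          linarith
      have hd : Tendsto (fun n : ℕ => q v t n) atTop
          (𝓝 ((Measure.rnDeriv Fv.measure volume t).toReal)) := by
        apply (hslope.comp hseq).congr
        intro n
        show slope (⇑Fv) t (t + 1 / ((n : ℝ) + 1)) = q v t n
        rw [slope_def_field, hFvcoe, hFvcoe, add_sub_cancel_left, one_div, div_inv_eq_mul,
          mul_comm]
        simp only [hq, one_div]
      exact hd.limsup_eq
    rw [intervalIntegral.integral_of_le hu.1]
    have step1 : ∫ t in Ioc (0:ℝ) u, h v t =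
        ∫ t in Ioc (0:ℝ) u, (Measure.rnDeriv Fv.measure volume t).toReal :=
      integral_congr_ae (ae_restrict_of_ae hae)
    have step2 : ∫ t in Ioc (0:ℝ) u, (Measure.rnDeriv Fv.measure volume t).toReal =
        (∫⁻ t in Ioc (0:ℝ) u, Measure.rnDeriv Fv.measure volume t).toReal :=
      integral_toReal ((Measure.measurable_rnDeriv _ _).aemeasurable)
        (ae_restrict_of_ae (Measure.rnDeriv_lt_top _ _))
    have step3 : (∫⁻ t in Ioc (0:ℝ) u, Measure.rnDeriv Fv.measure volume t) =
        Fv.measure (Ioc 0 u) := Measure.setLIntegral_rnDeriv hac _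
    rw [step1, step2, step3, Fv.measure_Ioc, hFvcoe, hFvcoe, cl_eq hu,
      cl_eq ⟨le_rfl, zero_le_one⟩, hg2 v hv, sub_zero,
      ENNReal.toReal_ofReal (hr u hu v hv).1]
  refine ⟨h, ?_, fun v hv t _ => hmem v hv t, key, ?_, ?_⟩
  · -- measurability
    intro v hv
    have hcont : ∀ n : ℕ, Continuous (fun t => q v t n) := by
      intro n
      have c1 := (lip v hv).continuous
      exact continuous_const.mul ((c1.comp (continuous_id.add continuous_const)).sub c1)
    exact Measurable.limsup (fun n => (hcont n).measurable)
  · -- marginal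
    intro v hv
    rw [← key 1 ⟨zero_le_one, le_rfl⟩ v hv, hm2 v hv]
  · -- monotonicity in v
    intro t ht v hv v' hv' hvv
    refine limsup_le_limsup (Eventually.of_forall (fun n => ?_)) (hcob v hv t) (hbdd v' hv' t)
    have hd : t ≤ t + 1 / ((n : ℝ) + 1) := le_add_of_nonneg_right (by positivity)
    have h0 := h2 (cl t) (cl (t + 1 / ((n : ℝ) + 1))) v v' (cl_mem t) (cl_mem _) hv hv'
      (cl_mono hd) hvv
    apply mul_le_mul_of_nonneg_left _ (hnpos n).le
    linarith

/-- Characterization of copulas: `C : [0,1]² → [0,1]` is a copula iff there is a family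
`(h_v)` of measurable `[0,1]`-valued functions with `C(u,v) = ∫₀ᵘ h_v(t) dt`,
`∫₀¹ h_v(t) dt = v`, and `h_v ≤ h_{v'}` whenever `v ≤ v'`. -/
theorem isCopula_iff_exists_kernel (C : ℝ → ℝ → ℝ)
    (hrange : ∀ u ∈ Icc (0:ℝ) 1, ∀ v ∈ Icc (0:ℝ) 1, C u v ∈ Icc (0:ℝ) 1) :
    IsCopula C ↔
      ∃ h : ℝ → ℝ → ℝ,
        (∀ v ∈ Icc (0:ℝ) 1, Measurable (h v)) ∧
        (∀ v ∈ Icc (0:ℝ) 1, ∀ t ∈ Icc (0:ℝ) 1, h v t ∈ Icc (0:ℝ) 1) ∧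
        (∀ u ∈ Icc (0:ℝ) 1, ∀ v ∈ Icc (0:ℝ) 1, C u v = ∫ t in (0:ℝ)..u, h v t) ∧
        (∀ v ∈ Icc (0:ℝ) 1, (∫ t in (0:ℝ)..1, h v t) = v) ∧
        (∀ t ∈ Icc (0:ℝ) 1, ∀ v ∈ Icc (0:ℝ) 1, ∀ v' ∈ Icc (0:ℝ) 1, v ≤ v' →
          h v t ≤ h v' t) := by
  constructor
  · exact exists_kernel_of_isCopula C
  · rintro ⟨h, hm, hb, hInt, hMarg, hMono⟩
    have h01 : (0:ℝ) ∈ Icc (0:ℝ) 1 := ⟨le_rfl, zero_le_one⟩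
    have h11 : (1:ℝ) ∈ Icc (0:ℝ) 1 := ⟨zero_le_one, le_rfl⟩
    -- integrability
    have int01 : ∀ v ∈ Icc (0:ℝ) 1, IntegrableOn (h v) (Icc 0 1) volume := by
      intro v hv
      apply Measure.integrableOn_of_bounded (M := 1)
      · simp
      · exact (hm v hv).aestronglyMeasurable
      · filter_upwards [ae_restrict_mem measurableSet_Icc] with t ht
        rw [Real.norm_eq_abs, abs_le]
        exact ⟨by linarith [(hb v hv t ht).1], (hb v hv t ht).2⟩
    have intI : ∀ v ∈ Icc (0:ℝ) 1, ∀ a b : ℝ, a ∈ Icc (0:ℝ) 1 → b ∈ Icc (0:ℝ) 1 →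
        IntervalIntegrable (h v) volume a b := by
      intro v hv a b ha hb'
      apply IntegrableOn.intervalIntegrable
      apply (int01 v hv).mono_set
      exact Icc_subset_Icc (le_min ha.1 hb'.1) (max_le ha.2 hb'.2)
    -- a nonnegative function with zero total integral has zero partial integrals
    have vanish : ∀ f : ℝ → ℝ,
        (∀ a b : ℝ, a ∈ Icc (0:ℝ) 1 → b ∈ Icc (0:ℝ) 1 → IntervalIntegrable f volume a b) →
        (∀ t ∈ Icc (0:ℝ) 1, 0 ≤ f t) → (∫ t in (0:ℝ)..1, f t) = 0 →
        ∀ u ∈ Icc (0:ℝ) 1, (∫ t in (0:ℝ)..u, f t) = 0 := by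
      intro f hint hpos htot u hu
      have hnn1 : (0:ℝ) ≤ ∫ t in (0:ℝ)..u, f t :=
        intervalIntegral.integral_nonneg hu.1 (fun x hx => hpos x ⟨hx.1, hx.2.trans hu.2⟩)
      have hnn2 : (0:ℝ) ≤ ∫ t in u..1, f t :=
        intervalIntegral.integral_nonneg hu.2 (fun x hx => hpos x ⟨hu.1.trans hx.1, hx.2⟩)
      have hadd : (∫ t in (0:ℝ)..u, f t) + (∫ t in u..1, f t) = ∫ t in (0:ℝ)..1, f t :=
        intervalIntegral.integral_add_adjacent_intervals (hint 0 u h01 hu) (hint u 1 hu h11)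
      linarith
    refine ⟨hrange, ?_, ?_, ?_, ?_, ?_⟩
    · -- C u 0 = 0
      intro u hu
      rw [hInt u hu 0 h01]
      exact vanish (h 0) (intI 0 h01) (fun t ht => (hb 0 h01 t ht).1) (hMarg 0 h01) u hu
    · -- C 0 v = 0
      intro v hv
      rw [hInt 0 h01 v hv, intervalIntegral.integral_same]
    · -- C u 1 = u
      intro u hu
      rw [hInt u hu 1 h11]
      have hz : (∫ t in (0:ℝ)..u, (1 - h 1 t)) = 0 := by
        apply vanish (fun t => 1 - h 1 t)
          (fun a b ha hb' => (intervalIntegrable_const).sub (intI 1 h11 a b ha hb'))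
          (fun t ht => by linarith [(hb 1 h11 t ht).2]) _ u hu
        rw [intervalIntegral.integral_sub intervalIntegrable_const (intI 1 h11 0 1 h01 h11),
          hMarg 1 h11]
        simp
      have hsub : (∫ t in (0:ℝ)..u, (1 - h 1 t)) =
          (∫ t in (0:ℝ)..u, (1:ℝ)) - ∫ t in (0:ℝ)..u, h 1 t :=
        intervalIntegral.integral_sub intervalIntegrable_const (intI 1 h11 0 u h01 hu)
      rw [hz, intervalIntegral.integral_const] at hsub
      simp at hsub
      linarith
    · -- C 1 v = v
      intro v hv
      rw [hInt 1 h11 v hv]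
      exact hMarg v hv
    · -- 2-increasing
      intro u u' v v' hu hu' hv hv' huu hvv
      rw [hInt u' hu' v' hv', hInt u' hu' v hv, hInt u hu v' hv', hInt u hu v hv]
      have e1 : (∫ t in (0:ℝ)..u, h v' t) + (∫ t in u..u', h v' t) =
          ∫ t in (0:ℝ)..u', h v' t :=
        intervalIntegral.integral_add_adjacent_intervals (intI v' hv' 0 u h01 hu)
          (intI v' hv' u u' hu hu')
      have e2 : (∫ t in (0:ℝ)..u, h v t) + (∫ t in u..u', h v t) =
          ∫ t in (0:ℝ)..u', h v t :=
        intervalIntegral.integral_add_adjacent_intervals (intI v hv 0 u h01 hu)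
          (intI v hv u u' hu hu')
      have hmono : (∫ t in u..u', h v t) ≤ ∫ t in u..u', h v' t :=
        intervalIntegral.integral_mono_on huu (intI v hv u u' hu hu')
          (intI v' hv' u u' hu hu')
          (fun x hx => hMono x ⟨hu.1.trans hx.1, hx.2.trans hu'.2⟩ v hv v' hv' hvv)
      linarith

end
end

section
/- If D and E are bivariate copulas with D ≤_{∂₁S} E (Schur order for copula derivatives), then ξ(D) ≤ ξ(E). -/
open MeasureTheory Real Set Filter

noncomputable section

/-- `fs` is a decreasing rearrangement of `f` on `[0,1]`: it is antitone on `[0,1]` and has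
the same distribution of level sets, `λ(fs ≥ t) = λ(f ≥ t)` for all `t`. -/
def IsDecRearrangement (f fs : ℝ → ℝ) : Prop :=
  AntitoneOn fs (Icc (0:ℝ) 1) ∧
  ∀ t : ℝ, volume {s ∈ Icc (0:ℝ) 1 | t ≤ fs s} = volume {s ∈ Icc (0:ℝ) 1 | t ≤ f s}

/-- The Schur order `f ≺_S g` for functions on `[0,1]`. -/
def SchurLE (f g : ℝ → ℝ) : Prop :=
  ∃ fs gs : ℝ → ℝ, IsDecRearrangement f fs ∧ IsDecRearrangement g gs ∧
    (∀ x ∈ Ioo (0:ℝ) 1, (∫ t in (0:ℝ)..x, fs t) ≤ ∫ t in (0:ℝ)..x, gs t) ∧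
    (∫ t in (0:ℝ)..1, f t) = ∫ t in (0:ℝ)..1, g t

/-- The Schur order for copula derivatives: `D ≤_{∂₁S} E` iff
`∂₁D(·,v) ≺_S ∂₁E(·,v)` for all `v ∈ [0,1]`. -/
def SchurDerivLE (D E : ℝ → ℝ → ℝ) : Prop :=
  ∀ v ∈ Icc (0:ℝ) 1,
    SchurLE (fun t => deriv (fun s => D s v) t) (fun t => deriv (fun s => E s v) t)

namespace XiAux

/-- clamp to `[0,1]` -/
def cl (x : ℝ) : ℝ := max 0 (min 1 x)

lemma cl_mono : Monotone cl := fun a b hab => by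
  unfold cl; exact max_le_max le_rfl (min_le_min le_rfl hab)

lemma cl_mem (x : ℝ) : cl x ∈ Icc (0:ℝ) 1 :=
  ⟨le_max_left _ _, max_le zero_le_one (min_le_left _ _)⟩

lemma cl_eq {x : ℝ} (hx : x ∈ Icc (0:ℝ) 1) : cl x = x := by
  unfold cl; rw [min_eq_right hx.2, max_eq_right hx.1]

lemma cl_dist (a b : ℝ) : |cl a - cl b| ≤ |a - b| := by
  rcases le_total a b with hab | hab
  · have h1 : cl a ≤ cl b := cl_mono hab
    have h2 : cl b - cl a ≤ b - a := by
      unfold cl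
      rcases le_total (1:ℝ) b with hb | hb <;> rcases le_total (1:ℝ) a with ha | ha <;>
        rcases le_total (0:ℝ) a with ha0 | ha0 <;> rcases le_total (0:ℝ) b with hb0 | hb0 <;>
        simp [min_eq_left, min_eq_right, max_eq_left, max_eq_right, *] <;> linarith
    rw [abs_sub_comm, abs_of_nonneg (by linarith), abs_sub_comm, abs_of_nonneg (by linarith)]
    linarith
  · have h1 : cl b ≤ cl a := cl_mono hab
    have h2 : cl a - cl b ≤ a - b := by
      unfold cl
      rcases le_total (1:ℝ) b with hb | hb <;> rcases le_total (1:ℝ) a with ha | ha <;>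
        rcases le_total (0:ℝ) a with ha0 | ha0 <;> rcases le_total (0:ℝ) b with hb0 | hb0 <;>
        simp [min_eq_left, min_eq_right, max_eq_left, max_eq_right, *] <;> linarith
    rw [abs_of_nonneg (by linarith), abs_of_nonneg (by linarith)]
    linarith

lemma cl_continuous : Continuous cl :=
  continuous_const.max (continuous_const.min continuous_id)

lemma le_cl_iff {c x : ℝ} (hc0 : 0 < c) (hc1 : c ≤ 1) : c ≤ cl x ↔ c ≤ x := by
  unfold cl
  constructor
  · intro h
    rcases le_or_gt c x with h' | h'
    · exact h'
    · exfalso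
      have : min 1 x ≤ x := min_le_right _ _
      rcases le_total (min 1 x) 0 with h0 | h0
      · rw [max_eq_left h0] at h; linarith
      · rw [max_eq_right h0] at h; linarith
  · intro h
    have : c ≤ min 1 x := le_min hc1 h
    exact le_trans this (le_max_right _ _)

/-- monotone in first variable -/
lemma copula_mono1 {C : ℝ → ℝ → ℝ} (hC : IsCopula C) {v : ℝ} (hv : v ∈ Icc (0:ℝ) 1)
    {u u' : ℝ} (hu : u ∈ Icc (0:ℝ) 1) (hu' : u' ∈ Icc (0:ℝ) 1) (huu : u ≤ u') :
    C u v ≤ C u' v := by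
  obtain ⟨_, hg1, _, _, _, h2⟩ := hC
  have := h2 u u' 0 v hu hu' (by constructor <;> norm_num) hv huu hv.1
  have e1 := hg1 u hu
  have e2 := hg1 u' hu'
  linarith

/-- Lipschitz in first variable -/
lemma copula_lip1 {C : ℝ → ℝ → ℝ} (hC : IsCopula C) {v : ℝ} (hv : v ∈ Icc (0:ℝ) 1)
    {u u' : ℝ} (hu : u ∈ Icc (0:ℝ) 1) (hu' : u' ∈ Icc (0:ℝ) 1) (huu : u ≤ u') :
    C u' v - C u v ≤ u' - u := by
  obtain ⟨_, _, _, hm1, _, h2⟩ := hC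
  have := h2 u u' v 1 hu hu' hv (by constructor <;> norm_num) huu hv.2
  have e1 := hm1 u hu
  have e2 := hm1 u' hu'
  linarith

/-- monotone in second variable -/
lemma copula_mono2 {C : ℝ → ℝ → ℝ} (hC : IsCopula C) {u : ℝ} (hu : u ∈ Icc (0:ℝ) 1)
    {v v' : ℝ} (hv : v ∈ Icc (0:ℝ) 1) (hv' : v' ∈ Icc (0:ℝ) 1) (hvv : v ≤ v') :
    C u v ≤ C u v' := by
  obtain ⟨_, _, hg2, _, _, h2⟩ := hC
  have := h2 0 u v v' (by constructor <;> norm_num) hu hv hv' hu.1 hvv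
  have e1 := hg2 v hv
  have e2 := hg2 v' hv'
  linarith

/-- Lipschitz in second variable -/
lemma copula_lip2 {C : ℝ → ℝ → ℝ} (hC : IsCopula C) {u : ℝ} (hu : u ∈ Icc (0:ℝ) 1)
    {v v' : ℝ} (hv : v ∈ Icc (0:ℝ) 1) (hv' : v' ∈ Icc (0:ℝ) 1) (hvv : v ≤ v') :
    C u v' - C u v ≤ v' - v := by
  obtain ⟨_, _, _, _, hm2, h2⟩ := hC
  have := h2 u 1 v v' hu (by constructor <;> norm_num) hv hv' hu.2 hvv
  have e1 := hm2 v hv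
  have e2 := hm2 v' hv'
  linarith

/-- the clamped section in the first variable -/
def sec (C : ℝ → ℝ → ℝ) (v : ℝ) : ℝ → ℝ := fun s => C (cl s) (cl v)

lemma sec_mono {C : ℝ → ℝ → ℝ} (hC : IsCopula C) (v : ℝ) : Monotone (sec C v) := by
  intro a b hab
  exact copula_mono1 hC (cl_mem v) (cl_mem a) (cl_mem b) (cl_mono hab)

lemma sec_lip {C : ℝ → ℝ → ℝ} (hC : IsCopula C) (v : ℝ) : LipschitzWith 1 (sec C v) := by
  have key : ∀ x y : ℝ, cl x ≤ cl y → |sec C v x - sec C v y| ≤ |x - y| := by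
    intro x y h
    have h1 := copula_mono1 hC (cl_mem v) (cl_mem x) (cl_mem y) h
    have h2 := copula_lip1 hC (cl_mem v) (cl_mem x) (cl_mem y) h
    have h3 : |cl y - cl x| ≤ |y - x| := cl_dist y x
    have h4 : cl y - cl x ≤ |cl y - cl x| := le_abs_self _
    rw [abs_sub_comm]
    rw [abs_of_nonneg (by unfold sec; linarith)]
    have : |y - x| = |x - y| := abs_sub_comm _ _
    unfold sec
    linarith [abs_sub_comm y x ▸ h3]
  apply LipschitzWith.of_dist_le_mul
  intro a b
  rw [Real.dist_eq, Real.dist_eq, NNReal.coe_one, one_mul]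
  rcases le_total (cl a) (cl b) with h | h
  · exact key a b h
  · rw [abs_sub_comm, abs_sub_comm a b]; exact key b a h

lemma sec_eq {C : ℝ → ℝ → ℝ} {v : ℝ} (hv : v ∈ Icc (0:ℝ) 1) {s : ℝ}
    (hs : s ∈ Icc (0:ℝ) 1) : sec C v s = C s v := by
  unfold sec; rw [cl_eq hs, cl_eq hv]

lemma deriv_mem_of_monotone_lip (hm : Monotone f) (hl : LipschitzWith 1 f) :
    ∀ᵐ t : ℝ, DifferentiableAt ℝ f t ∧ deriv f t ∈ Icc (0:ℝ) 1 := by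
  filter_upwards [hm.ae_differentiableAt] with t ht
  refine ⟨ht, ?_, ?_⟩
  · have hs := hasDerivAt_iff_tendsto_slope.1 ht.hasDerivAt
    apply ge_of_tendsto hs
    filter_upwards [self_mem_nhdsWithin] with y hy
    have hy' : y ≠ t := hy
    rw [slope_def_field]
    rcases lt_or_gt_of_ne hy' with h | h
    · have h1 : f y ≤ f t := hm h.le
      have h2 : y - t < 0 := by linarith
      exact div_nonneg_of_nonpos (by linarith) h2.le
    · have h1 : f t ≤ f y := hm h.le
      exact div_nonneg (by linarith) (by linarith)
  · have hs := hasDerivAt_iff_tendsto_slope.1 ht.hasDerivAt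
    apply le_of_tendsto hs
    filter_upwards [self_mem_nhdsWithin] with y hy
    have hy' : y ≠ t := hy
    rw [slope_def_field]
    have hd := hl.dist_le_mul y t
    rw [Real.dist_eq, Real.dist_eq, NNReal.coe_one, one_mul] at hd
    calc (f y - f t) / (y - t) ≤ |(f y - f t) / (y - t)| := le_abs_self _
      _ = |f y - f t| / |y - t| := abs_div _ _
      _ ≤ 1 := by
          rw [div_le_one (abs_pos.2 (sub_ne_zero.2 hy'))]
          simpa using hd



lemma ae_ne_one_restrict (s : Set ℝ) : ∀ᵐ t ∂(volume.restrict s), t ≠ 1 := by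
  have h : ∀ᵐ t : ℝ, t ≠ 1 := by
    rw [ae_iff]
    have : {t : ℝ | ¬ t ≠ 1} = {1} := by ext t; simp
    rw [this]
    simp
  exact ae_mono Measure.restrict_le_self h

lemma deriv_orig_ae {C : ℝ → ℝ → ℝ} (hC : IsCopula C) {v : ℝ} (hv : v ∈ Icc (0:ℝ) 1) :
    ∀ᵐ t ∂(volume.restrict (Ioc (0:ℝ) 1)), deriv (fun s => C s v) t ∈ Icc (0:ℝ) 1 := by
  have h1 := deriv_mem_of_monotone_lip (sec_mono hC v) (sec_lip hC v)
  have h2 : ∀ t ∈ Ioo (0:ℝ) 1, deriv (fun s => C s v) t = deriv (sec C v) t := by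
    intro t ht
    apply Filter.EventuallyEq.deriv_eq
    filter_upwards [Icc_mem_nhds ht.1 ht.2] with s hs
    exact (sec_eq hv hs).symm
  have h3 : ∀ᵐ t ∂(volume.restrict (Ioc (0:ℝ) 1)), t ∈ Ioo (0:ℝ) 1 := by
    filter_upwards [ae_restrict_mem measurableSet_Ioc, ae_ne_one_restrict (Ioc (0:ℝ) 1)]
      with t ht hne
    exact ⟨ht.1, lt_of_le_of_ne ht.2 hne⟩
  filter_upwards [ae_restrict_of_ae h1, h3] with t ht hIoo
  rw [h2 t hIoo]
  exact ht.2

lemma m01_finite : IsFiniteMeasure ((volume : Measure ℝ).restrict (Ioc (0:ℝ) 1)) := by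
  constructor
  rw [Measure.restrict_apply_univ]
  simp

lemma m01_apply (A : Set ℝ) : (volume.restrict (Ioc (0:ℝ) 1)) A = volume (A ∩ Ioc (0:ℝ) 1) :=
  Measure.restrict_apply' measurableSet_Ioc

lemma vol_inter_Icc_eq_Ioc (A : Set ℝ) :
    volume (A ∩ Icc (0:ℝ) 1) = volume (A ∩ Ioc (0:ℝ) 1) := by
  apply le_antisymm
  · have hsub : A ∩ Icc (0:ℝ) 1 ⊆ (A ∩ Ioc (0:ℝ) 1) ∪ {0} := by
      rintro x ⟨hxA, hx0, hx1⟩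
      rcases eq_or_lt_of_le hx0 with h | h
      · exact Or.inr (by simp [← h])
      · exact Or.inl ⟨hxA, h, hx1⟩
    calc volume (A ∩ Icc (0:ℝ) 1) ≤ volume ((A ∩ Ioc (0:ℝ) 1) ∪ {0}) := measure_mono hsub
      _ ≤ volume (A ∩ Ioc (0:ℝ) 1) + volume ({0} : Set ℝ) := measure_union_le _ _
      _ = volume (A ∩ Ioc (0:ℝ) 1) := by simp
  · exact measure_mono (inter_subset_inter_right A Ioc_subset_Icc_self)

/-- transfer Icc level sets (as in the problem statement) to the restricted measure -/
lemma level_transfer {f g : ℝ → ℝ}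
    (h : ∀ c : ℝ, volume {s ∈ Icc (0:ℝ) 1 | c ≤ f s} = volume {s ∈ Icc (0:ℝ) 1 | c ≤ g s}) :
    ∀ c : ℝ, (volume.restrict (Ioc (0:ℝ) 1)) {t | c ≤ f t} = (volume.restrict (Ioc (0:ℝ) 1)) {t | c ≤ g t} := by
  intro c
  rw [m01_apply, m01_apply, ← vol_inter_Icc_eq_Ioc, ← vol_inter_Icc_eq_Ioc]
  have e1 : {t | c ≤ f t} ∩ Icc (0:ℝ) 1 = {s ∈ Icc (0:ℝ) 1 | c ≤ f s} := by
    ext t; simp [and_comm]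
  have e2 : {t | c ≤ g t} ∩ Icc (0:ℝ) 1 = {s ∈ Icc (0:ℝ) 1 | c ≤ g s} := by
    ext t; simp [and_comm]
  rw [e1, e2, h c]

/-- layer cake: equal superlevel measures give equal integrals -/
lemma integral_eq_of_levels {φ ψ : ℝ → ℝ}
    (hφm : AEMeasurable φ (volume.restrict (Ioc (0:ℝ) 1))) (hψm : AEMeasurable ψ (volume.restrict (Ioc (0:ℝ) 1)))
    (hφ0 : 0 ≤ᵐ[(volume.restrict (Ioc (0:ℝ) 1))] φ) (hψ0 : 0 ≤ᵐ[(volume.restrict (Ioc (0:ℝ) 1))] ψ)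
    (hlvl : ∀ c : ℝ, 0 < c → (volume.restrict (Ioc (0:ℝ) 1)) {t | c ≤ φ t} = (volume.restrict (Ioc (0:ℝ) 1)) {t | c ≤ ψ t}) :
    ∫ t, φ t ∂(volume.restrict (Ioc (0:ℝ) 1)) = ∫ t, ψ t ∂(volume.restrict (Ioc (0:ℝ) 1)) := by
  rw [integral_eq_lintegral_of_nonneg_ae hφ0 hφm.aestronglyMeasurable,
      integral_eq_lintegral_of_nonneg_ae hψ0 hψm.aestronglyMeasurable]
  congr 1
  rw [lintegral_eq_lintegral_meas_le _ hφ0 hφm, lintegral_eq_lintegral_meas_le _ hψ0 hψm]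
  apply setLIntegral_congr_fun measurableSet_Ioi
  exact fun c hc => hlvl c hc

lemma sq_level {φ : ℝ → ℝ} (hφ0 : 0 ≤ᵐ[(volume.restrict (Ioc (0:ℝ) 1))] φ) {c : ℝ} (hc : 0 < c) :
    (volume.restrict (Ioc (0:ℝ) 1)) {t | c ≤ (φ t)^2} = (volume.restrict (Ioc (0:ℝ) 1)) {t | Real.sqrt c ≤ φ t} := by
  apply measure_congr
  rw [Filter.eventuallyEq_set]
  filter_upwards [hφ0] with t ht
  constructor
  · intro h
    calc Real.sqrt c ≤ Real.sqrt ((φ t)^2) := Real.sqrt_le_sqrt h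
      _ = φ t := Real.sqrt_sq ht
  · intro h
    have h2 : (Real.sqrt c)^2 ≤ (φ t)^2 := by
      apply pow_le_pow_left₀ (Real.sqrt_nonneg c) h
    rwa [Real.sq_sqrt hc.le] at h2

/-- layer cake for squares -/
lemma integral_sq_eq_of_levels {φ ψ : ℝ → ℝ}
    (hφm : AEMeasurable φ (volume.restrict (Ioc (0:ℝ) 1))) (hψm : AEMeasurable ψ (volume.restrict (Ioc (0:ℝ) 1)))
    (hφ0 : 0 ≤ᵐ[(volume.restrict (Ioc (0:ℝ) 1))] φ) (hψ0 : 0 ≤ᵐ[(volume.restrict (Ioc (0:ℝ) 1))] ψ)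
    (hlvl : ∀ c : ℝ, 0 < c → (volume.restrict (Ioc (0:ℝ) 1)) {t | c ≤ φ t} = (volume.restrict (Ioc (0:ℝ) 1)) {t | c ≤ ψ t}) :
    ∫ t, (φ t)^2 ∂(volume.restrict (Ioc (0:ℝ) 1)) = ∫ t, (ψ t)^2 ∂(volume.restrict (Ioc (0:ℝ) 1)) := by
  apply integral_eq_of_levels (hφm.pow_const 2) (hψm.pow_const 2)
  · filter_upwards [hφ0] with t ht; positivity
  · filter_upwards [hψ0] with t ht; positivity
  · intro c hc
    rw [sq_level hφ0 hc, sq_level hψ0 hc]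
    exact hlvl _ (Real.sqrt_pos.2 hc)

lemma intOn_bdd {r : ℝ → ℝ} {s : Set ℝ}
    {M : ℝ} (hm : AEStronglyMeasurable r (volume.restrict s)) (hb : ∀ t, |r t| ≤ M)
    (hs : volume s < ⊤) : IntegrableOn r s volume := by
  apply Integrable.mono' (g := fun _ => M) (integrableOn_const hs.ne) hm
  exact ae_of_all _ (fun t => by simpa using hb t)

/-- the key Hardy–Littlewood–Pólya style inequality for decreasing functions -/
lemma key_ineq {p q : ℝ → ℝ} (hp_anti : Antitone p) (hq_anti : Antitone q)
    (hp_mem : ∀ t, p t ∈ Icc (0:ℝ) 1) (hq_mem : ∀ t, q t ∈ Icc (0:ℝ) 1)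
    (hpq : ∀ x ∈ Ioo (0:ℝ) 1, (∫ t in Ioc (0:ℝ) x, p t) ≤ ∫ t in Ioc (0:ℝ) x, q t)
    (heq : (∫ t in Ioc (0:ℝ) 1, p t) = ∫ t in Ioc (0:ℝ) 1, q t) :
    (∫ t in Ioc (0:ℝ) 1, (p t)^2) ≤ ∫ t in Ioc (0:ℝ) 1, (q t)^2 := by
  have hIocfin : ∀ a b : ℝ, volume (Ioc a b) < ⊤ := fun a b => by
    rw [Real.volume_Ioc]; exact ENNReal.ofReal_lt_top
  have hpm : Measurable p := hp_anti.measurable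
  have hqm : Measurable q := hq_anti.measurable
  have hpb : ∀ t, |p t| ≤ 1 := fun t => abs_le.2 ⟨by linarith [(hp_mem t).1], (hp_mem t).2⟩
  have hqb : ∀ t, |q t| ≤ 1 := fun t => abs_le.2 ⟨by linarith [(hq_mem t).1], (hq_mem t).2⟩
  -- the measurable "hypograph" set
  set S : Set (ℝ × ℝ) := {z : ℝ × ℝ | z.2 ≤ p z.1} with hS_def
  have hS : MeasurableSet S := measurableSet_le measurable_snd (hpm.comp measurable_fst)
  set Φ : ℝ → ℝ → ℝ :=
    fun t c => S.indicator (fun _ => (1:ℝ)) (t, c) * (p t - q t) with hΦ_def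
  haveI : IsFiniteMeasure (volume.restrict (Ioc (0:ℝ) 1)) := by
    constructor; rw [Measure.restrict_apply_univ]; exact hIocfin 0 1
  -- step 1 : inner integral in c
  have step1 : ∀ t : ℝ, (∫ c in Ioc (0:ℝ) 1, Φ t c) = p t * (p t - q t) := by
    intro t
    have e1 : (fun c => Φ t c)
        = fun c => (Iic (p t)).indicator (fun _ => (1:ℝ)) c * (p t - q t) := by
      funext c
      by_cases h : c ≤ p t
      · simp [hΦ_def, hS_def, h, indicator_of_mem, mem_Iic.2 h]
      · simp [hΦ_def, hS_def, h]
    rw [e1, integral_mul_const, integral_indicator measurableSet_Iic]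
    have e3 : Iic (p t) ∩ Ioc (0:ℝ) 1 = Ioc (0:ℝ) (p t) := by
      ext x
      simp only [mem_inter_iff, mem_Iic, mem_Ioc]
      constructor
      · rintro ⟨h1, h2, h3⟩; exact ⟨h2, h1⟩
      · rintro ⟨h1, h2⟩; exact ⟨h2, h1, h2.trans (hp_mem t).2⟩
    rw [MeasureTheory.setIntegral_const, measureReal_def, Measure.restrict_apply' measurableSet_Ioc, e3]
    rw [Real.volume_Ioc, sub_zero, ENNReal.toReal_ofReal (hp_mem t).1]
    simp
  -- integrability on the product
  have hΦmeas : Measurable (Function.uncurry Φ) := by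
    have : Function.uncurry Φ = fun z : ℝ × ℝ =>
        S.indicator (fun _ => (1:ℝ)) (z.1, z.2) * (p z.1 - q z.1) := rfl
    rw [this]
    apply Measurable.mul
    · have h1 : Measurable (S.indicator (fun _ => (1:ℝ))) := measurable_const.indicator hS
      exact h1.comp (measurable_fst.prodMk measurable_snd)
    · exact (hpm.comp measurable_fst).sub (hqm.comp measurable_fst)
  have hΦint : Integrable (Function.uncurry Φ)
      ((volume.restrict (Ioc (0:ℝ) 1)).prod (volume.restrict (Ioc (0:ℝ) 1))) := by
    apply Integrable.mono' (g := fun _ => (1:ℝ)) (integrable_const 1)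
      hΦmeas.aestronglyMeasurable
    apply ae_of_all
    rintro ⟨t, c⟩
    have h1 : |S.indicator (fun _ => (1:ℝ)) (t, c)| ≤ 1 := by
      by_cases h : (t, c) ∈ S <;> simp [h]
    have h2 : |p t - q t| ≤ 1 := by
      have := (hp_mem t).1; have := (hp_mem t).2
      have := (hq_mem t).1; have := (hq_mem t).2
      rw [abs_le]; constructor <;> linarith
    calc ‖Function.uncurry Φ (t, c)‖ = |S.indicator (fun _ => (1:ℝ)) (t, c)| * |p t - q t| := by
          rw [Function.uncurry]; simp [hΦ_def, abs_mul]
      _ ≤ 1 * 1 := mul_le_mul h1 h2 (abs_nonneg _) zero_le_one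
      _ = 1 := by ring
  -- step 2 : the inner integral in t, for each c, is ≤ 0
  have step2 : ∀ c : ℝ, (∫ t in Ioc (0:ℝ) 1, Φ t c) ≤ 0 := by
    intro c
    set A : Set ℝ := {t | c ≤ p t} with hA_def
    have hA : MeasurableSet A := measurableSet_le measurable_const hpm
    have e1 : (fun t => Φ t c) = A.indicator (fun t => p t - q t) := by
      funext t
      by_cases h : c ≤ p t
      · simp [hΦ_def, hS_def, h, hA_def]
      · simp [hΦ_def, hS_def, h, hA_def]
    rw [e1, integral_indicator hA, Measure.restrict_restrict hA]
    set B : Set ℝ := A ∩ Ioc (0:ℝ) 1 with hB_def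
    rcases eq_empty_or_nonempty B with hBe | hBne
    · rw [hBe]; simp
    · have hBbd : BddAbove B := ⟨1, fun b hb => hb.2.2⟩
      set τ : ℝ := sSup B with hτ_def
      have hτ1 : τ ≤ 1 := csSup_le hBne (fun b hb => hb.2.2)
      obtain ⟨b0, hb0⟩ := hBne
      have hτ0 : 0 < τ := lt_of_lt_of_le hb0.2.1 (le_csSup hBbd hb0)
      have hBsub : B ⊆ Ioc 0 τ := fun b hb => ⟨hb.2.1, le_csSup hBbd hb⟩
      have hsub2 : Ioo 0 τ ⊆ B := by
        intro t ht
        obtain ⟨b, hbB, htb⟩ := exists_lt_of_lt_csSup ⟨b0, hb0⟩ ht.2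
        refine ⟨?_, ht.1, le_trans (le_of_lt htb) hbB.2.2⟩
        exact le_trans hbB.1 (hp_anti htb.le)
      have hae : B =ᵐ[volume] Ioc (0:ℝ) τ := by
        rw [Filter.eventuallyEq_set]
        have hτne : ∀ᵐ t : ℝ, t ≠ τ := by
          rw [ae_iff]
          have : {t : ℝ | ¬ t ≠ τ} = {τ} := by ext t; simp
          rw [this]; simp
        filter_upwards [hτne] with t htne
        constructor
        · intro htB; exact hBsub htB
        · intro htIoc
          exact hsub2 ⟨htIoc.1, lt_of_le_of_ne htIoc.2 htne⟩
      rw [setIntegral_congr_set hae]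
      have hip : IntegrableOn p (Ioc (0:ℝ) τ) volume :=
        intOn_bdd hpm.aestronglyMeasurable hpb (hIocfin _ _)
      have hiq : IntegrableOn q (Ioc (0:ℝ) τ) volume :=
        intOn_bdd hqm.aestronglyMeasurable hqb (hIocfin _ _)
      rw [integral_sub hip hiq, sub_nonpos]
      rcases eq_or_lt_of_le hτ1 with h1 | h1
      · rw [h1]; exact le_of_eq heq
      · exact hpq τ ⟨hτ0, h1⟩
  -- Fubini
  have swap := integral_integral_swap hΦint
  have e4 : (∫ t in Ioc (0:ℝ) 1, p t * (p t - q t)) ≤ 0 := by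
    have e5 : (∫ t in Ioc (0:ℝ) 1, p t * (p t - q t))
        = ∫ t in Ioc (0:ℝ) 1, (∫ c in Ioc (0:ℝ) 1, Φ t c) := by
      apply integral_congr_ae
      exact ae_of_all _ (fun t => (step1 t).symm)
    rw [e5, swap]
    apply integral_nonpos_of_ae
    exact ae_of_all _ (fun c => step2 c)
  -- conclude
  have hint_p2 : IntegrableOn (fun t => (p t)^2) (Ioc (0:ℝ) 1) volume := by
    refine intOn_bdd (M := 1) (hpm.pow_const 2).aestronglyMeasurable (fun t => ?_) (hIocfin _ _)
    rw [abs_pow]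
    calc |p t|^2 ≤ 1^2 := by apply pow_le_pow_left₀ (abs_nonneg _) (hpb t)
      _ = 1 := one_pow 2
  have hint_q2 : IntegrableOn (fun t => (q t)^2) (Ioc (0:ℝ) 1) volume := by
    refine intOn_bdd (M := 1) (hqm.pow_const 2).aestronglyMeasurable (fun t => ?_) (hIocfin _ _)
    rw [abs_pow]
    calc |q t|^2 ≤ 1^2 := by apply pow_le_pow_left₀ (abs_nonneg _) (hqb t)
      _ = 1 := one_pow 2
  have hint_pp : IntegrableOn (fun t => 2 * (p t * (p t - q t))) (Ioc (0:ℝ) 1) volume := by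
    refine intOn_bdd (M := 4)
      ((measurable_const.mul (hpm.mul (hpm.sub hqm))).aestronglyMeasurable) (fun t => ?_)
      (hIocfin _ _)
    have h1 := (hp_mem t).1; have h2 := (hp_mem t).2
    have h3 := (hq_mem t).1; have h4 := (hq_mem t).2
    rw [abs_le]
    constructor <;> nlinarith
  have hint_rhs : IntegrableOn (fun t => (q t)^2 + 2 * (p t * (p t - q t))) (Ioc (0:ℝ) 1)
      volume := hint_q2.add hint_pp
  have pointwise : ∀ t, (p t)^2 ≤ (q t)^2 + 2 * (p t * (p t - q t)) := by
    intro t; nlinarith [sq_nonneg (p t - q t)]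
  calc (∫ t in Ioc (0:ℝ) 1, (p t)^2)
      ≤ ∫ t in Ioc (0:ℝ) 1, ((q t)^2 + 2 * (p t * (p t - q t))) :=
        integral_mono hint_p2 hint_rhs pointwise
    _ = (∫ t in Ioc (0:ℝ) 1, (q t)^2) + 2 * ∫ t in Ioc (0:ℝ) 1, (p t * (p t - q t)) := by
        rw [integral_add hint_q2 hint_pp, MeasureTheory.integral_const_mul]
    _ ≤ ∫ t in Ioc (0:ℝ) 1, (q t)^2 := by linarith

/-- level sets above 1 are null for an a.e.-bounded measurable function -/
lemma lvl_gt_one_null {f : ℝ → ℝ}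
    (hf_bd : ∀ᵐ t ∂(volume.restrict (Ioc (0:ℝ) 1)), f t ∈ Icc (0:ℝ) 1)
    {c : ℝ} (hc : 1 < c) : (volume.restrict (Ioc (0:ℝ) 1)) {t | c ≤ f t} = 0 := by
  have h0 : (volume.restrict (Ioc (0:ℝ) 1)) {t | ¬ f t ∈ Icc (0:ℝ) 1} = 0 := by
    rw [← ae_iff]; exact hf_bd
  apply measure_mono_null _ h0
  intro t ht
  simp only [mem_setOf_eq, mem_Icc, not_and_or, not_le]
  right; exact lt_of_lt_of_le hc ht

section Inner

variable {f fs : ℝ → ℝ}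

/-- clamped rearrangement is a.e. equal to the rearrangement on `[0,1]` -/
lemma clamped_ae_eq (hfm : Measurable f) (hfs : IsDecRearrangement f fs)
    (hf_bd : ∀ᵐ t ∂(volume.restrict (Ioc (0:ℝ) 1)), f t ∈ Icc (0:ℝ) 1) :
    ∀ᵐ t ∂(volume.restrict (Icc (0:ℝ) 1)), cl (fs (cl t)) = fs t := by
  obtain ⟨hfs_anti, hfs_lvl⟩ := hfs
  haveI : IsFiniteMeasure (volume.restrict (Icc (0:ℝ) 1)) := by
    constructor; rw [Measure.restrict_apply_univ]; simp
  have hIccuniv : (volume.restrict (Icc (0:ℝ) 1)) univ = 1 := by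
    rw [Measure.restrict_apply_univ, Real.volume_Icc]; norm_num
  have hlvl_f_gt : ∀ c : ℝ, 1 < c → volume {s ∈ Icc (0:ℝ) 1 | c ≤ f s} = 0 := by
    intro c hc
    have e : {s ∈ Icc (0:ℝ) 1 | c ≤ f s} = {t | c ≤ f t} ∩ Icc (0:ℝ) 1 := by
      ext t; simp [and_comm]
    rw [e, vol_inter_Icc_eq_Ioc, ← m01_apply]
    exact lvl_gt_one_null hf_bd hc
  -- a.e. fs ≤ 1 on [0,1]
  have h_le1 : ∀ᵐ t ∂(volume.restrict (Icc (0:ℝ) 1)), fs t ≤ 1 := by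
    rw [ae_iff]
    rw [Measure.restrict_apply' measurableSet_Icc]
    have hsub : {t | ¬ fs t ≤ 1} ∩ Icc (0:ℝ) 1
        ⊆ ⋃ n : ℕ, {s ∈ Icc (0:ℝ) 1 | 1 + 1/(n+1) ≤ fs s} := by
      rintro t ⟨ht1, ht2⟩
      simp only [mem_setOf_eq, not_le] at ht1
      obtain ⟨n, hn⟩ := exists_nat_one_div_lt (show (0:ℝ) < fs t - 1 by linarith)
      exact mem_iUnion.2 ⟨n, ht2, by push_cast at hn ⊢; linarith⟩
    apply measure_mono_null hsub
    apply measure_iUnion_null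
    intro n
    rw [hfs_lvl]
    apply hlvl_f_gt
    have : (0:ℝ) < 1/(n+1) := by positivity
    linarith
  -- a.e. 0 ≤ fs on [0,1]
  have hfull_f : volume {s ∈ Icc (0:ℝ) 1 | 0 ≤ f s} = 1 := by
    have e : {s ∈ Icc (0:ℝ) 1 | 0 ≤ f s} = {t | 0 ≤ f t} ∩ Icc (0:ℝ) 1 := by
      ext t; simp [and_comm]
    rw [e, vol_inter_Icc_eq_Ioc, ← m01_apply]
    have hc : (volume.restrict (Ioc (0:ℝ) 1)) {t | ¬ (0 ≤ f t)} = 0 := by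
      apply measure_mono_null _ (by rw [← ae_iff]; exact hf_bd)
      intro t ht
      simp only [mem_setOf_eq, mem_Icc, not_and_or, not_le] at *
      left; exact ht
    have hm : MeasurableSet {t | 0 ≤ f t} := measurableSet_le measurable_const hfm
    have hcm := measure_compl (μ := volume.restrict (Ioc (0:ℝ) 1)) hm (measure_ne_top _ _)
    have huniv : (volume.restrict (Ioc (0:ℝ) 1)) univ = 1 := by
      rw [Measure.restrict_apply_univ, Real.volume_Ioc]; norm_num
    have hcompl : {t | 0 ≤ f t}ᶜ = {t | ¬ (0 ≤ f t)} := rfl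
    rw [hcompl, hc, huniv] at hcm
    have hle : (volume.restrict (Ioc (0:ℝ) 1)) {t | 0 ≤ f t} ≤ 1 := by
      rw [← huniv]; exact measure_mono (subset_univ _)
    exact le_antisymm hle (tsub_eq_zero_iff_le.1 hcm.symm)
  have hfull_fs : volume {s ∈ Icc (0:ℝ) 1 | 0 ≤ fs s} = 1 := by
    rw [hfs_lvl 0]; exact hfull_f
  have h_ge0 : ∀ᵐ t ∂(volume.restrict (Icc (0:ℝ) 1)), 0 ≤ fs t := by
    have hfs_meas : AEMeasurable fs (volume.restrict (Icc (0:ℝ) 1)) :=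
      aemeasurable_restrict_of_antitoneOn measurableSet_Icc hfs_anti
    obtain ⟨fm, hfm_m, hfm_ae⟩ := hfs_meas
    have hsets : {t | 0 ≤ fm t} =ᵐ[volume.restrict (Icc (0:ℝ) 1)] {t | 0 ≤ fs t} := by
      rw [Filter.eventuallyEq_set]
      filter_upwards [hfm_ae] with t ht
      simp [ht]
    have h1 : (volume.restrict (Icc (0:ℝ) 1)) {t | 0 ≤ fm t} = 1 := by
      rw [measure_congr hsets, Measure.restrict_apply' measurableSet_Icc]
      have e : {t | 0 ≤ fs t} ∩ Icc (0:ℝ) 1 = {s ∈ Icc (0:ℝ) 1 | 0 ≤ fs s} := by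
        ext t; simp [and_comm]
      rw [e]; exact hfull_fs
    have hm : MeasurableSet {t | 0 ≤ fm t} := measurableSet_le measurable_const hfm_m
    have hcm := measure_compl (μ := volume.restrict (Icc (0:ℝ) 1)) hm (measure_ne_top _ _)
    rw [h1, hIccuniv, tsub_self] at hcm
    have hae_fm : ∀ᵐ t ∂(volume.restrict (Icc (0:ℝ) 1)), 0 ≤ fm t := by
      rw [ae_iff]
      have : {t | ¬ (0 ≤ fm t)} = {t | 0 ≤ fm t}ᶜ := rfl
      rw [this, hcm]
    filter_upwards [hae_fm, hfm_ae] with t h1' h2'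
    rw [h2']; exact h1'
  filter_upwards [h_le1, h_ge0, ae_restrict_mem measurableSet_Icc] with t h1 h0 hIcc
  rw [cl_eq hIcc, cl_eq ⟨h0, h1⟩]


lemma level_p_f {f fs : ℝ → ℝ} (hfm : Measurable f) (hfs : IsDecRearrangement f fs)
    (hf_bd : ∀ᵐ t ∂(volume.restrict (Ioc (0:ℝ) 1)), f t ∈ Icc (0:ℝ) 1)
    {c : ℝ} (hc : 0 < c) :
    (volume.restrict (Ioc (0:ℝ) 1)) {t | c ≤ cl (fs (cl t))}
      = (volume.restrict (Ioc (0:ℝ) 1)) {t | c ≤ f t} := by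
  rcases le_or_gt c 1 with hc1 | hc1
  · have base := level_transfer hfs.2 c
    rw [← base, m01_apply, m01_apply]
    congr 1
    ext t
    simp only [mem_inter_iff, mem_setOf_eq, mem_Ioc]
    constructor
    · rintro ⟨h1, h2⟩
      refine ⟨?_, h2⟩
      rw [cl_eq ⟨h2.1.le, h2.2⟩] at h1
      exact (le_cl_iff hc hc1).1 h1
    · rintro ⟨h1, h2⟩
      refine ⟨?_, h2⟩
      rw [cl_eq ⟨h2.1.le, h2.2⟩]
      exact (le_cl_iff hc hc1).2 h1
  · have h1 : {t | c ≤ cl (fs (cl t))} = ∅ := by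
      apply eq_empty_iff_forall_notMem.2
      intro t ht
      have := (cl_mem (fs (cl t))).2
      simp only [mem_setOf_eq] at ht
      linarith
    rw [h1]
    rw [lvl_gt_one_null hf_bd hc1]
    simp

lemma F_transfer {f fs : ℝ → ℝ} (hfm : Measurable f) (hfs : IsDecRearrangement f fs)
    (hf_bd : ∀ᵐ t ∂(volume.restrict (Ioc (0:ℝ) 1)), f t ∈ Icc (0:ℝ) 1)
    {x : ℝ} (hx : x ∈ Icc (0:ℝ) 1) :
    (∫ t in (0:ℝ)..x, fs t) = ∫ t in Ioc (0:ℝ) x, cl (fs (cl t)) := by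
  rw [intervalIntegral.integral_of_le hx.1]
  apply integral_congr_ae
  have hmono : volume.restrict (Ioc (0:ℝ) x) ≤ volume.restrict (Icc (0:ℝ) 1) := by
    apply Measure.restrict_mono _ le_rfl
    intro t ht
    exact ⟨ht.1.le, ht.2.trans hx.2⟩
  have h := ae_mono hmono (clamped_ae_eq hfm hfs hf_bd)
  filter_upwards [h] with t ht
  exact ht.symm

lemma inner_le {f g : ℝ → ℝ} (hfm : Measurable f) (hgm : Measurable g)
    (hf_bd : ∀ᵐ t ∂(volume.restrict (Ioc (0:ℝ) 1)), f t ∈ Icc (0:ℝ) 1)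
    (hg_bd : ∀ᵐ t ∂(volume.restrict (Ioc (0:ℝ) 1)), g t ∈ Icc (0:ℝ) 1)
    (hs : SchurLE f g) :
    (∫ t in Ioc (0:ℝ) 1, (f t)^2) ≤ ∫ t in Ioc (0:ℝ) 1, (g t)^2 := by
  obtain ⟨fs, gs, hfs, hgs, hFG, hfg_int⟩ := hs
  set p : ℝ → ℝ := fun t => cl (fs (cl t)) with hp_def
  set q : ℝ → ℝ := fun t => cl (gs (cl t)) with hq_def
  have hp_anti : Antitone p := fun a b hab =>
    cl_mono (hfs.1 (cl_mem a) (cl_mem b) (cl_mono hab))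
  have hq_anti : Antitone q := fun a b hab =>
    cl_mono (hgs.1 (cl_mem a) (cl_mem b) (cl_mono hab))
  have hp_mem : ∀ t, p t ∈ Icc (0:ℝ) 1 := fun t => cl_mem _
  have hq_mem : ∀ t, q t ∈ Icc (0:ℝ) 1 := fun t => cl_mem _
  have hlvl_f : ∀ c : ℝ, 0 < c → (volume.restrict (Ioc (0:ℝ) 1)) {t | c ≤ p t}
      = (volume.restrict (Ioc (0:ℝ) 1)) {t | c ≤ f t} := fun c hc =>
    level_p_f hfm hfs hf_bd hc
  have hlvl_g : ∀ c : ℝ, 0 < c → (volume.restrict (Ioc (0:ℝ) 1)) {t | c ≤ q t}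
      = (volume.restrict (Ioc (0:ℝ) 1)) {t | c ≤ g t} := fun c hc =>
    level_p_f hgm hgs hg_bd hc
  have hp0 : 0 ≤ᵐ[volume.restrict (Ioc (0:ℝ) 1)] p := ae_of_all _ (fun t => (hp_mem t).1)
  have hq0 : 0 ≤ᵐ[volume.restrict (Ioc (0:ℝ) 1)] q := ae_of_all _ (fun t => (hq_mem t).1)
  have hf0 : 0 ≤ᵐ[volume.restrict (Ioc (0:ℝ) 1)] f := hf_bd.mono (fun t ht => ht.1)
  have hg0 : 0 ≤ᵐ[volume.restrict (Ioc (0:ℝ) 1)] g := hg_bd.mono (fun t ht => ht.1)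
  have heq' : (∫ t in Ioc (0:ℝ) 1, p t) = ∫ t in Ioc (0:ℝ) 1, q t := by
    have h1 := integral_eq_of_levels hp_anti.measurable.aemeasurable hfm.aemeasurable
      hp0 hf0 hlvl_f
    have h2 := integral_eq_of_levels hq_anti.measurable.aemeasurable hgm.aemeasurable
      hq0 hg0 hlvl_g
    rw [intervalIntegral.integral_of_le zero_le_one,
        intervalIntegral.integral_of_le zero_le_one] at hfg_int
    rw [h1, h2]
    exact hfg_int
  have hpq' : ∀ x ∈ Ioo (0:ℝ) 1, (∫ t in Ioc (0:ℝ) x, p t) ≤ ∫ t in Ioc (0:ℝ) x, q t := by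
    intro x hx
    rw [← F_transfer hfm hfs hf_bd ⟨hx.1.le, hx.2.le⟩,
        ← F_transfer hgm hgs hg_bd ⟨hx.1.le, hx.2.le⟩]
    exact hFG x hx
  have hkey := key_ineq hp_anti hq_anti hp_mem hq_mem hpq' heq'
  have e1 := integral_sq_eq_of_levels hp_anti.measurable.aemeasurable hfm.aemeasurable
    hp0 hf0 hlvl_f
  have e2 := integral_sq_eq_of_levels hq_anti.measurable.aemeasurable hgm.aemeasurable
    hq0 hg0 hlvl_g
  calc (∫ t in Ioc (0:ℝ) 1, (f t)^2) = ∫ t in Ioc (0:ℝ) 1, (p t)^2 := e1.symm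
    _ ≤ ∫ t in Ioc (0:ℝ) 1, (q t)^2 := hkey
    _ = ∫ t in Ioc (0:ℝ) 1, (g t)^2 := e2


end Inner

lemma deriv_sec_eq {C : ℝ → ℝ → ℝ} {v : ℝ} (hv : v ∈ Icc (0:ℝ) 1) {t : ℝ}
    (ht : t ∈ Ioo (0:ℝ) 1) : deriv (fun s => C s v) t = deriv (sec C v) t := by
  apply Filter.EventuallyEq.deriv_eq
  filter_upwards [Icc_mem_nhds ht.1 ht.2] with s hs
  exact (sec_eq hv hs).symm

/-- absolute Lipschitz bounds -/
lemma copula_absdiff1 {C : ℝ → ℝ → ℝ} (hC : IsCopula C) {v : ℝ} (hv : v ∈ Icc (0:ℝ) 1)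
    {u u' : ℝ} (hu : u ∈ Icc (0:ℝ) 1) (hu' : u' ∈ Icc (0:ℝ) 1) :
    |C u v - C u' v| ≤ |u - u'| := by
  rcases le_total u u' with h | h
  · have h1 := copula_mono1 hC hv hu hu' h
    have h2 := copula_lip1 hC hv hu hu' h
    rw [abs_sub_comm, abs_of_nonneg (by linarith), abs_sub_comm, abs_of_nonneg (by linarith)]
    linarith
  · have h1 := copula_mono1 hC hv hu' hu h
    have h2 := copula_lip1 hC hv hu' hu h
    rw [abs_of_nonneg (by linarith), abs_of_nonneg (by linarith)]
    linarith

lemma copula_absdiff2 {C : ℝ → ℝ → ℝ} (hC : IsCopula C) {u : ℝ} (hu : u ∈ Icc (0:ℝ) 1)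
    {v v' : ℝ} (hv : v ∈ Icc (0:ℝ) 1) (hv' : v' ∈ Icc (0:ℝ) 1) :
    |C u v - C u v'| ≤ |v - v'| := by
  rcases le_total v v' with h | h
  · have h1 := copula_mono2 hC hu hv hv' h
    have h2 := copula_lip2 hC hu hv hv' h
    rw [abs_sub_comm, abs_of_nonneg (by linarith), abs_sub_comm, abs_of_nonneg (by linarith)]
    linarith
  · have h1 := copula_mono2 hC hu hv' hv h
    have h2 := copula_lip2 hC hu hv' hv h
    rw [abs_of_nonneg (by linarith), abs_of_nonneg (by linarith)]
    linarith

lemma Dc_cont {C : ℝ → ℝ → ℝ} (hC : IsCopula C) :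
    Continuous (fun z : ℝ × ℝ => C (cl z.1) (cl z.2)) := by
  apply LipschitzWith.continuous (K := 2)
  apply LipschitzWith.of_dist_le_mul
  intro z w
  have h1 : |C (cl z.1) (cl z.2) - C (cl w.1) (cl z.2)| ≤ |cl z.1 - cl w.1| :=
    copula_absdiff1 hC (cl_mem z.2) (cl_mem z.1) (cl_mem w.1)
  have h2 : |C (cl w.1) (cl z.2) - C (cl w.1) (cl w.2)| ≤ |cl z.2 - cl w.2| :=
    copula_absdiff2 hC (cl_mem w.1) (cl_mem z.2) (cl_mem w.2)
  have h3 := cl_dist z.1 w.1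
  have h4 := cl_dist z.2 w.2
  have h5 : dist z.1 w.1 ≤ dist z w := le_max_left _ _
  have h6 : dist z.2 w.2 ≤ dist z w := le_max_right _ _
  rw [Real.dist_eq] at h5 h6 ⊢
  have htri : |C (cl z.1) (cl z.2) - C (cl w.1) (cl w.2)|
      ≤ |C (cl z.1) (cl z.2) - C (cl w.1) (cl z.2)|
        + |C (cl w.1) (cl z.2) - C (cl w.1) (cl w.2)| := abs_sub_le _ _ _
  push_cast
  linarith

def qn (C : ℝ → ℝ → ℝ) (n : ℕ) : ℝ × ℝ → ℝ :=
  fun z => cl ((n+1) * (C (cl (z.1 + 1/(n+1))) (cl z.2) - C (cl z.1) (cl z.2)))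

def phi (C : ℝ → ℝ → ℝ) : ℝ × ℝ → ℝ :=
  fun z => (Filter.limsup (fun n => ENNReal.ofReal (qn C n z)) Filter.atTop).toReal

lemma qn_cont {C : ℝ → ℝ → ℝ} (hC : IsCopula C) (n : ℕ) : Continuous (qn C n) := by
  apply cl_continuous.comp
  apply Continuous.mul continuous_const
  apply Continuous.sub
  · exact (Dc_cont hC).comp ((continuous_fst.add continuous_const).prodMk continuous_snd)
  · exact Dc_cont hC
    
lemma phi_meas {C : ℝ → ℝ → ℝ} (hC : IsCopula C) : Measurable (phi C) := by
  apply ENNReal.measurable_toReal.comp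
  apply Measurable.limsup
  intro n
  exact ENNReal.measurable_ofReal.comp (qn_cont hC n).measurable

lemma phi_mem {C : ℝ → ℝ → ℝ} (z : ℝ × ℝ) : phi C z ∈ Icc (0:ℝ) 1 := by
  refine ⟨ENNReal.toReal_nonneg, ?_⟩
  apply ENNReal.toReal_le_of_le_ofReal zero_le_one
  rw [ENNReal.ofReal_one]
  apply Filter.limsup_le_of_le (by isBoundedDefault)
  apply Eventually.of_forall
  intro n
  rw [← ENNReal.ofReal_one]
  exact ENNReal.ofReal_le_ofReal (cl_mem _).2

lemma phi_eq {C : ℝ → ℝ → ℝ} (hC : IsCopula C) {v : ℝ} (hv : v ∈ Icc (0:ℝ) 1) :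
    ∀ᵐ t : ℝ, t ∈ Ioo (0:ℝ) 1 → phi C (t, v) = deriv (fun s => C s v) t := by
  filter_upwards [deriv_mem_of_monotone_lip (sec_mono hC v) (sec_lip hC v)] with t ht htIoo
  obtain ⟨hdiff, hd01⟩ := ht
  set d := deriv (sec C v) t with hd_def
  have hs := hasDerivAt_iff_tendsto_slope.1 hdiff.hasDerivAt
  have hpos : ∀ n : ℕ, (0:ℝ) < 1/(n+1) := fun n => by positivity
  have hseq : Tendsto (fun n : ℕ => t + 1/(n+1)) atTop (nhdsWithin t {t}ᶜ) := by
    apply tendsto_nhdsWithin_of_tendsto_nhds_of_eventually_within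
    · have := tendsto_one_div_add_atTop_nhds_zero_nat (𝕜 := ℝ)
      have h2 : Tendsto (fun n : ℕ => t + 1/(n+1)) atTop (nhds (t + 0)) :=
        tendsto_const_nhds.add (by exact_mod_cast this)
      simpa using h2
    · apply Eventually.of_forall
      intro n
      simp only [mem_compl_iff, mem_singleton_iff]
      have := hpos n
      intro hcon
      nlinarith [hcon]
  have h1 : Tendsto (fun n : ℕ => slope (sec C v) t (t + 1/(n+1))) atTop (nhds d) :=
    hs.comp hseq
  have h2 : ∀ n : ℕ, slope (sec C v) t (t + 1/(n+1))
      = ((n:ℝ)+1) * (sec C v (t + 1/(n+1)) - sec C v t) := by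
    intro n
    rw [slope_def_field]
    have hne : ((n:ℝ)+1) ≠ 0 := by positivity
    field_simp
    ring
  have h3 : Tendsto (fun n : ℕ => qn C n (t, v)) atTop (nhds d) := by
    have e : ∀ n : ℕ, qn C n (t, v) = cl (slope (sec C v) t (t + 1/(n+1))) := by
      intro n
      rw [h2 n]
      rfl
    have h4 : Tendsto (fun n : ℕ => cl (slope (sec C v) t (t + 1/(n+1)))) atTop (nhds (cl d)) :=
      (cl_continuous.tendsto d).comp h1
    rw [cl_eq hd01] at h4
    exact h4.congr (fun n => (e n).symm)
  have h5 : Tendsto (fun n : ℕ => ENNReal.ofReal (qn C n (t, v))) atTop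
      (nhds (ENNReal.ofReal d)) := (ENNReal.continuous_ofReal.tendsto d).comp h3
  have h6 : Filter.limsup (fun n : ℕ => ENNReal.ofReal (qn C n (t, v))) atTop
      = ENNReal.ofReal d := h5.limsup_eq
  rw [phi, h6, ENNReal.toReal_ofReal hd01.1, deriv_sec_eq hv htIoo]


lemma inner_eq {C : ℝ → ℝ → ℝ} (hC : IsCopula C) {v : ℝ} (hv : v ∈ Icc (0:ℝ) 1) :
    (∫ t in (0:ℝ)..1, (deriv (fun s => C s v) t)^2)
      = ∫ t in Ioc (0:ℝ) 1, (phi C (t, v))^2 := by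
  rw [intervalIntegral.integral_of_le zero_le_one]
  apply integral_congr_ae
  have h3 : ∀ᵐ t ∂(volume.restrict (Ioc (0:ℝ) 1)), t ∈ Ioo (0:ℝ) 1 := by
    filter_upwards [ae_restrict_mem measurableSet_Ioc, ae_ne_one_restrict (Ioc (0:ℝ) 1)]
      with t ht hne
    exact ⟨ht.1, lt_of_le_of_ne ht.2 hne⟩
  filter_upwards [ae_restrict_of_ae (phi_eq hC hv), h3] with t ht hIoo
  rw [ht hIoo]

lemma psi_meas {C : ℝ → ℝ → ℝ} (hC : IsCopula C) :
    Measurable (fun v => ∫ t in Ioc (0:ℝ) 1, (phi C (t, v))^2) := by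
  have h : StronglyMeasurable
      (Function.uncurry (fun v t => (phi C (t, v))^2)) := by
    apply Measurable.stronglyMeasurable
    have e : Function.uncurry (fun v t => (phi C (t, v))^2)
        = fun z : ℝ × ℝ => (phi C (z.2, z.1))^2 := rfl
    rw [e]
    exact ((phi_meas hC).comp (measurable_snd.prodMk measurable_fst)).pow_const 2
  exact (h.integral_prod_right (ν := volume.restrict (Ioc (0:ℝ) 1))).measurable

lemma xi_inner_intble {C : ℝ → ℝ → ℝ} (hC : IsCopula C) :
    IntervalIntegrable (fun v => ∫ t in (0:ℝ)..1, (deriv (fun s => C s v) t)^2)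
      volume 0 1 := by
  rw [intervalIntegrable_iff_integrableOn_Ioc_of_le zero_le_one]
  haveI : IsFiniteMeasure (volume.restrict (Ioc (0:ℝ) 1)) := m01_finite
  have hψint : Integrable (fun v => ∫ t in Ioc (0:ℝ) 1, (phi C (t, v))^2)
      (volume.restrict (Ioc (0:ℝ) 1)) := by
    apply Integrable.mono' (g := fun _ => (1:ℝ)) (integrable_const 1)
      (psi_meas hC).aestronglyMeasurable
    apply ae_of_all
    intro v
    have hb : ∀ᵐ t ∂(volume.restrict (Ioc (0:ℝ) 1)), ‖(phi C (t, v))^2‖ ≤ 1 := by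
      apply ae_of_all
      intro t
      rw [Real.norm_eq_abs, abs_pow]
      calc |phi C (t, v)|^2 ≤ 1^2 := by
            apply pow_le_pow_left₀ (abs_nonneg _)
            rw [abs_le]
            exact ⟨by linarith [(phi_mem (C := C) (t, v)).1], (phi_mem (C := C) (t, v)).2⟩
        _ = 1 := one_pow 2
    have := norm_integral_le_of_norm_le_const hb
    have huniv : ((volume.restrict (Ioc (0:ℝ) 1)) univ).toReal = 1 := by
      rw [Measure.restrict_apply_univ, Real.volume_Ioc]
      norm_num
    rw [measureReal_def, huniv, mul_one] at this
    exact this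
  apply hψint.congr
  filter_upwards [ae_restrict_mem measurableSet_Ioc] with v hv
  exact (inner_eq hC ⟨hv.1.le, hv.2⟩).symm

end XiAux

open XiAux

/-- Chatterjee's `ξ` is monotone with respect to the Schur order for copula derivatives. -/
theorem xi_mono_schur (D E : ℝ → ℝ → ℝ) (hD : IsCopula D) (hE : IsCopula E)
    (h : SchurDerivLE D E) : xi D ≤ xi E := by
  have hD1 : ∀ v ∈ Icc (0:ℝ) 1, (∫ t in (0:ℝ)..1, (deriv (fun s => D s v) t)^2)
      ≤ ∫ t in (0:ℝ)..1, (deriv (fun s => E s v) t)^2 := by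
    intro v hv
    rw [intervalIntegral.integral_of_le zero_le_one,
        intervalIntegral.integral_of_le zero_le_one]
    exact inner_le (measurable_deriv _) (measurable_deriv _)
      (deriv_orig_ae hD hv) (deriv_orig_ae hE hv) (h v hv)
  have hmono := intervalIntegral.integral_mono_on zero_le_one
    (xi_inner_intble hD) (xi_inner_intble hE) hD1
  unfold xi
  linarith

end
end

section
/- Let C be a stochastically increasing bivariate copula and, for p ∈ [0,1], define C_p : [0,1]² → [0,1] by C_p(u,v) = C(u,v) for 0 ≤ u ≤ 1−p and C_p(u,v) = C(1−p, v) + v − C(2−p−u, v) for 1−p < u ≤ 1. Then: (i) each C_p is a bivariate copula; (ii) C_0 = C and C_1(u,v) = v − C(1−u,v); (iii) for each fixed (u,v) ∈ [0,1]², the map p ↦ C_p(u,v) is monotone and continuous on [0,1]. -/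
open MeasureTheory Real Set

noncomputable section

/-- The shuffle `C_p` of a copula `C`:
`C_p(u,v) = C(u,v)` for `u ≤ 1-p` and `C_p(u,v) = C(1-p,v) + v - C(2-p-u,v)` otherwise. -/
def shuffle (C : ℝ → ℝ → ℝ) (p u v : ℝ) : ℝ :=
  if u ≤ 1 - p then C u v else C (1-p) v + v - C (2-p-u) v

/-- A concavity inequality: for a concave function on `[0,1]`, increments over intervals
further to the right are smaller. -/
lemma concave_increment_le (h : ℝ → ℝ) (hcon : ConcaveOn ℝ (Icc (0:ℝ) 1) h)
    {t t' c : ℝ} (ht : t ∈ Icc (0:ℝ) 1) (htc : t' + c ∈ Icc (0:ℝ) 1)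
    (hle : t ≤ t') (hc : 0 ≤ c) :
    h t + h (t' + c) ≤ h t' + h (t + c) := by
  rcases eq_or_lt_of_le (show t ≤ t' + c by linarith) with heq | hlt
  · have h1 : t' = t := le_antisymm (by linarith) hle
    have h2 : c = 0 := by linarith
    subst h1; subst h2
    simp
  · have hd0 : t' + c - t ≠ 0 := by linarith
    have hdpos : (0:ℝ) < t' + c - t := by linarith
    have hl : (0:ℝ) ≤ c / (t' + c - t) := div_nonneg hc hdpos.le
    have hm : (0:ℝ) ≤ (t' - t) / (t' + c - t) := div_nonneg (by linarith) hdpos.le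
    have hsum : c / (t' + c - t) + (t' - t) / (t' + c - t) = 1 := by
      field_simp
      ring
    have i1 := hcon.2 ht htc hl hm hsum
    have i2 := hcon.2 ht htc hm hl (by linarith)
    have e1 : (c / (t' + c - t)) • t + ((t' - t) / (t' + c - t)) • (t' + c) = t' := by
      simp only [smul_eq_mul]; field_simp; ring
    have e2 : ((t' - t) / (t' + c - t)) • t + (c / (t' + c - t)) • (t' + c) = t + c := by
      simp only [smul_eq_mul]; field_simp; ring
    rw [e1] at i1
    rw [e2] at i2
    simp only [smul_eq_mul] at i1 i2
    have e3 : c / (t' + c - t) * h t + (t' - t) / (t' + c - t) * h t = h t := by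
      rw [← add_mul, hsum, one_mul]
    have e4 : c / (t' + c - t) * h (t' + c) + (t' - t) / (t' + c - t) * h (t' + c)
        = h (t' + c) := by
      rw [← add_mul, hsum, one_mul]
    linarith

/-- Shuffling lemma: for an SI copula `C`, each `C_p` is a copula, `C_0 = C` and
`C_1(u,v) = v - C(1-u,v)` on `[0,1]²`, and `p ↦ C_p(u,v)` is monotone (antitone) and
continuous on `[0,1]`. -/
theorem shuffle_properties (C : ℝ → ℝ → ℝ) (hC : IsCopula C)
    (hSI : ∀ v ∈ Icc (0:ℝ) 1, ConcaveOn ℝ (Icc (0:ℝ) 1) (fun u => C u v)) :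
    (∀ p ∈ Icc (0:ℝ) 1, IsCopula (shuffle C p)) ∧
    (∀ u ∈ Icc (0:ℝ) 1, ∀ v ∈ Icc (0:ℝ) 1, shuffle C 0 u v = C u v) ∧
    (∀ u ∈ Icc (0:ℝ) 1, ∀ v ∈ Icc (0:ℝ) 1, shuffle C 1 u v = v - C (1-u) v) ∧
    (∀ u ∈ Icc (0:ℝ) 1, ∀ v ∈ Icc (0:ℝ) 1,
      AntitoneOn (fun p => shuffle C p u v) (Icc (0:ℝ) 1) ∧
      ContinuousOn (fun p => shuffle C p u v) (Icc (0:ℝ) 1)) := by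
  obtain ⟨hrng, hu0, h0v, hu1, h1v, h2⟩ := hC
  have h0mem : (0:ℝ) ∈ Icc (0:ℝ) 1 := ⟨le_refl 0, zero_le_one⟩
  have h1mem : (1:ℝ) ∈ Icc (0:ℝ) 1 := ⟨zero_le_one, le_refl 1⟩
  -- monotonicity in the first variable
  have hmono : ∀ v ∈ Icc (0:ℝ) 1, ∀ s ∈ Icc (0:ℝ) 1, ∀ t ∈ Icc (0:ℝ) 1,
      s ≤ t → C s v ≤ C t v := by
    intro v hv s hs t ht hst
    have := h2 s t 0 v hs ht h0mem hv hst hv.1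
    have e1 := hu0 s hs
    have e2 := hu0 t ht
    linarith
  -- Lipschitz bound in the first variable
  have hlip : ∀ v ∈ Icc (0:ℝ) 1, ∀ s ∈ Icc (0:ℝ) 1, ∀ t ∈ Icc (0:ℝ) 1,
      s ≤ t → C t v - C s v ≤ t - s := by
    intro v hv s hs t ht hst
    have := h2 s t v 1 hs ht hv h1mem hst hv.2
    have e1 := hu1 s hs
    have e2 := hu1 t ht
    linarith
  refine ⟨?_, ?_, ?_, ?_⟩
  · -- each C_p is a copula
    intro p hp
    have h1p : (1:ℝ) - p ∈ Icc (0:ℝ) 1 := ⟨by linarith [hp.2], by linarith [hp.1]⟩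
    refine ⟨?_, ?_, ?_, ?_, ?_, ?_⟩
    · intro u hu v hv
      unfold shuffle
      split_ifs with h
      · exact hrng u hu v hv
      · push_neg at h
        have hs : (2:ℝ) - p - u ∈ Icc (0:ℝ) 1 := ⟨by linarith [hp.2, hu.2], by linarith⟩
        have b1 : 0 ≤ C (1-p) v := by
          have := hmono v hv 0 h0mem (1-p) h1p h1p.1
          rw [h0v v hv] at this; exact this
        have b2 : C (2-p-u) v ≤ v := by
          have := hmono v hv (2-p-u) hs 1 h1mem hs.2
          rw [h1v v hv] at this; exact this
        have b3 : C (1-p) v ≤ C (2-p-u) v :=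
          hmono v hv (1-p) h1p (2-p-u) hs (by linarith [hu.2])
        exact ⟨by linarith, by linarith [hv.2]⟩
    · intro u hu
      unfold shuffle
      split_ifs with h
      · exact hu0 u hu
      · push_neg at h
        have hs : (2:ℝ) - p - u ∈ Icc (0:ℝ) 1 := ⟨by linarith [hp.2, hu.2], by linarith⟩
        rw [hu0 _ h1p, hu0 _ hs]; ring
    · intro v hv
      unfold shuffle
      rw [if_pos (show (0:ℝ) ≤ 1 - p by linarith [hp.2])]
      exact h0v v hv
    · intro u hu
      unfold shuffle
      split_ifs with h
      · exact hu1 u hu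
      · push_neg at h
        have hs : (2:ℝ) - p - u ∈ Icc (0:ℝ) 1 := ⟨by linarith [hp.2, hu.2], by linarith⟩
        rw [hu1 _ h1p, hu1 _ hs]; ring
    · intro v hv
      unfold shuffle
      split_ifs with h
      · have hp0 : p = 0 := by linarith [hp.1]
        subst hp0; exact h1v v hv
      · rw [show (2:ℝ) - p - 1 = 1 - p by ring]; ring
    · intro u u' v v' hu hu' hv hv' huu hvv
      unfold shuffle
      by_cases hA : u' ≤ 1 - p
      · have hB : u ≤ 1 - p := le_trans huu hA
        rw [if_pos hA, if_pos hA, if_pos hB, if_pos hB]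
        exact h2 u u' v v' hu hu' hv hv' huu hvv
      · push_neg at hA
        have hs' : (2:ℝ) - p - u' ∈ Icc (0:ℝ) 1 := ⟨by linarith [hp.2, hu'.2], by linarith⟩
        by_cases hB : u ≤ 1 - p
        · rw [if_neg (not_le.mpr hA), if_neg (not_le.mpr hA), if_pos hB, if_pos hB]
          have i1 := h2 u (1-p) v v' hu h1p hv hv' hB hvv
          have i2 := h2 (2-p-u') 1 v v' hs' h1mem hv hv' hs'.2 hvv
          have e1 := h1v v hv
          have e2 := h1v v' hv'
          linarith
        · push_neg at hB
          have hs : (2:ℝ) - p - u ∈ Icc (0:ℝ) 1 := ⟨by linarith [hp.2, hu.2], by linarith⟩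
          rw [if_neg (not_le.mpr hA), if_neg (not_le.mpr hA),
            if_neg (not_le.mpr hB), if_neg (not_le.mpr hB)]
          have := h2 (2-p-u') (2-p-u) v v' hs' hs hv hv' (by linarith) hvv
          linarith
  · -- C_0 = C
    intro u hu v hv
    unfold shuffle
    rw [if_pos (show u ≤ 1 - 0 by linarith [hu.2])]
  · -- C_1
    intro u hu v hv
    unfold shuffle
    by_cases h : u ≤ 1 - (1:ℝ)
    · have hu0' : u = 0 := le_antisymm (by linarith) hu.1
      subst hu0'
      rw [if_pos h, h0v v hv, show (1:ℝ) - 0 = 1 by norm_num, h1v v hv]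
      ring
    · rw [if_neg h, show (1:ℝ) - 1 = 0 by norm_num, h0v v hv,
        show (2:ℝ) - 1 - u = 1 - u by ring]
      ring
  · -- antitone and continuous in p
    intro u hu v hv
    have hequiv : ∀ p ∈ Icc (0:ℝ) 1,
        shuffle C p u v = C (min u (1-p)) v + (v - C (min 1 (2-p-u)) v) := by
      intro p hp
      unfold shuffle
      split_ifs with h
      · rw [min_eq_left h, min_eq_left (show (1:ℝ) ≤ 2 - p - u by linarith), h1v v hv]
        ring
      · push_neg at h
        rw [min_eq_right h.le, min_eq_right (show (2:ℝ) - p - u ≤ 1 by linarith [hu.2])]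
        ring
    constructor
    · -- antitone
      intro p hp p' hp' hpp'
      simp only
      rw [hequiv p hp, hequiv p' hp']
      have haa' : min u (1-p') ≤ min u (1-p) :=
        min_le_min (le_refl u) (by linarith)
      have hb : min 1 (2-p-u) = min u (1-p) + (1-u) := by
        rcases le_total u (1-p) with h | h
        · rw [min_eq_left h, min_eq_left (show (1:ℝ) ≤ 2 - p - u by linarith)]
          ring
        · rw [min_eq_right h, min_eq_right (show (2:ℝ) - p - u ≤ 1 by linarith)]
          ring
      have hb' : min 1 (2-p'-u) = min u (1-p') + (1-u) := by
        rcases le_total u (1-p') with h | h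
        · rw [min_eq_left h, min_eq_left (show (1:ℝ) ≤ 2 - p' - u by linarith)]
          ring
        · rw [min_eq_right h, min_eq_right (show (2:ℝ) - p' - u ≤ 1 by linarith)]
          ring
      have ha'mem : min u (1-p') ∈ Icc (0:ℝ) 1 :=
        ⟨le_min hu.1 (by linarith [hp'.2]), le_trans (min_le_left _ _) hu.2⟩
      have hamem : min u (1-p) ∈ Icc (0:ℝ) 1 :=
        ⟨le_min hu.1 (by linarith [hp.2]), le_trans (min_le_left _ _) hu.2⟩
      have hbmem : min u (1-p) + (1-u) ∈ Icc (0:ℝ) 1 :=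
        ⟨by linarith [hamem.1, hu.2], by linarith [min_le_left u (1-p)]⟩
      have key := concave_increment_le (fun t => C t v) (hSI v hv)
        ha'mem hbmem haa' (by linarith [hu.2])
      rw [hb, hb']
      linarith
    · -- continuous
      have hlipv : LipschitzOnWith 1 (fun t => C t v) (Icc (0:ℝ) 1) := by
        apply LipschitzOnWith.of_dist_le_mul
        intro x hx y hy
        rw [NNReal.coe_one, one_mul, Real.dist_eq, Real.dist_eq]
        rcases le_total x y with h | h
        · have i1 := hlip v hv x hx y hy h
          have i2 := hmono v hv x hx y hy h
          have e1 : |C x v - C y v| = C y v - C x v := by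
            rw [abs_sub_comm]; exact abs_of_nonneg (by linarith)
          have e2 : |x - y| = y - x := by
            rw [abs_sub_comm]; exact abs_of_nonneg (by linarith)
          rw [e1, e2]; linarith
        · have i1 := hlip v hv y hy x hx h
          have i2 := hmono v hv y hy x hx h
          have e1 : |C x v - C y v| = C x v - C y v := abs_of_nonneg (by linarith)
          have e2 : |x - y| = x - y := abs_of_nonneg (by linarith)
          rw [e1, e2]; linarith
      have hcontC : ContinuousOn (fun t => C t v) (Icc (0:ℝ) 1) := hlipv.continuousOn
      have c1 : ContinuousOn (fun p : ℝ => C (min u (1-p)) v) (Icc (0:ℝ) 1) := by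
        apply hcontC.comp
        · exact (continuous_const.min (continuous_const.sub continuous_id)).continuousOn
        · intro p hp
          exact ⟨le_min hu.1 (by linarith [hp.2]),
            le_trans (min_le_right _ _) (by linarith [hp.1])⟩
      have c2 : ContinuousOn (fun p : ℝ => C (min 1 (2-p-u)) v) (Icc (0:ℝ) 1) := by
        apply hcontC.comp
        · exact (continuous_const.min
            ((continuous_const.sub continuous_id).sub continuous_const)).continuousOn
        · intro p hp
          exact ⟨le_min zero_le_one (by linarith [hp.2, hu.2]), min_le_left _ _⟩
      apply ContinuousOn.congr (c1.add (continuousOn_const.sub c2))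
      intro p hp
      exact hequiv p hp

end
end

section
/- Let v ∈ [0,1] and let h : [0,1] → [0,1] be a decreasing (antitone) function with ∫₀¹ h(t) dt = v. Then ∫₀¹ (2(1−t) h(t) − h(t)²) dt ≥ v(1−v), with equality if and only if h equals the indicator t ↦ 1_{[0,v]}(t) Lebesgue-almost everywhere or h equals the constant v Lebesgue-almost everywhere. -/
open MeasureTheory Real Set

noncomputable section

set_option maxHeartbeats 1000000 in
/-- For decreasing `h : [0,1] → [0,1]` with `∫₀¹ h = v`, one has
`∫₀¹ (2(1-t)h(t) - h(t)²) dt ≥ v(1-v)`, with equality iff `h = 1_{[0,v]}` a.e. or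
`h = v` a.e. on `[0,1]`. -/
theorem fanlorentz_ineq (v : ℝ) (hv : v ∈ Icc (0:ℝ) 1) (h : ℝ → ℝ)
    (hmono : AntitoneOn h (Icc (0:ℝ) 1))
    (hrange : ∀ t ∈ Icc (0:ℝ) 1, h t ∈ Icc (0:ℝ) 1)
    (hint : (∫ t in (0:ℝ)..1, h t) = v) :
    v * (1 - v) ≤ (∫ t in (0:ℝ)..1, (2 * (1 - t) * h t - h t ^ 2)) ∧
    ((∫ t in (0:ℝ)..1, (2 * (1 - t) * h t - h t ^ 2)) = v * (1 - v) ↔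
      ((∀ᵐ t ∂(volume.restrict (Icc (0:ℝ) 1)),
          h t = Set.indicator (Icc (0:ℝ) v) (fun _ => 1) t) ∨
       (∀ᵐ t ∂(volume.restrict (Icc (0:ℝ) 1)), h t = v))) := by
  obtain ⟨hv0, hv1⟩ := hv
  have h01 : (0:ℝ) ≤ 1 := by norm_num
  set μ : Measure ℝ := volume.restrict (Ioc (0:ℝ) 1) with hμdef
  have hμIcc : volume.restrict (Icc (0:ℝ) 1) = μ :=
    (Measure.restrict_congr_set Ioc_ae_eq_Icc).symm
  haveI hfin : IsFiniteMeasure μ := by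
    constructor
    rw [hμdef, Measure.restrict_apply_univ, Real.volume_Ioc]
    exact ENNReal.ofReal_lt_top
  have hIoc : IntegrableOn h (Ioc (0:ℝ) 1) volume :=
    (AntitoneOn.integrableOn_isCompact isCompact_Icc hmono).mono_set Ioc_subset_Icc_self
  have hInth : Integrable h μ := hIoc
  have hIv : ∫ t, h t ∂μ = v := by
    rw [hμdef, ← intervalIntegral.integral_of_le h01]; exact hint
  have hvm : v ∈ Icc (0:ℝ) 1 := ⟨hv0, hv1⟩
  have hv2m : v/2 ∈ Icc (0:ℝ) 1 := ⟨by linarith, by linarith⟩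
  have hm2 : (1+v)/2 ∈ Icc (0:ℝ) 1 := ⟨by linarith, by linarith⟩
  set c : ℝ := h v with hcdef
  set A : ℝ := h (v/2) with hAdef
  set B : ℝ := h ((1+v)/2) with hBdef
  have hcm : c ∈ Icc (0:ℝ) 1 := hrange v hvm
  have hAm : A ∈ Icc (0:ℝ) 1 := hrange _ hv2m
  have hBm : B ∈ Icc (0:ℝ) 1 := hrange _ hm2
  set e : ℝ → ℝ := (Ioc (0:ℝ) v).indicator (fun _ => 1) with hedef
  set Q : ℝ → ℝ := fun t => (h t - c) * (e t - h t)
      + (Ioc (0:ℝ) v).indicator (fun s => (v - 2*s) * (h s - A)) t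
      + (Ioc v 1).indicator (fun s => (1 + v - 2*s) * (h s - B)) t with hQdef
  set R : ℝ → ℝ := fun t => (1-v) * h t + c * (e t - h t)
      + (Ioc (0:ℝ) v).indicator (fun s => (v - 2*s) * A) t
      + (Ioc v 1).indicator (fun s => (1 + v - 2*s) * B) t with hRdef
  -- pointwise values of Q
  have hnotmem2 : ∀ t ∈ Ioc (0:ℝ) v, t ∉ Ioc v 1 := fun t ht hc =>
    absurd ht.2 (not_le.mpr hc.1)
  have hnotmem1 : ∀ t ∈ Ioc v 1, t ∉ Ioc (0:ℝ) v := fun t ht hc =>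
    absurd hc.2 (not_le.mpr ht.1)
  have hQval1 : ∀ t ∈ Ioc (0:ℝ) v,
      Q t = (h t - c) * (1 - h t) + (v - 2*t) * (h t - A) := by
    intro t ht
    simp only [hQdef, hedef, indicator_of_mem ht, indicator_of_notMem (hnotmem2 t ht)]
    ring
  have hQval2 : ∀ t ∈ Ioc v 1,
      Q t = (h t - c) * (0 - h t) + (1 + v - 2*t) * (h t - B) := by
    intro t ht
    simp only [hQdef, hedef, indicator_of_mem ht, indicator_of_notMem (hnotmem1 t ht)]
    ring
  -- nonnegativity of pieces
  have hH1 : ∀ t ∈ Ioc (0:ℝ) v, 0 ≤ (h t - c) * (1 - h t) := by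
    intro t ht
    have htI : t ∈ Icc (0:ℝ) 1 := ⟨ht.1.le, ht.2.trans hv1⟩
    have h1 : c ≤ h t := hmono htI hvm ht.2
    have h2 : h t ≤ 1 := (hrange t htI).2
    nlinarith
  have hH2 : ∀ t ∈ Ioc (0:ℝ) v, 0 ≤ (v - 2*t) * (h t - A) := by
    intro t ht
    have htI : t ∈ Icc (0:ℝ) 1 := ⟨ht.1.le, ht.2.trans hv1⟩
    rcases le_total t (v/2) with htc | htc
    · have := hmono htI hv2m htc
      have : A ≤ h t := this
      nlinarith
    · have := hmono hv2m htI htc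
      have : h t ≤ A := this
      nlinarith
  have hH3 : ∀ t ∈ Ioc v 1, 0 ≤ (h t - c) * (0 - h t) := by
    intro t ht
    have htI : t ∈ Icc (0:ℝ) 1 := ⟨hv0.trans ht.1.le, ht.2⟩
    have h1 : h t ≤ c := hmono hvm htI ht.1.le
    have h2 : 0 ≤ h t := (hrange t htI).1
    nlinarith
  have hH4 : ∀ t ∈ Ioc v 1, 0 ≤ (1 + v - 2*t) * (h t - B) := by
    intro t ht
    have htI : t ∈ Icc (0:ℝ) 1 := ⟨hv0.trans ht.1.le, ht.2⟩
    rcases le_total t ((1+v)/2) with htc | htc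
    · have : B ≤ h t := hmono htI hm2 htc
      nlinarith
    · have : h t ≤ B := hmono hm2 htI htc
      nlinarith
  have hQnonneg : ∀ t ∈ Ioc (0:ℝ) 1, 0 ≤ Q t := by
    intro t ht
    by_cases htv : t ≤ v
    · rw [hQval1 t ⟨ht.1, htv⟩]
      exact add_nonneg (hH1 t ⟨ht.1, htv⟩) (hH2 t ⟨ht.1, htv⟩)
    · rw [hQval2 t ⟨not_le.mp htv, ht.2⟩]
      exact add_nonneg (hH3 t ⟨not_le.mp htv, ht.2⟩) (hH4 t ⟨not_le.mp htv, ht.2⟩)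
  -- ae facts
  have haemem : ∀ᵐ t ∂μ, t ∈ Ioc (0:ℝ) 1 := by
    rw [hμdef]; exact ae_restrict_mem measurableSet_Ioc
  have haebd : ∀ᵐ t ∂μ, h t ∈ Icc (0:ℝ) 1 :=
    haemem.mono fun t ht => hrange t ⟨ht.1.le, ht.2⟩
  -- integrability
  have haeSM : AEStronglyMeasurable h μ := hInth.1
  have hIe : Integrable e μ := by
    rw [hedef]; exact (integrable_const (1:ℝ)).indicator measurableSet_Ioc
  have hQ1int : Integrable (fun t => (h t - c) * (e t - h t)) μ := by
    refine Integrable.bdd_mul (c := 2) (hIe.sub hInth)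
      (haeSM.sub aestronglyMeasurable_const) ?_
    filter_upwards [haebd] with t ht
    rw [Real.norm_eq_abs, abs_le]
    constructor
    · linarith [hcm.2, ht.1]
    · linarith [hcm.1, ht.2]
  have hQ2int : Integrable
      (fun t => (Ioc (0:ℝ) v).indicator (fun s => (v - 2*s) * (h s - A)) t) μ := by
    have hfuneq : (fun t => (Ioc (0:ℝ) v).indicator (fun s => (v - 2*s) * (h s - A)) t)
        = fun t => ((Ioc (0:ℝ) v).indicator (fun s => (v - 2*s)) t) * (h t - A) := by
      funext t
      by_cases ht : t ∈ Ioc (0:ℝ) v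
      · rw [indicator_of_mem ht, indicator_of_mem ht]
      · rw [indicator_of_notMem ht, indicator_of_notMem ht, zero_mul]
    rw [hfuneq]
    refine Integrable.bdd_mul (c := 2) (hInth.sub (integrable_const A)) ?_ ?_
    · exact ((measurable_const.sub (measurable_id.const_mul 2)).indicator
        measurableSet_Ioc).aestronglyMeasurable
    · refine ae_of_all _ fun t => ?_
      by_cases ht : t ∈ Ioc (0:ℝ) v
      · rw [indicator_of_mem ht, Real.norm_eq_abs, abs_le]
        obtain ⟨ht1, ht2⟩ := ht
        constructor <;> [linarith; linarith]
      · rw [indicator_of_notMem ht]; norm_num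
  have hQ3int : Integrable
      (fun t => (Ioc v 1).indicator (fun s => (1 + v - 2*s) * (h s - B)) t) μ := by
    have hfuneq : (fun t => (Ioc v 1).indicator (fun s => (1 + v - 2*s) * (h s - B)) t)
        = fun t => ((Ioc v 1).indicator (fun s => (1 + v - 2*s)) t) * (h t - B) := by
      funext t
      by_cases ht : t ∈ Ioc v 1
      · rw [indicator_of_mem ht, indicator_of_mem ht]
      · rw [indicator_of_notMem ht, indicator_of_notMem ht, zero_mul]
    rw [hfuneq]
    refine Integrable.bdd_mul (c := 2) (hInth.sub (integrable_const B)) ?_ ?_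
    · exact ((measurable_const.sub (measurable_id.const_mul 2)).indicator
        measurableSet_Ioc).aestronglyMeasurable
    · refine ae_of_all _ fun t => ?_
      by_cases ht : t ∈ Ioc v 1
      · rw [indicator_of_mem ht, Real.norm_eq_abs, abs_le]
        obtain ⟨ht1, ht2⟩ := ht
        constructor <;> [linarith; linarith]
      · rw [indicator_of_notMem ht]; norm_num
  have hQint : Integrable Q μ := by
    rw [hQdef]; exact (hQ1int.add hQ2int).add hQ3int
  have hR1int : Integrable (fun t => (1-v) * h t) μ := hInth.const_mul _
  have hR2int : Integrable (fun t => c * (e t - h t)) μ := (hIe.sub hInth).const_mul _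
  have hR3int : Integrable
      (fun t => (Ioc (0:ℝ) v).indicator (fun s => (v - 2*s) * A) t) μ := by
    refine Integrable.mono' (integrable_const (2:ℝ)) ?_ (ae_of_all _ fun t => ?_)
    · exact (((measurable_const.sub (measurable_id.const_mul 2)).mul
        measurable_const).indicator measurableSet_Ioc).aestronglyMeasurable
    · by_cases ht : t ∈ Ioc (0:ℝ) v
      · rw [indicator_of_mem ht, Real.norm_eq_abs, abs_mul]
        have h1 : |v - 2*t| ≤ 2 := by
          rw [abs_le]; obtain ⟨ht1, ht2⟩ := ht; constructor <;> [linarith; linarith]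
        have h2 : |A| ≤ 1 := by rw [abs_le]; exact ⟨by linarith [hAm.1], hAm.2⟩
        nlinarith [abs_nonneg (v - 2*t), abs_nonneg A]
      · rw [indicator_of_notMem ht]; norm_num
  have hR4int : Integrable
      (fun t => (Ioc v 1).indicator (fun s => (1 + v - 2*s) * B) t) μ := by
    refine Integrable.mono' (integrable_const (2:ℝ)) ?_ (ae_of_all _ fun t => ?_)
    · exact (((measurable_const.sub (measurable_id.const_mul 2)).mul
        measurable_const).indicator measurableSet_Ioc).aestronglyMeasurable
    · by_cases ht : t ∈ Ioc v 1
      · rw [indicator_of_mem ht, Real.norm_eq_abs, abs_mul]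
        have h1 : |1 + v - 2*t| ≤ 2 := by
          rw [abs_le]; obtain ⟨ht1, ht2⟩ := ht; constructor <;> [linarith; linarith]
        have h2 : |B| ≤ 1 := by rw [abs_le]; exact ⟨by linarith [hBm.1], hBm.2⟩
        nlinarith [abs_nonneg (1 + v - 2*t), abs_nonneg B]
      · rw [indicator_of_notMem ht]; norm_num
  have hRint : Integrable R μ := by
    rw [hRdef]; exact ((hR1int.add hR2int).add hR3int).add hR4int
  -- value of ∫ R
  have hIe_val : ∫ t, e t ∂μ = v := by
    rw [hedef, hμdef, integral_indicator_const (1:ℝ) measurableSet_Ioc,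
      measureReal_restrict_apply measurableSet_Ioc,
      inter_eq_left.mpr (Ioc_subset_Ioc_right hv1), Real.volume_real_Ioc_of_le hv0]
    rw [smul_eq_mul, mul_one, sub_zero]
  have hind1_val : ∫ t, (Ioc (0:ℝ) v).indicator (fun s => (v - 2*s) * A) t ∂μ = 0 := by
    rw [hμdef, integral_indicator measurableSet_Ioc,
      Measure.restrict_restrict measurableSet_Ioc,
      inter_eq_left.mpr (Ioc_subset_Ioc_right hv1),
      ← intervalIntegral.integral_of_le hv0, intervalIntegral.integral_mul_const]
    have hz : ∫ t in (0:ℝ)..v, (v - 2*t) = 0 := by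
      rw [intervalIntegral.integral_sub intervalIntegrable_const
        ((by fun_prop : Continuous (fun t : ℝ => 2*t)).intervalIntegrable _ _),
        intervalIntegral.integral_const_mul, integral_id]
      simp; ring
    rw [hz, zero_mul]
  have hind2_val : ∫ t, (Ioc v 1).indicator (fun s => (1 + v - 2*s) * B) t ∂μ = 0 := by
    rw [hμdef, integral_indicator measurableSet_Ioc,
      Measure.restrict_restrict measurableSet_Ioc,
      inter_eq_left.mpr (Ioc_subset_Ioc_left hv0),
      ← intervalIntegral.integral_of_le hv1, intervalIntegral.integral_mul_const]
    have hz : ∫ t in v..1, (1 + v - 2*t) = 0 := by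
      rw [intervalIntegral.integral_sub intervalIntegrable_const
        ((by fun_prop : Continuous (fun t : ℝ => 2*t)).intervalIntegrable _ _),
        intervalIntegral.integral_const_mul, integral_id]
      simp; ring
    rw [hz, zero_mul]
  have hR12int : Integrable (fun t => (1-v) * h t + c * (e t - h t)) μ :=
    hR1int.add hR2int
  have hR123int : Integrable (fun t => (1-v) * h t + c * (e t - h t)
      + (Ioc (0:ℝ) v).indicator (fun s => (v - 2*s) * A) t) μ :=
    hR12int.add hR3int
  have hRval : ∫ t, R t ∂μ = v * (1 - v) := by
    simp only [hRdef]
    rw [integral_add hR123int hR4int, integral_add hR12int hR3int,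
      integral_add hR1int hR2int]
    rw [integral_const_mul, integral_const_mul, integral_sub hIe hInth, hIe_val, hIv,
      hind1_val, hind2_val]
    ring
  -- master identity
  have hQR : ∀ t ∈ Ioc (0:ℝ) 1, 2 * (1 - t) * h t - h t ^ 2 = Q t + R t := by
    intro t ht
    by_cases htv : t ≤ v
    · have ht1 : t ∈ Ioc (0:ℝ) v := ⟨ht.1, htv⟩
      simp only [hQdef, hRdef, hedef, indicator_of_mem ht1,
        indicator_of_notMem (hnotmem2 t ht1)]
      ring
    · have ht2 : t ∈ Ioc v 1 := ⟨not_le.mp htv, ht.2⟩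
      simp only [hQdef, hRdef, hedef, indicator_of_mem ht2,
        indicator_of_notMem (hnotmem1 t ht2)]
      ring
  have hkey : (∫ t in (0:ℝ)..1, (2 * (1 - t) * h t - h t ^ 2))
      = (∫ t, Q t ∂μ) + v * (1 - v) := by
    rw [intervalIntegral.integral_of_le h01, ← hμdef, ← hRval,
      ← integral_add hQint hRint]
    exact integral_congr_ae (haemem.mono fun t ht => hQR t ht)
  have hQInonneg : 0 ≤ ∫ t, Q t ∂μ := by
    rw [hμdef]; exact setIntegral_nonneg measurableSet_Ioc hQnonneg
  constructor
  · rw [hkey]; linarith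
  constructor
  · -- equality → a.e. characterization
    intro hEq
    have hQzero : ∫ t, Q t ∂μ = 0 := by rw [hkey] at hEq; linarith
    have hQ0 : ∀ᵐ t ∂μ, Q t = 0 := by
      have := (integral_eq_zero_iff_of_nonneg_ae
        (haemem.mono fun t ht => hQnonneg t ht) hQint).mp hQzero
      filter_upwards [this] with t ht
      simpa using ht
    have hne : ∀ᵐ t ∂μ, t ≠ v/2 ∧ t ≠ (1+v)/2 := by
      rw [hμdef]
      refine ae_restrict_of_ae ?_
      have h1 : (volume : Measure ℝ) {x : ℝ | ¬(x ≠ v/2 ∧ x ≠ (1+v)/2)} = 0 := by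
        have : {x : ℝ | ¬(x ≠ v/2 ∧ x ≠ (1+v)/2)} ⊆ {v/2} ∪ {(1+v)/2} := by
          intro x hx
          simp only [mem_setOf_eq, not_and_or, not_ne_iff] at hx
          rcases hx with hx | hx
          · exact Or.inl (by simp [hx])
          · exact Or.inr (by simp [hx])
        refine measure_mono_null this ?_
        rw [measure_union_null_iff]
        exact ⟨measure_singleton _, measure_singleton _⟩
      exact ae_iff.mpr h1
    have haeA : ∀ᵐ t ∂μ, t ∈ Ioc (0:ℝ) v → h t = A := by
      filter_upwards [hQ0, hne] with t hQt hnet htm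
      have hval := hQval1 t htm
      rw [hval] at hQt
      have h2 : (v - 2*t) * (h t - A) = 0 := by
        linarith [hH1 t htm, hH2 t htm]
      have h3 : v - 2*t ≠ 0 := fun hc => hnet.1 (by linarith)
      rcases mul_eq_zero.mp h2 with h4 | h4
      · exact absurd h4 h3
      · linarith
    have haeB : ∀ᵐ t ∂μ, t ∈ Ioc v 1 → h t = B := by
      filter_upwards [hQ0, hne] with t hQt hnet htm
      have hval := hQval2 t htm
      rw [hval] at hQt
      have h2 : (1 + v - 2*t) * (h t - B) = 0 := by
        linarith [hH3 t htm, hH4 t htm]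
      have h3 : 1 + v - 2*t ≠ 0 := fun hc => hnet.2 (by linarith)
      rcases mul_eq_zero.mp h2 with h4 | h4
      · exact absurd h4 h3
      · linarith
    have haeT1 : ∀ᵐ t ∂μ, t ∈ Ioc (0:ℝ) v → (h t - c) * (1 - h t) = 0 := by
      filter_upwards [hQ0] with t hQt htm
      rw [hQval1 t htm] at hQt
      linarith [hH1 t htm, hH2 t htm]
    have haeT3 : ∀ᵐ t ∂μ, t ∈ Ioc v 1 → (h t - c) * (0 - h t) = 0 := by
      filter_upwards [hQ0] with t hQt htm
      rw [hQval2 t htm] at hQt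
      linarith [hH3 t htm, hH4 t htm]
    -- the averaged equation
    have hres1 : volume.restrict (Ioc (0:ℝ) v) ≤ μ := by
      rw [hμdef]; exact Measure.restrict_mono (Ioc_subset_Ioc_right hv1) le_rfl
    have hres2 : volume.restrict (Ioc v 1) ≤ μ := by
      rw [hμdef]; exact Measure.restrict_mono (Ioc_subset_Ioc_left hv0) le_rfl
    have hA_on : ∫ t in Ioc (0:ℝ) v, h t = A * v := by
      have haeA' : ∀ᵐ t ∂volume.restrict (Ioc (0:ℝ) v), h t = A := by
        filter_upwards [ae_restrict_mem measurableSet_Ioc,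
          haeA.filter_mono (ae_mono hres1)] with t h1 h2
        exact h2 h1
      rw [integral_congr_ae haeA', setIntegral_const, Real.volume_real_Ioc_of_le hv0, sub_zero,
        smul_eq_mul, mul_comm]
    have hB_on : ∫ t in Ioc v 1, h t = B * (1 - v) := by
      have haeB' : ∀ᵐ t ∂volume.restrict (Ioc v 1), h t = B := by
        filter_upwards [ae_restrict_mem measurableSet_Ioc,
          haeB.filter_mono (ae_mono hres2)] with t h1 h2
        exact h2 h1
      rw [integral_congr_ae haeB', setIntegral_const, Real.volume_real_Ioc_of_le hv1,
        smul_eq_mul, mul_comm]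
    have hsum : A * v + B * (1 - v) = v := by
      have hsplit : ∫ t, h t ∂μ = (∫ t in Ioc (0:ℝ) v, h t) + ∫ t in Ioc v 1, h t := by
        rw [hμdef, ← Ioc_union_Ioc_eq_Ioc hv0 hv1]
        exact setIntegral_union (Ioc_disjoint_Ioc_of_le le_rfl) measurableSet_Ioc
          (hIoc.mono_set (Ioc_subset_Ioc_right hv1))
          (hIoc.mono_set (Ioc_subset_Ioc_left hv0))
      rw [hsplit, hA_on, hB_on] at hIv
      linarith
    -- case analysis
    rcases eq_or_lt_of_le hv0 with hveq | hvpos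
    · -- v = 0
      right
      rw [hμIcc]
      have hB0 : B = 0 := by rw [← hveq] at hsum; linarith
      filter_upwards [haeB, haemem] with t hB' hm
      have htm : t ∈ Ioc v 1 := by rw [← hveq]; exact hm
      rw [hB' htm, hB0, ← hveq]
    rcases eq_or_lt_of_le hv1 with hveq1 | hvlt
    · -- v = 1
      right
      rw [hμIcc]
      have hA1 : A = 1 := by rw [hveq1] at hsum; linarith
      filter_upwards [haeA, haemem] with t hA' hm
      have htm : t ∈ Ioc (0:ℝ) v := by rw [hveq1]; exact hm
      rw [hA' htm, hA1, hveq1]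
    · -- 0 < v < 1
      have hprop1 : (A - c) * (1 - A) = 0 := by
        haveI hNB : (ae (volume.restrict (Ioc (0:ℝ) v))).NeBot := by
          refine ae_neBot.mpr ?_
          rw [Ne, Measure.restrict_eq_zero, Real.volume_Ioc]
          simp only [sub_zero, ENNReal.ofReal_eq_zero, not_le]
          exact hvpos
        have hae' : ∀ᵐ t ∂volume.restrict (Ioc (0:ℝ) v),
            t ∈ Ioc (0:ℝ) v ∧ (t ∈ Ioc (0:ℝ) v → h t = A) ∧
            (t ∈ Ioc (0:ℝ) v → (h t - c) * (1 - h t) = 0) := by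
          filter_upwards [ae_restrict_mem measurableSet_Ioc,
            haeA.filter_mono (ae_mono hres1), haeT1.filter_mono (ae_mono hres1)]
            with t h1 h2 h3
          exact ⟨h1, h2, h3⟩
        obtain ⟨t, htm, hA', hT'⟩ := hae'.exists
        have := hT' htm
        rw [hA' htm] at this
        exact this
      have hprop2 : (B - c) * (0 - B) = 0 := by
        haveI hNB : (ae (volume.restrict (Ioc v 1))).NeBot := by
          refine ae_neBot.mpr ?_
          rw [Ne, Measure.restrict_eq_zero, Real.volume_Ioc]
          simp only [ENNReal.ofReal_eq_zero, not_le]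
          linarith
        have hae' : ∀ᵐ t ∂volume.restrict (Ioc v 1),
            t ∈ Ioc v 1 ∧ (t ∈ Ioc v 1 → h t = B) ∧
            (t ∈ Ioc v 1 → (h t - c) * (0 - h t) = 0) := by
          filter_upwards [ae_restrict_mem measurableSet_Ioc,
            haeB.filter_mono (ae_mono hres2), haeT3.filter_mono (ae_mono hres2)]
            with t h1 h2 h3
          exact ⟨h1, h2, h3⟩
        obtain ⟨t, htm, hB', hT'⟩ := hae'.exists
        have := hT' htm
        rw [hB' htm] at this
        exact this
      have hindcase : A = 1 → B = 0 →
          ∀ᵐ t ∂μ, h t = (Icc (0:ℝ) v).indicator (fun _ => (1:ℝ)) t := by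
        intro hA1' hB0'
        filter_upwards [haeA, haeB, haemem] with t hA' hB' hm
        by_cases htv : t ≤ v
        · rw [hA' ⟨hm.1, htv⟩, hA1',
            indicator_of_mem (Set.mem_Icc.mpr ⟨hm.1.le, htv⟩)]
        · rw [hB' ⟨not_le.mp htv, hm.2⟩, hB0',
            indicator_of_notMem (fun hc => htv hc.2)]
      rcases mul_eq_zero.mp hprop1 with hA1 | hA1 <;>
        rcases mul_eq_zero.mp hprop2 with hB1 | hB1
      · -- A = c, B = c : constant case
        right
        rw [hμIcc]
        have hAB : A = B := by linarith
        have hAv : A = v := by linear_combination hsum + (1 - v) * hAB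
        filter_upwards [haeA, haeB, haemem] with t hA' hB' hm
        by_cases htv : t ≤ v
        · rw [hA' ⟨hm.1, htv⟩, hAv]
        · rw [hB' ⟨not_le.mp htv, hm.2⟩, ← hAB, hAv]
      · -- A = c, B = 0
        left
        rw [hμIcc]
        have hB0' : B = 0 := by linarith
        have hA1' : A = 1 := by
          have hmul : A * v = 1 * v := by
            linear_combination hsum - (1 - v) * hB0'
          exact mul_right_cancel₀ (ne_of_gt hvpos) hmul
        exact hindcase hA1' hB0'
      · -- A = 1, B = c
        left
        rw [hμIcc]
        have hA1' : A = 1 := by linarith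
        have hB0' : B = 0 := by
          have hmul : B * (1 - v) = 0 * (1 - v) := by
            linear_combination hsum + v * hA1
          exact mul_right_cancel₀ (by linarith : (1:ℝ) - v ≠ 0) hmul
        exact hindcase hA1' hB0'
      · -- A = 1, B = 0
        left
        rw [hμIcc]
        exact hindcase (by linarith) (by linarith)
  · -- a.e. characterization → equality
    intro hcase
    rw [hμIcc] at hcase
    rcases hcase with hcase | hcase
    · -- indicator case
      have hcong : (fun t => 2 * (1 - t) * h t - h t ^ 2)
          =ᵐ[μ] (Icc (0:ℝ) v).indicator (fun t => 1 - 2*t) := by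
        filter_upwards [hcase] with t ht
        by_cases hmem : t ∈ Icc (0:ℝ) v
        · rw [ht, indicator_of_mem hmem, indicator_of_mem hmem]; ring
        · rw [ht, indicator_of_notMem hmem, indicator_of_notMem hmem]; ring
      rw [intervalIntegral.integral_of_le h01, ← hμdef, integral_congr_ae hcong,
        hμdef, integral_indicator measurableSet_Icc,
        Measure.restrict_restrict measurableSet_Icc]
      have hIcap : Icc (0:ℝ) v ∩ Ioc 0 1 = Ioc (0:ℝ) v := by
        ext t
        constructor
        · rintro ⟨⟨_, h2⟩, h3, _⟩; exact ⟨h3, h2⟩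
        · rintro ⟨h1, h2⟩; exact ⟨⟨h1.le, h2⟩, h1, h2.trans hv1⟩
      rw [hIcap, ← intervalIntegral.integral_of_le hv0]
      have hz : ∫ t in (0:ℝ)..v, (1 - 2*t) = v - v^2 := by
        rw [intervalIntegral.integral_sub intervalIntegrable_const
          ((by fun_prop : Continuous (fun t : ℝ => 2*t)).intervalIntegrable _ _),
          intervalIntegral.integral_const_mul, integral_id]
        simp; ring
      rw [hz]; ring
    · -- constant case
      have hcong : (fun t => 2 * (1 - t) * h t - h t ^ 2)
          =ᵐ[μ] fun t => 2 * (1 - t) * v - v ^ 2 := by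
        filter_upwards [hcase] with t ht
        rw [ht]
      rw [intervalIntegral.integral_of_le h01, ← hμdef, integral_congr_ae hcong,
        hμdef, ← intervalIntegral.integral_of_le h01]
      have hz : ∫ t in (0:ℝ)..1, (2*(1-t)*v - v^2) = v - v^2 := by
        have heq : (fun t : ℝ => 2*(1-t)*v - v^2) = fun t => (2*v - v^2) - (2*v)*t := by
          funext t; ring
        rw [heq, intervalIntegral.integral_sub intervalIntegrable_const
          ((by fun_prop : Continuous (fun t : ℝ => (2*v)*t)).intervalIntegrable _ _),
          intervalIntegral.integral_const_mul, integral_id]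
        simp; ring
      rw [hz]; ring


end
end

section
/- Define f : [0,1] → [0,1] by f(u) = u for u ∈ [0,1/4] ∪ (3/4,1], f(u) = u + 1/4 for u ∈ (1/4,1/2], and f(u) = u − 1/4 for u ∈ (1/2,3/4], and define C(u,v) = λ({t ∈ [0,u] : f(t) ≤ v}) for (u,v) ∈ [0,1]², where λ is Lebesgue measure. Then C is a bivariate copula satisfying C(u,v) ≥ uv for all (u,v) ∈ [0,1]² (C is positively lower orthant dependent), ξ(C) = 1, and ρ(C) = 13/16. In particular, positive lower orthant dependence does not imply ξ(C) ≤ ρ(C). -/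
open MeasureTheory Real Set

noncomputable section

/-- The piecewise shift `f` of Example: `f(u) = u` on `[0,1/4] ∪ (3/4,1]`,
`f(u) = u + 1/4` on `(1/4,1/2]`, `f(u) = u - 1/4` on `(1/2,3/4]`. -/
def fEx (u : ℝ) : ℝ :=
  if u ≤ 1/4 then u
  else if u ≤ 1/2 then u + 1/4
  else if u ≤ 3/4 then u - 1/4
  else u

/-- The copula of `(U, f(U))`: `C(u,v) = λ({t ∈ [0,u] : f(t) ≤ v})`. -/
def CEx (u v : ℝ) : ℝ :=
  (volume {t : ℝ | t ∈ Icc 0 u ∧ fEx t ≤ v}).toReal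

def mm (u w c : ℝ) : ℝ := max 0 (min u w - c)

def Cf (u v : ℝ) : ℝ :=
  mm u (min v (1/4)) 0 + mm u (min (v - 1/4) (1/2)) (1/4)
    + mm u (min (v + 1/4) (3/4)) (1/2) + mm u v (3/4)

lemma setEq (u v : ℝ) : {t : ℝ | t ∈ Icc 0 u ∧ fEx t ≤ v} =
    ((Icc 0 (min u (min v (1/4))) ∪ Ioc (1/4) (min u (min (v - 1/4) (1/2))))
      ∪ Ioc (1/2) (min u (min (v + 1/4) (3/4)))) ∪ Ioc (3/4) (min u v) := by
  ext t
  simp only [mem_setOf_eq, mem_Icc, mem_Ioc, mem_union, le_min_iff, fEx]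
  split_ifs with h1 h2 h3
  · constructor
    · rintro ⟨⟨h0, hu⟩, hv⟩
      exact Or.inl (Or.inl (Or.inl ⟨h0, hu, hv, h1⟩))
    · rintro (((⟨h0, hu, hv, _⟩ | ⟨h, _⟩) | ⟨h, _⟩) | ⟨h, _⟩)
      · exact ⟨⟨h0, hu⟩, hv⟩
      all_goals linarith
  · constructor
    · rintro ⟨⟨h0, hu⟩, hv⟩
      exact Or.inl (Or.inl (Or.inr ⟨by linarith, hu, by linarith, h2⟩))
    · rintro (((⟨h0, hu, hv, _⟩ | ⟨h, hu, hv, _⟩) | ⟨h, _⟩) | ⟨h, _⟩)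
      · linarith
      · exact ⟨⟨by linarith, hu⟩, by linarith⟩
      all_goals linarith
  · constructor
    · rintro ⟨⟨h0, hu⟩, hv⟩
      exact Or.inl (Or.inr ⟨by linarith, hu, by linarith, h3⟩)
    · rintro (((⟨h0, hu, hv, h4⟩ | ⟨h, hu, hv, h5⟩) | ⟨h, hu, hv, _⟩) | ⟨h, _⟩)
      · linarith
      · linarith
      · exact ⟨⟨by linarith, hu⟩, by linarith⟩
      · linarith
  · constructor
    · rintro ⟨⟨h0, hu⟩, hv⟩
      exact Or.inr ⟨by linarith, hu, hv⟩
    · rintro (((⟨h0, hu, hv, h4⟩ | ⟨h, hu, hv, h5⟩) | ⟨h, hu, hv, h6⟩) | ⟨h, hu, hv⟩)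
      · linarith
      · linarith
      · linarith
      · exact ⟨⟨by linarith, hu⟩, hv⟩

lemma CEx_eq (u v : ℝ) : CEx u v = Cf u v := by
  have d1 : Disjoint (Icc (0:ℝ) (min u (min v (1/4)))) (Ioc (1/4) (min u (min (v - 1/4) (1/2)))) := by
    rw [Set.disjoint_left]
    rintro t ht ht'
    simp only [mem_Icc, mem_Ioc, le_min_iff] at ht ht'
    linarith [ht.2.2.2, ht'.1]
  have d2 : Disjoint (Icc (0:ℝ) (min u (min v (1/4))) ∪ Ioc (1/4) (min u (min (v - 1/4) (1/2))))
      (Ioc (1/2) (min u (min (v + 1/4) (3/4)))) := by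
    rw [Set.disjoint_left]
    rintro t (ht | ht) ht' <;>
      simp only [mem_Icc, mem_Ioc, le_min_iff] at ht ht' <;> linarith [ht'.1]
  have d3 : Disjoint ((Icc (0:ℝ) (min u (min v (1/4))) ∪ Ioc (1/4) (min u (min (v - 1/4) (1/2))))
      ∪ Ioc (1/2) (min u (min (v + 1/4) (3/4)))) (Ioc (3/4) (min u v)) := by
    rw [Set.disjoint_left]
    rintro t ((ht | ht) | ht) ht' <;>
      simp only [mem_Icc, mem_Ioc, le_min_iff] at ht ht' <;> linarith [ht'.1]
  rw [CEx, setEq,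
    measure_union d3 measurableSet_Ioc,
    measure_union d2 measurableSet_Ioc,
    measure_union d1 measurableSet_Ioc,
    Real.volume_Icc, Real.volume_Ioc, Real.volume_Ioc, Real.volume_Ioc,
    ENNReal.toReal_add (by simp) (by simp), ENNReal.toReal_add (by simp) (by simp),
    ENNReal.toReal_add (by simp) (by simp)]
  simp only [ENNReal.toReal_ofReal']; simp [ENNReal.toReal_ofReal', Cf, mm, max_comm, sub_zero]
lemma mm_nonneg (u w c : ℝ) : 0 ≤ mm u w c := le_max_left _ _
lemma mm_zero_w {u w c : ℝ} (h : w ≤ c) : mm u w c = 0 :=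
  max_eq_left (by have := min_le_right u w; linarith)
lemma mm_zero_u {u w c : ℝ} (h : u ≤ c) : mm u w c = 0 :=
  max_eq_left (by have := min_le_left u w; linarith)
lemma mm_sub {u w c : ℝ} (h1 : c ≤ u) (h2 : u ≤ w) : mm u w c = u - c := by
  rw [mm, min_eq_left h2]; exact max_eq_right (by linarith)
lemma mm_w {u w c : ℝ} (h1 : c ≤ w) (h2 : w ≤ u) : mm u w c = w - c := by
  rw [mm, min_eq_right h2]; exact max_eq_right (by linarith)
lemma mm_le_w {u w c : ℝ} (b : ℝ) (hb : 0 ≤ b) (h : w - c ≤ b) : mm u w c ≤ b :=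
  max_le hb (by have := min_le_right u w; linarith)

lemma mm_super {c u u' w w' : ℝ} (hu : u ≤ u') (hw : w ≤ w') :
    mm u' w c + mm u w' c ≤ mm u' w' c + mm u w c := by
  simp only [mm, max_def, min_def]; split_ifs <;> linarith

section eval
variable {u v : ℝ}

lemma Cf_A (h0 : 0 ≤ v) (h14 : v ≤ 1/4) (hvu : v ≤ u) : Cf u v = v := by
  rw [Cf, min_eq_left h14, min_eq_left (by linarith : v - 1/4 ≤ 1/2),
    min_eq_left (by linarith : v + 1/4 ≤ 3/4), mm_w h0 hvu,
    mm_zero_w (by linarith), mm_zero_w (by linarith), mm_zero_w (by linarith)]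
  ring

lemma Cf_low (h0 : 0 ≤ u) (huv : u ≤ v) (h14 : u ≤ 1/4) : Cf u v = u := by
  rw [Cf, mm_sub h0 (le_min huv h14), mm_zero_u (by linarith),
    mm_zero_u (by linarith), mm_zero_u (by linarith)]
  ring

lemma Cf_U2B (hu1 : 1/4 ≤ u) (hu2 : u ≤ 1/2) (hv1 : 1/4 ≤ v) (hv2 : v ≤ 1/2) :
    Cf u v = 1/4 := by
  rw [Cf, min_eq_right hv1, mm_w (by norm_num) hu1,
    mm_zero_w (by have := min_le_left (v - 1/4) (1/2); linarith),
    mm_zero_u (by linarith : u ≤ 1/2), mm_zero_u (by linarith)]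
  ring

lemma Cf_U2C1 (hu1 : 1/4 ≤ u) (hu2 : u ≤ 1/2) (hv1 : 1/2 ≤ v) (hv2 : v ≤ u + 1/4) :
    Cf u v = v - 1/4 := by
  rw [Cf, min_eq_right (by linarith : (1:ℝ)/4 ≤ v), mm_w (by norm_num) hu1,
    min_eq_left (by linarith : v - 1/4 ≤ 1/2), mm_w (by linarith) (by linarith),
    mm_zero_u (by linarith : u ≤ 1/2), mm_zero_u (by linarith)]
  ring

lemma Cf_U2C2 (hu1 : 1/4 ≤ u) (hu2 : u ≤ 1/2) (hv1 : u + 1/4 ≤ v) : Cf u v = u := by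
  rw [Cf, min_eq_right (by linarith : (1:ℝ)/4 ≤ v), mm_w (by norm_num) hu1,
    mm_sub hu1 (le_min (by linarith) hu2),
    mm_zero_u (by linarith : u ≤ 1/2), mm_zero_u (by linarith)]
  ring

lemma Cf_U3B1 (hu1 : 1/2 ≤ u) (hu2 : u ≤ 3/4) (hv1 : 1/4 ≤ v) (hv2 : v ≤ u - 1/4) : Cf u v = v := by
  rw [Cf, min_eq_right hv1, mm_w (by norm_num) (by linarith),
    mm_zero_w (by have := min_le_left (v - 1/4) (1/2); linarith),
    min_eq_left (by linarith : v + 1/4 ≤ 3/4), mm_w (by linarith) (by linarith),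
    mm_zero_w (by linarith)]
  ring

lemma Cf_U3B2 (hu1 : 1/2 ≤ u) (hu2 : u ≤ 3/4) (hv1 : u - 1/4 ≤ v) (hv2 : v ≤ 1/2)
    (hv0 : 1/4 ≤ v) : Cf u v = u - 1/4 := by
  rw [Cf, min_eq_right hv0, mm_w (by norm_num) (by linarith),
    mm_zero_w (by have := min_le_left (v - 1/4) (1/2); linarith),
    min_eq_left (by linarith : v + 1/4 ≤ 3/4), mm_sub (by linarith) (by linarith),
    mm_zero_w (by linarith)]
  ring

lemma Cf_U3C (hu1 : 1/2 ≤ u) (hu2 : u ≤ 3/4) (hv1 : 1/2 ≤ v) (hv2 : v ≤ 3/4) :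
    Cf u v = u + v - 3/4 := by
  rw [Cf, min_eq_right (by linarith : (1:ℝ)/4 ≤ v), mm_w (by norm_num) (by linarith),
    min_eq_left (by linarith : v - 1/4 ≤ 1/2), mm_w (by linarith) (by linarith),
    min_eq_right (by linarith : (3:ℝ)/4 ≤ v + 1/4), mm_sub (by linarith) hu2,
    mm_zero_w (by linarith)]
  ring

lemma Cf_U3D (hu1 : 1/2 ≤ u) (hu2 : u ≤ 3/4) (hv1 : 3/4 ≤ v) : Cf u v = u := by
  rw [Cf, min_eq_right (by linarith : (1:ℝ)/4 ≤ v), mm_w (by norm_num) (by linarith),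
    min_eq_right (by linarith : (1:ℝ)/2 ≤ v - 1/4), mm_w (by norm_num) (by linarith),
    min_eq_right (by linarith : (3:ℝ)/4 ≤ v + 1/4), mm_sub (by linarith) hu2,
    mm_zero_u (by linarith)]
  ring

lemma Cf_U4B (hu : 3/4 ≤ u) (hv1 : 1/4 ≤ v) (hv2 : v ≤ 1/2) : Cf u v = v := by
  rw [Cf, min_eq_right hv1, mm_w (by norm_num) (by linarith),
    mm_zero_w (by have := min_le_left (v - 1/4) (1/2); linarith),
    min_eq_left (by linarith : v + 1/4 ≤ 3/4), mm_w (by linarith) (by linarith),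
    mm_zero_w (by linarith)]
  ring

lemma Cf_U4C (hu : 3/4 ≤ u) (hv1 : 1/2 ≤ v) (hv2 : v ≤ 3/4) : Cf u v = v := by
  rw [Cf, min_eq_right (by linarith : (1:ℝ)/4 ≤ v), mm_w (by norm_num) (by linarith),
    min_eq_left (by linarith : v - 1/4 ≤ 1/2), mm_w (by linarith) (by linarith),
    min_eq_right (by linarith : (3:ℝ)/4 ≤ v + 1/4), mm_w (by norm_num) hu,
    mm_zero_w (by linarith)]
  ring

lemma Cf_U4D1 (hu : 3/4 ≤ u) (hv1 : 3/4 ≤ v) (hv2 : v ≤ u) : Cf u v = v := by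
  rw [Cf, min_eq_right (by linarith : (1:ℝ)/4 ≤ v), mm_w (by norm_num) (by linarith),
    min_eq_right (by linarith : (1:ℝ)/2 ≤ v - 1/4), mm_w (by norm_num) (by linarith),
    min_eq_right (by linarith : (3:ℝ)/4 ≤ v + 1/4), mm_w (by norm_num) hu,
    mm_w (by linarith) hv2]
  ring

lemma Cf_U4D2 (hu : 3/4 ≤ u) (huv : u ≤ v) : Cf u v = u := by
  rw [Cf, min_eq_right (by linarith : (1:ℝ)/4 ≤ v), mm_w (by norm_num) (by linarith),
    min_eq_right (by linarith : (1:ℝ)/2 ≤ v - 1/4), mm_w (by norm_num) (by linarith),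
    min_eq_right (by linarith : (3:ℝ)/4 ≤ v + 1/4), mm_w (by norm_num) hu,
    mm_sub hu huv]
  ring

end eval

lemma Cf_nonneg (u v : ℝ) : 0 ≤ Cf u v := by
  have h1 := mm_nonneg u (min v (1/4)) 0
  have h2 := mm_nonneg u (min (v - 1/4) (1/2)) (1/4)
  have h3 := mm_nonneg u (min (v + 1/4) (3/4)) (1/2)
  have h4 := mm_nonneg u v (3/4)
  rw [Cf]; linarith

lemma Cf_le_one {u v : ℝ} (hv : v ≤ 1) : Cf u v ≤ 1 := by
  have h1 : mm u (min v (1/4)) 0 ≤ 1/4 := mm_le_w _ (by norm_num)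
    (by have := min_le_right v (1/4); linarith)
  have h2 : mm u (min (v - 1/4) (1/2)) (1/4) ≤ 1/4 := mm_le_w _ (by norm_num)
    (by have := min_le_right (v - 1/4) (1/2); linarith)
  have h3 : mm u (min (v + 1/4) (3/4)) (1/2) ≤ 1/4 := mm_le_w _ (by norm_num)
    (by have := min_le_right (v + 1/4) (3/4); linarith)
  have h4 : mm u v (3/4) ≤ 1/4 := mm_le_w _ (by norm_num) (by linarith)
  rw [Cf]; linarith

lemma Cf_supermod {u u' v v' : ℝ} (hu : u ≤ u') (hv : v ≤ v') :
    0 ≤ Cf u' v' - Cf u' v - Cf u v' + Cf u v := by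
  have h1 := mm_super (c := 0) (w := min v (1/4)) (w' := min v' (1/4)) hu
    (min_le_min hv le_rfl)
  have h2 := mm_super (c := 1/4) (w := min (v - 1/4) (1/2)) (w' := min (v' - 1/4) (1/2)) hu
    (min_le_min (by linarith) le_rfl)
  have h3 := mm_super (c := 1/2) (w := min (v + 1/4) (3/4)) (w' := min (v' + 1/4) (3/4)) hu
    (min_le_min (by linarith) le_rfl)
  have h4 := mm_super (c := 3/4) hu hv
  simp only [Cf]; linarith

lemma Cf_u0 {u : ℝ} (hu : 0 ≤ u) : Cf u 0 = 0 := Cf_A le_rfl (by norm_num) hu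
lemma Cf_0v {v : ℝ} (hv : 0 ≤ v) : Cf 0 v = 0 := Cf_low le_rfl hv (by norm_num)

lemma Cf_u1 {u : ℝ} (hu0 : 0 ≤ u) (hu1 : u ≤ 1) : Cf u 1 = u := by
  rcases le_total u (1/4) with h | h
  · exact Cf_low hu0 hu1 h
  rcases le_total u (1/2) with h2 | h2
  · exact Cf_U2C2 h h2 (by linarith)
  rcases le_total u (3/4) with h3 | h3
  · exact Cf_U3D h2 h3 (by norm_num)
  · exact Cf_U4D2 h3 hu1

lemma Cf_1v {v : ℝ} (hv0 : 0 ≤ v) (hv1 : v ≤ 1) : Cf 1 v = v := by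
  rcases le_total v (1/4) with h | h
  · exact Cf_A hv0 h (by linarith)
  rcases le_total v (1/2) with h2 | h2
  · exact Cf_U4B (by norm_num) h h2
  rcases le_total v (3/4) with h3 | h3
  · exact Cf_U4C (by norm_num) h2 h3
  · exact Cf_U4D1 (by norm_num) h3 hv1

lemma Cf_PLOD {u v : ℝ} (hu0 : 0 ≤ u) (hu1 : u ≤ 1) (hv0 : 0 ≤ v) (hv1 : v ≤ 1) :
    u * v ≤ Cf u v := by
  have key_v : u * v ≤ v := by nlinarith
  have key_u : u * v ≤ u := by nlinarith
  rcases le_total u (1/4) with hA | hA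
  · rcases le_total v u with h | h
    · rw [Cf_A hv0 (by linarith) h]; exact key_v
    · rw [Cf_low hu0 h hA]; exact key_u
  · rcases le_total v (1/4) with hB | hB
    · rw [Cf_A hv0 hB (by linarith)]; exact key_v
    rcases le_total u (1/2) with hC | hC
    · rcases le_total v (1/2) with hD | hD
      · rw [Cf_U2B hA hC hB hD]; nlinarith
      rcases le_total v (u + 1/4) with hE | hE
      · rw [Cf_U2C1 hA hC hD hE]
        nlinarith [mul_nonneg (by linarith : (0:ℝ) ≤ 1/2 - u) (by linarith : (0:ℝ) ≤ v)]
      · rw [Cf_U2C2 hA hC hE]; exact key_u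
    rcases le_total u (3/4) with hF | hF
    · rcases le_total v (u - 1/4) with hG | hG
      · rw [Cf_U3B1 hC hF hB hG]; exact key_v
      rcases le_total v (1/2) with hH | hH
      · rw [Cf_U3B2 hC hF hG hH hB]
        nlinarith [mul_nonneg (by linarith : (0:ℝ) ≤ u) (by linarith : (0:ℝ) ≤ 1/2 - v)]
      rcases le_total v (3/4) with hI | hI
      · rw [Cf_U3C hC hF hH hI]
        nlinarith [mul_le_mul (by linarith : 1 - u ≤ 1/2) (by linarith : 1 - v ≤ 1/2)
          (by linarith) (by norm_num)]
      · rw [Cf_U3D hC hF hI]; exact key_u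
    · rcases le_total v (1/2) with hD | hD
      · rw [Cf_U4B hF hB hD]; exact key_v
      rcases le_total v (3/4) with hI | hI
      · rw [Cf_U4C hF hD hI]; exact key_v
      rcases le_total v u with h | h
      · rw [Cf_U4D1 hF hI h]; exact key_v
      · rw [Cf_U4D2 hF h]; exact key_u

lemma isCopula_CEx : IsCopula CEx := by
  simp only [IsCopula, CEx_eq]
  refine ⟨fun u hu v hv => ⟨Cf_nonneg u v, Cf_le_one hv.2⟩,
    fun u hu => Cf_u0 hu.1, fun v hv => Cf_0v hv.1,
    fun u hu => Cf_u1 hu.1 hu.2, fun v hv => Cf_1v hv.1 hv.2,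
    fun u u' v v' hu hu' hv hv' huu hvv => Cf_supermod huu hvv⟩


lemma mm_hasDeriv_one {u w c : ℝ} (h1 : c < u) (h2 : u < w) :
    HasDerivAt (fun x => mm x w c) 1 u := by
  have h : HasDerivAt (fun x : ℝ => x - c) 1 u := (hasDerivAt_id u).sub_const c
  apply h.congr_of_eventuallyEq
  filter_upwards [Ioo_mem_nhds h1 h2] with x hx
  rw [mm, min_eq_left (le_of_lt hx.2)]
  exact max_eq_right (by linarith [hx.1])

lemma mm_hasDeriv_zero_lt {u w c : ℝ} (h : u < c) :
    HasDerivAt (fun x => mm x w c) 0 u := by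
  apply (hasDerivAt_const u (0:ℝ)).congr_of_eventuallyEq
  filter_upwards [Iio_mem_nhds h] with x hx
  exact mm_zero_u (le_of_lt hx)

lemma mm_hasDeriv_zero_gt {u w c : ℝ} (h : w < u) :
    HasDerivAt (fun x => mm x w c) 0 u := by
  apply (hasDerivAt_const u (max 0 (w - c))).congr_of_eventuallyEq
  filter_upwards [Ioi_mem_nhds h] with x hx
  rw [mm, min_eq_right (le_of_lt hx)]

lemma Cf_deriv {v t : ℝ} (h0 : 0 < t)
    (h14 : t ≠ 1/4) (h12 : t ≠ 1/2) (h34 : t ≠ 3/4)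
    (hv : t ≠ v) (hvm : t ≠ v - 1/4) (hvp : t ≠ v + 1/4) :
    HasDerivAt (fun s => Cf s v) (if fEx t ≤ v then 1 else 0) t := by
  rcases lt_or_gt_of_ne h14 with p1 | p1
  · have hf : fEx t = t := if_pos (le_of_lt p1)
    rcases lt_or_gt_of_ne hv with q | q
    · have d1 := mm_hasDeriv_one (w := min v (1/4)) (c := 0) h0 (lt_min q p1)
      have d2 := mm_hasDeriv_zero_lt (u := t) (w := min (v - 1/4) (1/2)) (c := 1/4) p1
      have d3 := mm_hasDeriv_zero_lt (u := t) (w := min (v + 1/4) (3/4)) (c := 1/2) (by linarith)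
      have d4 := mm_hasDeriv_zero_lt (u := t) (w := v) (c := 3/4) (by linarith)
      rw [if_pos (by rw [hf]; linarith)]
      simpa [Cf, Pi.add_def] using ((d1.add d2).add d3).add d4
    · have d1 := mm_hasDeriv_zero_gt (u := t) (w := min v (1/4)) (c := 0)
        (lt_of_le_of_lt (min_le_left _ _) q)
      have d2 := mm_hasDeriv_zero_lt (u := t) (w := min (v - 1/4) (1/2)) (c := 1/4) p1
      have d3 := mm_hasDeriv_zero_lt (u := t) (w := min (v + 1/4) (3/4)) (c := 1/2) (by linarith)
      have d4 := mm_hasDeriv_zero_lt (u := t) (w := v) (c := 3/4) (by linarith)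
      rw [if_neg (by rw [hf]; linarith)]
      simpa [Cf, Pi.add_def] using ((d1.add d2).add d3).add d4
  · rcases lt_or_gt_of_ne h12 with p2 | p2
    · have hf : fEx t = t + 1/4 := by
        rw [fEx, if_neg (by linarith), if_pos (le_of_lt p2)]
      have d1 := mm_hasDeriv_zero_gt (u := t) (w := min v (1/4)) (c := 0)
        (lt_of_le_of_lt (min_le_right _ _) p1)
      have d3 := mm_hasDeriv_zero_lt (u := t) (w := min (v + 1/4) (3/4)) (c := 1/2) p2
      have d4 := mm_hasDeriv_zero_lt (u := t) (w := v) (c := 3/4) (by linarith)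
      rcases lt_or_gt_of_ne hvm with q | q
      · have d2 := mm_hasDeriv_one (w := min (v - 1/4) (1/2)) (c := 1/4) p1 (lt_min q p2)
        rw [if_pos (by rw [hf]; linarith)]
        simpa [Cf, Pi.add_def] using ((d1.add d2).add d3).add d4
      · have d2 := mm_hasDeriv_zero_gt (u := t) (w := min (v - 1/4) (1/2)) (c := 1/4)
          (lt_of_le_of_lt (min_le_left _ _) q)
        rw [if_neg (by rw [hf]; linarith)]
        simpa [Cf, Pi.add_def] using ((d1.add d2).add d3).add d4
    · rcases lt_or_gt_of_ne h34 with p3 | p3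
      · have hf : fEx t = t - 1/4 := by
          rw [fEx, if_neg (by linarith), if_neg (by linarith), if_pos (le_of_lt p3)]
        have d1 := mm_hasDeriv_zero_gt (u := t) (w := min v (1/4)) (c := 0)
          (lt_of_le_of_lt (min_le_right _ _) (by linarith))
        have d2 := mm_hasDeriv_zero_gt (u := t) (w := min (v - 1/4) (1/2)) (c := 1/4)
          (lt_of_le_of_lt (min_le_right _ _) p2)
        have d4 := mm_hasDeriv_zero_lt (u := t) (w := v) (c := 3/4) p3
        rcases lt_or_gt_of_ne hvp with q | q
        · have d3 := mm_hasDeriv_one (w := min (v + 1/4) (3/4)) (c := 1/2) p2 (lt_min q p3)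
          rw [if_pos (by rw [hf]; linarith)]
          simpa [Cf, Pi.add_def] using ((d1.add d2).add d3).add d4
        · have d3 := mm_hasDeriv_zero_gt (u := t) (w := min (v + 1/4) (3/4)) (c := 1/2)
            (lt_of_le_of_lt (min_le_left _ _) q)
          rw [if_neg (by rw [hf]; linarith)]
          simpa [Cf, Pi.add_def] using ((d1.add d2).add d3).add d4
      · have hf : fEx t = t := by
          rw [fEx, if_neg (by linarith), if_neg (by linarith), if_neg (by linarith)]
        have d1 := mm_hasDeriv_zero_gt (u := t) (w := min v (1/4)) (c := 0)
          (lt_of_le_of_lt (min_le_right _ _) (by linarith))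
        have d2 := mm_hasDeriv_zero_gt (u := t) (w := min (v - 1/4) (1/2)) (c := 1/4)
          (lt_of_le_of_lt (min_le_right _ _) (by linarith))
        have d3 := mm_hasDeriv_zero_gt (u := t) (w := min (v + 1/4) (3/4)) (c := 1/2)
          (lt_of_le_of_lt (min_le_right _ _) p3)
        rcases lt_or_gt_of_ne hv with q | q
        · have d4 := mm_hasDeriv_one (w := v) (c := 3/4) p3 q
          rw [if_pos (by rw [hf]; linarith)]
          simpa [Cf, Pi.add_def] using ((d1.add d2).add d3).add d4
        · have d4 := mm_hasDeriv_zero_gt (u := t) (w := v) (c := 3/4) q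
          rw [if_neg (by rw [hf]; linarith)]
          simpa [Cf, Pi.add_def] using ((d1.add d2).add d3).add d4

lemma measurable_fEx : Measurable fEx := by
  unfold fEx
  exact Measurable.ite (measurableSet_le measurable_id measurable_const) measurable_id
    (Measurable.ite (measurableSet_le measurable_id measurable_const)
      (measurable_id.add_const _)
      (Measurable.ite (measurableSet_le measurable_id measurable_const)
        (measurable_id.sub_const _) measurable_id))

lemma inner_xi {v : ℝ} (hv0 : 0 ≤ v) (hv1 : v ≤ 1) :
    ∫ t in (0:ℝ)..1, (deriv (fun s => CEx s v) t) ^ 2 = v := by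
  have hCf : (fun s => CEx s v) = fun s => Cf s v := funext fun s => CEx_eq s v
  rw [hCf]
  have hS : MeasurableSet {t : ℝ | fEx t ≤ v} :=
    measurableSet_le measurable_fEx measurable_const
  have hbad : volume ({0, 1/4, 1/2, 3/4, v, v - 1/4, v + 1/4} : Set ℝ) = 0 :=
    (Set.toFinite _).measure_zero volume
  have hae : ∀ᵐ t ∂(volume : Measure ℝ), t ∈ Set.uIoc (0:ℝ) 1 →
      (deriv (fun s => Cf s v) t) ^ 2
        = ({t : ℝ | fEx t ≤ v}.indicator (fun _ => (1:ℝ))) t := by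
    filter_upwards [measure_eq_zero_iff_ae_notMem.mp hbad] with t ht hI
    simp only [Set.mem_insert_iff, Set.mem_singleton_iff, not_or] at ht
    obtain ⟨ht0, ht14, ht12, ht34, htv, htvm, htvp⟩ := ht
    rw [Set.uIoc_of_le (by norm_num : (0:ℝ) ≤ 1)] at hI
    have hd := Cf_deriv (v := v) hI.1 ht14 ht12 ht34 htv htvm htvp
    rw [hd.deriv, Set.indicator_apply]
    by_cases h : fEx t ≤ v <;> simp [h]
  rw [intervalIntegral.integral_congr_ae hae,
    intervalIntegral.integral_of_le (by norm_num : (0:ℝ) ≤ 1),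
    MeasureTheory.setIntegral_indicator hS, MeasureTheory.setIntegral_const]
  have key : volume (Ioc (0:ℝ) 1 ∩ {t : ℝ | fEx t ≤ v})
      = volume {t : ℝ | t ∈ Icc (0:ℝ) 1 ∧ fEx t ≤ v} := by
    have e1 : {t : ℝ | t ∈ Icc (0:ℝ) 1 ∧ fEx t ≤ v}
        = (Ioc (0:ℝ) 1 ∩ {t : ℝ | fEx t ≤ v}) ∪ ({0} ∩ {t : ℝ | fEx t ≤ v}) := by
      ext t
      simp only [mem_setOf_eq, mem_Icc, mem_Ioc, mem_union, mem_inter_iff,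
        mem_singleton_iff]
      constructor
      · rintro ⟨⟨ht0, ht1⟩, hf⟩
        rcases eq_or_lt_of_le ht0 with h | h
        · exact Or.inr ⟨h.symm, hf⟩
        · exact Or.inl ⟨⟨h, ht1⟩, hf⟩
      · rintro (⟨⟨h, h1⟩, hf⟩ | ⟨h, hf⟩)
        · exact ⟨⟨le_of_lt h, h1⟩, hf⟩
        · exact ⟨⟨by rw [h], by rw [h]; norm_num⟩, hf⟩
    rw [e1]
    have hz : volume ({0} ∩ {t : ℝ | fEx t ≤ v}) = 0 :=
      measure_mono_null Set.inter_subset_left (measure_singleton 0)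
    exact le_antisymm (measure_mono Set.subset_union_left)
      ((measure_union_le _ _).trans (le_of_eq (by rw [hz, add_zero])))
  have : (volume (Ioc (0:ℝ) 1 ∩ {t : ℝ | fEx t ≤ v})).toReal = v := by
    rw [key]
    have : (volume {t : ℝ | t ∈ Icc (0:ℝ) 1 ∧ fEx t ≤ v}).toReal = CEx 1 v := rfl
    rw [this, CEx_eq, Cf_1v hv0 hv1]
  rw [measureReal_def, this]
  simp

lemma xi_CEx : xi CEx = 1 := by
  rw [xi]
  have h : (∫ v in (0:ℝ)..1, ∫ t in (0:ℝ)..1, (deriv (fun s => CEx s v) t) ^ 2)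
      = ∫ v in (0:ℝ)..1, v := by
    apply intervalIntegral.integral_congr
    intro v hv
    rw [Set.uIcc_of_le (by norm_num : (0:ℝ) ≤ 1)] at hv
    exact inner_xi hv.1 hv.2
  rw [h, integral_id]
  norm_num


lemma continuous_Cf_v (u : ℝ) : Continuous fun v => Cf u v := by
  unfold Cf mm; fun_prop

lemma int_aff (q a b : ℝ) : ∫ x in a..b, (x + q) = (b^2 - a^2)/2 + q * (b - a) := by
  rw [intervalIntegral.integral_add
    ((continuous_id' : Continuous fun x : ℝ => x).intervalIntegrable _ _)
    (continuous_const.intervalIntegrable _ _)]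
  rw [intervalIntegral.integral_const, integral_id]
  simp [smul_eq_mul]; ring

lemma J_U1 {u : ℝ} (h0 : 0 ≤ u) (h14 : u ≤ 1/4) :
    (∫ v in (0:ℝ)..1, Cf u v) = u - u^2/2 := by
  rw [← intervalIntegral.integral_add_adjacent_intervals (b := u)
    ((continuous_Cf_v u).intervalIntegrable _ _) ((continuous_Cf_v u).intervalIntegrable _ _)]
  have e1 : (∫ v in (0:ℝ)..u, Cf u v) = ∫ v in (0:ℝ)..u, v := by
    apply intervalIntegral.integral_congr
    intro v hv
    rw [Set.uIcc_of_le h0] at hv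
    exact Cf_A hv.1 (by linarith [hv.2]) hv.2
  have e2 : (∫ v in u..1, Cf u v) = ∫ v in u..1, (u:ℝ) := by
    apply intervalIntegral.integral_congr
    intro v hv
    rw [Set.uIcc_of_le (by linarith : u ≤ 1)] at hv
    exact Cf_low h0 hv.1 h14
  rw [e1, e2, integral_id, intervalIntegral.integral_const]
  simp only [smul_eq_mul]; ring

lemma J_U2 {u : ℝ} (h1 : 1/4 ≤ u) (h2 : u ≤ 1/2) :
    (∫ v in (0:ℝ)..1, Cf u v) = 1/16 + 3*u/4 - u^2/2 := by
  have hc := continuous_Cf_v u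
  rw [← intervalIntegral.integral_add_adjacent_intervals (b := 1/4)
      (hc.intervalIntegrable _ _) (hc.intervalIntegrable _ _),
    ← intervalIntegral.integral_add_adjacent_intervals (a := 1/4) (b := 1/2)
      (hc.intervalIntegrable _ _) (hc.intervalIntegrable _ _),
    ← intervalIntegral.integral_add_adjacent_intervals (a := 1/2) (b := u + 1/4)
      (hc.intervalIntegrable _ _) (hc.intervalIntegrable _ _)]
  have e1 : (∫ v in (0:ℝ)..(1/4), Cf u v) = ∫ v in (0:ℝ)..(1/4), v := by
    apply intervalIntegral.integral_congr
    intro v hv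
    rw [Set.uIcc_of_le (by norm_num : (0:ℝ) ≤ 1/4)] at hv
    exact Cf_A hv.1 hv.2 (by linarith [hv.2])
  have e2 : (∫ v in (1/4:ℝ)..(1/2), Cf u v) = ∫ v in (1/4:ℝ)..(1/2), (1/4:ℝ) := by
    apply intervalIntegral.integral_congr
    intro v hv
    rw [Set.uIcc_of_le (by norm_num : (1/4:ℝ) ≤ 1/2)] at hv
    exact Cf_U2B h1 h2 hv.1 hv.2
  have e3 : (∫ v in (1/2:ℝ)..(u + 1/4), Cf u v) = ∫ v in (1/2:ℝ)..(u + 1/4), (v + -(1/4)) := by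
    apply intervalIntegral.integral_congr
    intro v hv
    rw [Set.uIcc_of_le (by linarith : (1/2:ℝ) ≤ u + 1/4)] at hv
    rw [Cf_U2C1 h1 h2 hv.1 hv.2]; ring
  have e4 : (∫ v in (u + 1/4)..(1:ℝ), Cf u v) = ∫ v in (u + 1/4)..(1:ℝ), u := by
    apply intervalIntegral.integral_congr
    intro v hv
    rw [Set.uIcc_of_le (by linarith : u + 1/4 ≤ 1)] at hv
    exact Cf_U2C2 h1 h2 hv.1
  rw [e1, e2, e3, e4, integral_id, int_aff, intervalIntegral.integral_const,
    intervalIntegral.integral_const]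
  simp only [smul_eq_mul]; ring

lemma J_U3 {u : ℝ} (h1 : 1/2 ≤ u) (h2 : u ≤ 3/4) :
    (∫ v in (0:ℝ)..1, Cf u v) = -3/16 + 5*u/4 - u^2/2 := by
  have hc := continuous_Cf_v u
  rw [← intervalIntegral.integral_add_adjacent_intervals (b := 1/4)
      (hc.intervalIntegrable _ _) (hc.intervalIntegrable _ _),
    ← intervalIntegral.integral_add_adjacent_intervals (a := 1/4) (b := u - 1/4)
      (hc.intervalIntegrable _ _) (hc.intervalIntegrable _ _),
    ← intervalIntegral.integral_add_adjacent_intervals (a := u - 1/4) (b := 1/2)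
      (hc.intervalIntegrable _ _) (hc.intervalIntegrable _ _),
    ← intervalIntegral.integral_add_adjacent_intervals (a := 1/2) (b := 3/4)
      (hc.intervalIntegrable _ _) (hc.intervalIntegrable _ _)]
  have e1 : (∫ v in (0:ℝ)..(1/4), Cf u v) = ∫ v in (0:ℝ)..(1/4), v := by
    apply intervalIntegral.integral_congr
    intro v hv
    rw [Set.uIcc_of_le (by norm_num : (0:ℝ) ≤ 1/4)] at hv
    exact Cf_A hv.1 hv.2 (by linarith [hv.2])
  have e2 : (∫ v in (1/4:ℝ)..(u - 1/4), Cf u v) = ∫ v in (1/4:ℝ)..(u - 1/4), v := by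
    apply intervalIntegral.integral_congr
    intro v hv
    rw [Set.uIcc_of_le (by linarith : (1/4:ℝ) ≤ u - 1/4)] at hv
    exact Cf_U3B1 h1 h2 hv.1 hv.2
  have e3 : (∫ v in (u - 1/4)..(1/2:ℝ), Cf u v) = ∫ v in (u - 1/4)..(1/2:ℝ), (u - 1/4) := by
    apply intervalIntegral.integral_congr
    intro v hv
    rw [Set.uIcc_of_le (by linarith : u - 1/4 ≤ 1/2)] at hv
    exact Cf_U3B2 h1 h2 hv.1 hv.2 (by linarith [hv.1])
  have e4 : (∫ v in (1/2:ℝ)..(3/4), Cf u v) = ∫ v in (1/2:ℝ)..(3/4), (v + (u - 3/4)) := by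
    apply intervalIntegral.integral_congr
    intro v hv
    rw [Set.uIcc_of_le (by norm_num : (1/2:ℝ) ≤ 3/4)] at hv
    rw [Cf_U3C h1 h2 hv.1 hv.2]; ring
  have e5 : (∫ v in (3/4:ℝ)..(1:ℝ), Cf u v) = ∫ v in (3/4:ℝ)..(1:ℝ), u := by
    apply intervalIntegral.integral_congr
    intro v hv
    rw [Set.uIcc_of_le (by norm_num : (3/4:ℝ) ≤ 1)] at hv
    exact Cf_U3D h1 h2 hv.1
  rw [e1, e2, e3, e4, e5, integral_id, integral_id, int_aff,
    intervalIntegral.integral_const, intervalIntegral.integral_const]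
  simp only [smul_eq_mul]; ring

lemma J_U4 {u : ℝ} (h1 : 3/4 ≤ u) (h2 : u ≤ 1) :
    (∫ v in (0:ℝ)..1, Cf u v) = u - u^2/2 := by
  have hc := continuous_Cf_v u
  rw [← intervalIntegral.integral_add_adjacent_intervals (b := 1/4)
      (hc.intervalIntegrable _ _) (hc.intervalIntegrable _ _),
    ← intervalIntegral.integral_add_adjacent_intervals (a := 1/4) (b := 1/2)
      (hc.intervalIntegrable _ _) (hc.intervalIntegrable _ _),
    ← intervalIntegral.integral_add_adjacent_intervals (a := 1/2) (b := 3/4)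
      (hc.intervalIntegrable _ _) (hc.intervalIntegrable _ _),
    ← intervalIntegral.integral_add_adjacent_intervals (a := 3/4) (b := u)
      (hc.intervalIntegrable _ _) (hc.intervalIntegrable _ _)]
  have e1 : (∫ v in (0:ℝ)..(1/4), Cf u v) = ∫ v in (0:ℝ)..(1/4), v := by
    apply intervalIntegral.integral_congr
    intro v hv
    rw [Set.uIcc_of_le (by norm_num : (0:ℝ) ≤ 1/4)] at hv
    exact Cf_A hv.1 hv.2 (by linarith [hv.2])
  have e2 : (∫ v in (1/4:ℝ)..(1/2), Cf u v) = ∫ v in (1/4:ℝ)..(1/2), v := by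
    apply intervalIntegral.integral_congr
    intro v hv
    rw [Set.uIcc_of_le (by norm_num : (1/4:ℝ) ≤ 1/2)] at hv
    exact Cf_U4B h1 hv.1 hv.2
  have e3 : (∫ v in (1/2:ℝ)..(3/4), Cf u v) = ∫ v in (1/2:ℝ)..(3/4), v := by
    apply intervalIntegral.integral_congr
    intro v hv
    rw [Set.uIcc_of_le (by norm_num : (1/2:ℝ) ≤ 3/4)] at hv
    exact Cf_U4C h1 hv.1 hv.2
  have e4 : (∫ v in (3/4:ℝ)..u, Cf u v) = ∫ v in (3/4:ℝ)..u, v := by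
    apply intervalIntegral.integral_congr
    intro v hv
    rw [Set.uIcc_of_le h1] at hv
    exact Cf_U4D1 h1 hv.1 hv.2
  have e5 : (∫ v in u..(1:ℝ), Cf u v) = ∫ v in u..(1:ℝ), u := by
    apply intervalIntegral.integral_congr
    intro v hv
    rw [Set.uIcc_of_le h2] at hv
    exact Cf_U4D2 h1 hv.1
  rw [e1, e2, e3, e4, e5, integral_id, integral_id, integral_id, integral_id,
    intervalIntegral.integral_const]
  simp only [smul_eq_mul]; ring

lemma int_quad (p q r a b : ℝ) : ∫ x in a..b, (p * x^2 + q * x + r)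
    = p * (b^3 - a^3)/3 + q * (b^2 - a^2)/2 + r * (b - a) := by
  have c1 : Continuous fun x : ℝ => p * x^2 := by fun_prop
  have c2 : Continuous fun x : ℝ => q * x := by fun_prop
  rw [intervalIntegral.integral_add ((c1.fun_add c2).intervalIntegrable _ _)
    (continuous_const.intervalIntegrable _ _),
    intervalIntegral.integral_add (c1.intervalIntegrable _ _) (c2.intervalIntegrable _ _),
    intervalIntegral.integral_const_mul, intervalIntegral.integral_const_mul,
    integral_id, integral_pow, intervalIntegral.integral_const]
  push_cast
  simp only [smul_eq_mul]; ring

lemma rho_CEx : rho CEx = 13/16 := by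
  rw [rho]
  have hCf : ∀ u : ℝ, (∫ v in (0:ℝ)..1, CEx u v) = ∫ v in (0:ℝ)..1, Cf u v := by
    intro u
    simp only [CEx_eq]
  have hcongr : (∫ u in (0:ℝ)..1, ∫ v in (0:ℝ)..1, CEx u v)
      = ∫ u in (0:ℝ)..1, ∫ v in (0:ℝ)..1, Cf u v := by
    simp only [hCf]
  rw [hcongr]
  set J : ℝ → ℝ := fun u => ∫ v in (0:ℝ)..1, Cf u v with hJ
  have hii : ∀ a b : ℝ, a ≤ b → (g : ℝ → ℝ) → Continuous g →
      (∀ u ∈ Icc a b, J u = g u) → IntervalIntegrable J volume a b := by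
    intro a b hab g hg heq
    rw [intervalIntegrable_iff, Set.uIoc_of_le hab]
    exact (hg.integrableOn_Ioc).congr_fun
      (fun x hx => (heq x (Ioc_subset_Icc_self hx)).symm) measurableSet_Ioc
  have i1 : IntervalIntegrable J volume 0 (1/4) :=
    hii 0 (1/4) (by norm_num) (fun u => u - u^2/2) (by fun_prop)
      (fun u hu => J_U1 hu.1 hu.2)
  have i2 : IntervalIntegrable J volume (1/4) (1/2) :=
    hii (1/4) (1/2) (by norm_num) (fun u => 1/16 + 3*u/4 - u^2/2) (by fun_prop)
      (fun u hu => J_U2 hu.1 hu.2)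
  have i3 : IntervalIntegrable J volume (1/2) (3/4) :=
    hii (1/2) (3/4) (by norm_num) (fun u => -3/16 + 5*u/4 - u^2/2) (by fun_prop)
      (fun u hu => J_U3 hu.1 hu.2)
  have i4 : IntervalIntegrable J volume (3/4) 1 :=
    hii (3/4) 1 (by norm_num) (fun u => u - u^2/2) (by fun_prop)
      (fun u hu => J_U4 hu.1 hu.2)
  rw [← intervalIntegral.integral_add_adjacent_intervals (a := (0:ℝ)) (b := 1/4) (c := 1)
      i1 ((i2.trans i3).trans i4),
    ← intervalIntegral.integral_add_adjacent_intervals (a := (1/4:ℝ)) (b := 1/2) (c := 1)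
      i2 (i3.trans i4),
    ← intervalIntegral.integral_add_adjacent_intervals (a := (1/2:ℝ)) (b := 3/4) (c := 1)
      i3 i4]
  have g1 : (∫ u in (0:ℝ)..(1/4), J u)
      = ∫ u in (0:ℝ)..(1/4), (-(1/2) * u^2 + 1 * u + 0) := by
    apply intervalIntegral.integral_congr
    intro u hu
    rw [Set.uIcc_of_le (by norm_num : (0:ℝ) ≤ 1/4)] at hu
    rw [hJ]; simp only; rw [J_U1 hu.1 hu.2]; ring
  have g2 : (∫ u in (1/4:ℝ)..(1/2), J u)
      = ∫ u in (1/4:ℝ)..(1/2), (-(1/2) * u^2 + 3/4 * u + 1/16) := by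
    apply intervalIntegral.integral_congr
    intro u hu
    rw [Set.uIcc_of_le (by norm_num : (1/4:ℝ) ≤ 1/2)] at hu
    rw [hJ]; simp only; rw [J_U2 hu.1 hu.2]; ring
  have g3 : (∫ u in (1/2:ℝ)..(3/4), J u)
      = ∫ u in (1/2:ℝ)..(3/4), (-(1/2) * u^2 + 5/4 * u + (-3/16)) := by
    apply intervalIntegral.integral_congr
    intro u hu
    rw [Set.uIcc_of_le (by norm_num : (1/2:ℝ) ≤ 3/4)] at hu
    rw [hJ]; simp only; rw [J_U3 hu.1 hu.2]; ring
  have g4 : (∫ u in (3/4:ℝ)..1, J u)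
      = ∫ u in (3/4:ℝ)..1, (-(1/2) * u^2 + 1 * u + 0) := by
    apply intervalIntegral.integral_congr
    intro u hu
    rw [Set.uIcc_of_le (by norm_num : (3/4:ℝ) ≤ 1)] at hu
    rw [hJ]; simp only; rw [J_U4 hu.1 hu.2]; ring
  rw [g1, g2, g3, g4, int_quad, int_quad, int_quad, int_quad]
  norm_num


/-- `CEx` is a PLOD copula with `ξ = 1` and `ρ = 13/16`; hence PLOD does not imply
`ξ ≤ ρ`. -/
theorem PLOD_not_sufficient :
    IsCopula CEx ∧
    (∀ u ∈ Icc (0:ℝ) 1, ∀ v ∈ Icc (0:ℝ) 1, u * v ≤ CEx u v) ∧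
    xi CEx = 1 ∧ rho CEx = 13/16 ∧ ¬ xi CEx ≤ rho CEx := by
  refine ⟨isCopula_CEx, ?_, xi_CEx, rho_CEx, ?_⟩
  · intro u hu v hv
    rw [CEx_eq]
    exact Cf_PLOD hu.1 hu.2 hv.1 hv.2
  · rw [xi_CEx, rho_CEx]
    norm_num

end
end

section
/- Let b > 0 and for v ∈ [0,1] define s_v by: s_v = √(2v/b) if (b ≥ 1 and v ≤ 1/(2b)) or (b ≤ 1 and v ≤ b/2); s_v = v + 1/(2b) if 1/(2b) < v ≤ 1 − 1/(2b); s_v = v/b + 1/2 if b/2 < v ≤ 1 − b/2; and s_v = 1 + 1/b − √(2(1−v)/b) otherwise. Then for every v ∈ [0,1], ∫₀¹ min(max(b(s_v − t), 0), 1) dt = v. -/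
open MeasureTheory Real Set

noncomputable section

/-- The horizontal band-maximum `s_v` for the copula family `C_b`, `b > 0`. -/
def sFun (b v : ℝ) : ℝ :=
  if (1 ≤ b ∧ v ≤ 1/(2*b)) ∨ (b ≤ 1 ∧ v ≤ b/2) then Real.sqrt (2*v/b)
  else if 1/(2*b) < v ∧ v ≤ 1 - 1/(2*b) then v + 1/(2*b)
  else if b/2 < v ∧ v ≤ 1 - b/2 then v/b + 1/2
  else 1 + 1/b - Real.sqrt (2*(1-v)/b)

/-- The horizontal band-minimum `a_v = s_v - 1/b`. -/
def aFun (b v : ℝ) : ℝ := sFun b v - 1/b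

/-- The copula `C_b` for positive parameter `b`. -/
def CbPos (b u v : ℝ) : ℝ :=
  if u ≤ aFun b v then u
  else if u ≤ sFun b v then
    aFun b v + b * (sFun b v * (u - aFun b v) + ((aFun b v)^2 - u^2)/2)
  else v

/-- The copula family `C_b` for `b ≠ 0`; for `b < 0` it is the decreasing rearrangement
`C_b(u,v) = v - C_{-b}(1-u,v)`. -/
def Cb (b u v : ℝ) : ℝ :=
  if 0 < b then CbPos b u v else v - CbPos (-b) (1-u) v

lemma hasDerivAt_maxsq (x : ℝ) :
    HasDerivAt (fun y : ℝ => max y 0 ^ 2 / 2) (max x 0) x := by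
  rcases lt_trichotomy x 0 with hx | hx | hx
  · have h : (fun y : ℝ => max y 0 ^ 2 / 2) =ᶠ[nhds x] fun _ => (0:ℝ) := by
      filter_upwards [gt_mem_nhds hx] with y hy
      rw [max_eq_right hy.le]; norm_num
    rw [max_eq_right hx.le]
    exact (hasDerivAt_const x (0:ℝ)).congr_of_eventuallyEq h
  · subst hx
    rw [hasDerivAt_iff_tendsto_slope, max_self]
    apply squeeze_zero_norm (a := fun y : ℝ => |y| / 2)
    · intro y
      simp only [slope_def_field, max_self, sub_zero]
      norm_num
      rcases le_or_gt y 0 with hy | hy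
      · rw [max_eq_right hy]
        simp [abs_nonneg]
        positivity
      · rw [max_eq_left hy.le]
        rw [abs_of_pos hy]
        rw [show y ^ 2 / 2 / y = y / 2 by field_simp]
    · have : Filter.Tendsto (fun y : ℝ => |y| / 2) (nhds 0) (nhds 0) := by
        have := (continuous_abs.tendsto (0:ℝ)).div_const 2
        simpa using this
      exact this.mono_left nhdsWithin_le_nhds
  · have h : (fun y : ℝ => max y 0 ^ 2 / 2) =ᶠ[nhds x] fun y => y ^ 2 / 2 := by
      filter_upwards [lt_mem_nhds hx] with y hy
      rw [max_eq_left hy.le]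
    rw [max_eq_left hx.le]
    have hd : HasDerivAt (fun y : ℝ => y ^ 2 / 2) x x := by
      simpa using (hasDerivAt_pow 2 x).div_const 2
    exact hd.congr_of_eventuallyEq h

lemma hasDerivAt_G (x : ℝ) :
    HasDerivAt (fun y : ℝ => max y 0 ^ 2 / 2 - max (y - 1) 0 ^ 2 / 2)
      (min (max x 0) 1) x := by
  have h1 := hasDerivAt_maxsq x
  have h2 : HasDerivAt (fun y : ℝ => max (y - 1) 0 ^ 2 / 2) (max (x - 1) 0) x := by
    have := (hasDerivAt_maxsq (x - 1)).comp x ((hasDerivAt_id x).sub_const 1)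
    simpa [Function.comp_def] using this
  have key : min (max x 0) 1 = max x 0 - max (x - 1) 0 := by
    rcases le_total x 0 with hx | hx
    · rw [max_eq_right hx, max_eq_right (by linarith), min_eq_left (by norm_num)]
      ring
    · rcases le_total x 1 with hx1 | hx1
      · rw [max_eq_left hx, max_eq_right (by linarith), min_eq_left hx1]
        ring
      · rw [max_eq_left hx, max_eq_left (by linarith), min_eq_right (by linarith)]
        ring
  rw [key]
  exact h1.sub h2

set_option maxHeartbeats 1000000 in
/-- The clamped linear function `t ↦ clamp(b(s_v - t), 0, 1)` integrates over `[0,1]`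
to `v`, for every `b > 0` and `v ∈ [0,1]`. -/
theorem integral_clamp_eq (b : ℝ) (hb : 0 < b) (v : ℝ) (hv : v ∈ Icc (0:ℝ) 1) :
    (∫ t in (0:ℝ)..1, min (max (b * (sFun b v - t)) 0) 1) = v := by
  obtain ⟨hv0, hv1⟩ := hv
  obtain ⟨s, hs⟩ : ∃ s, s = sFun b v := ⟨_, rfl⟩
  rw [← hs]
  have hbne : b ≠ 0 := ne_of_gt hb
  have hF : ∀ t : ℝ, HasDerivAt
      (fun t => (max (b*(s-t)) 0 ^ 2 / 2 - max (b*(s-t) - 1) 0 ^ 2 / 2) * (-(1/b)))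
      (min (max (b*(s-t)) 0) 1) t := by
    intro t
    have hinner : HasDerivAt (fun t : ℝ => b*(s-t)) (-b) t := by
      have := ((hasDerivAt_id t).const_sub s).const_mul b
      simpa using this
    have h := ((hasDerivAt_G (b*(s-t))).comp t hinner).mul_const (-(1/b))
    have e : min (max (b*(s-t)) 0) 1 * -b * -(1/b) = min (max (b*(s-t)) 0) 1 := by field_simp
    rw [e] at h
    exact h
  rw [intervalIntegral.integral_eq_sub_of_hasDerivAt (fun t _ => hF t)
    (Continuous.intervalIntegrable (by continuity) 0 1)]
  simp only [sub_zero]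
  have key : (max (b*s) 0 ^ 2 / 2 - max (b*s - 1) 0 ^ 2 / 2)
      - (max (b*(s-1)) 0 ^ 2 / 2 - max (b*(s-1) - 1) 0 ^ 2 / 2) = b * v := by
    rw [sFun] at hs
    clear hF
    by_cases h1 : (1 ≤ b ∧ v ≤ 1/(2*b)) ∨ (b ≤ 1 ∧ v ≤ b/2)
    · rw [if_pos h1] at hs
      have hdv : 0 ≤ 2*v/b := div_nonneg (by linarith) hb.le
      have hs0 : 0 ≤ s := hs ▸ Real.sqrt_nonneg _
      have hs2 : s^2 = 2*v/b := by rw [hs]; exact Real.sq_sqrt hdv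
      have hbsv : (b*s)^2 = 2*b*v := by rw [mul_pow, hs2]; field_simp; all_goals ring
      have h2bv : 2*b*v ≤ 1 := by
        rcases h1 with ⟨hb1, hv1'⟩ | ⟨hb1, hv1'⟩
        · have := (le_div_iff₀ (by positivity : (0:ℝ) < 2*b)).mp hv1'
          linarith
        · nlinarith
      have h2vb : 2*v ≤ b := by
        rcases h1 with ⟨hb1, hv1'⟩ | ⟨hb1, hv1'⟩
        · have := (le_div_iff₀ (by positivity : (0:ℝ) < 2*b)).mp hv1'
          nlinarith
        · linarith
      have hbs : b*s ≤ 1 := by nlinarith [mul_nonneg hb.le hs0]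
      have hs1 : s ≤ 1 := by nlinarith [(div_le_one hb).mpr h2vb, hs2]
      rw [max_eq_left (mul_nonneg hb.le hs0),
        max_eq_right (by linarith : b*s - 1 ≤ 0),
        max_eq_right (by nlinarith : b*(s-1) ≤ 0),
        max_eq_right (by nlinarith : b*(s-1) - 1 ≤ 0)]
      nlinarith
    · rw [if_neg h1] at hs
      by_cases h2 : 1/(2*b) < v ∧ v ≤ 1 - 1/(2*b)
      · rw [if_pos h2] at hs
        have hbs : b*s = b*v + 1/2 := by rw [hs]; field_simp; all_goals ring
        have hbv1 : 1/2 < b*v := by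
          have := (div_lt_iff₀ (by positivity : (0:ℝ) < 2*b)).mp h2.1
          nlinarith
        have hbv2 : b*v ≤ b - 1/2 := by
          have h' := mul_le_mul_of_nonneg_left h2.2 hb.le
          have he : b*(1 - 1/(2*b)) = b - 1/2 := by field_simp; all_goals ring
          linarith [he ▸ h']
        have hbsm : b*(s-1) = b*v + 1/2 - b := by rw [hs]; field_simp; all_goals ring
        rw [max_eq_left (by linarith : (0:ℝ) ≤ b*s),
          max_eq_left (by linarith : (0:ℝ) ≤ b*s - 1),
          max_eq_right (by linarith : b*(s-1) ≤ 0),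
          max_eq_right (by linarith : b*(s-1) - 1 ≤ 0)]
        rw [hbs]; ring
      · rw [if_neg h2] at hs
        by_cases h3 : b/2 < v ∧ v ≤ 1 - b/2
        · rw [if_pos h3] at hs
          have hbs : b*s = v + b/2 := by rw [hs]; field_simp; all_goals ring
          have hbs' : b*(s-1) = v - b/2 := by rw [hs]; field_simp; all_goals ring
          rw [max_eq_left (by linarith : (0:ℝ) ≤ b*s),
            max_eq_right (by linarith : b*s - 1 ≤ 0),
            max_eq_left (by linarith : (0:ℝ) ≤ b*(s-1)),
            max_eq_right (by linarith : b*(s-1) - 1 ≤ 0)]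
          rw [hbs, hbs']; ring
        · rw [if_neg h3] at hs
          push_neg at h1 h2 h3
          obtain ⟨w, hw⟩ : ∃ w, w = Real.sqrt (2*(1-v)/b) := ⟨_, rfl⟩
          rw [← hw] at hs
          have hw0 : 0 ≤ w := hw ▸ Real.sqrt_nonneg _
          have hw2 : w^2 = 2*(1-v)/b := by rw [hw]; exact Real.sq_sqrt (div_nonneg (by linarith) hb.le)
          have hbw2 : b*w^2 = 2*(1-v) := by rw [hw2]; field_simp
          have hcond : b*w ≤ 1 ∧ w ≤ 1 := by
            rcases le_total 1 b with hb1 | hb1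
            · have hv1' : 1/(2*b) < v := h1.1 hb1
              have hv2' : 1 - 1/(2*b) < v := h2 hv1'
              have h' : (1-v)*(2*b) < 1 := by
                have : 1 - v < 1/(2*b) := by linarith
                exact (lt_div_iff₀ (by positivity : (0:ℝ) < 2*b)).mp this
              have hsq : (b*w)^2 ≤ 1 := by nlinarith
              have hbw : b*w ≤ 1 := by nlinarith [mul_nonneg hb.le hw0]
              exact ⟨hbw, by nlinarith [mul_nonneg hb.le hw0]⟩
            · have hv1' : b/2 < v := h1.2 hb1
              have hv2' : 1 - b/2 < v := h3 hv1'
              have hsq : w^2 ≤ 1 := by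
                rw [hw2]
                rw [div_le_one hb]
                linarith
              have hw1 : w ≤ 1 := by nlinarith
              exact ⟨by nlinarith, hw1⟩
          obtain ⟨hbw, hw1⟩ := hcond
          have hbs : b*s = b + 1 - b*w := by rw [hs]; field_simp; all_goals ring
          have hbs' : b*(s-1) = 1 - b*w := by rw [hs]; field_simp; all_goals ring
          have hbwb : b*w ≤ b := by nlinarith
          have hbw0 : 0 ≤ b*w := mul_nonneg hb.le hw0
          rw [max_eq_left (by linarith : (0:ℝ) ≤ b*s),
            max_eq_left (by linarith : (0:ℝ) ≤ b*s - 1),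
            max_eq_left (by linarith : (0:ℝ) ≤ b*(s-1)),
            max_eq_right (by linarith : b*(s-1) - 1 ≤ 0)]
          rw [hbs, hbs']
          nlinarith [hbw2]
  field_simp
  linarith [key]

end
end
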